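/- arXiv:1702.04967 — 10 statements merged into one kernel-verified Lean document; each statement's English description precedes it below -/
import Mathlib

section
/- Marginal cost of public funds for unit and ad valorem taxation (Proposition 1). Assume ρ_t ≠ 0, ρ_v ≠ 0, and that ∂R/∂t and ∂R/∂v are nonzero at (t₀, v₀). Then the marginal costs of public funds MC_t := −(∂W/∂t)/(∂R/∂t) and MC_v := −(∂W/∂v)/(∂R/∂v), evaluated at (t₀, v₀), satisfy MC_t = ((1−v)·θ + ε·τ)/(1/ρ_t + v − ε·τ) and MC_v = ((1−v)·θ + ε·τ)/(1/ρ_v + v − ε·τ), where θ, η, ε, τ are evaluated at the equilibrium point q = q*(t₀, v₀), p = P(t₀, v₀), (t, v) = (t₀, v₀). -/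
/-!
Along either tax direction, social welfare is `∫₀^q p - c(q)`, so by the fundamental theorem of
calculus its derivative is `(p - mc)·dq`: only the quantity response matters. The first-order
condition rewrites the wedge `p - mc` as `t + v p - (1 - v) θ q p'`, and both this and the
derivative of tax revenue turn out to be multiples of the common factor `q p' dq`, which is
nonzero because the pass-through is. Cancelling it leaves the two stated ratios.
-/

section Calculus

variable {p c mc g : ℝ → ℝ} {g' x : ℝ}

theorem hasDerivAt_welfare (hp : Continuous p) (hc : ∀ q, HasDerivAt c (mc q) q)
    (hg : HasDerivAt g g' x) :
    HasDerivAt (fun y => (∫ s in (0 : ℝ)..g y, p s) - c (g y))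
      ((p (g x) - mc (g x)) * g') x :=
  (((hp.integral_hasStrictDerivAt 0 (g x)).hasDerivAt.comp x hg).sub
    ((hc (g x)).comp x hg)).congr_deriv (by ring)

variable {p' : ℝ}

theorem hasDerivAt_revenue_unitTax (v : ℝ) (hg : HasDerivAt g g' x)
    (hp : HasDerivAt p p' (g x)) :
    HasDerivAt (fun t => t * g t + v * p (g t) * g t)
      (g x + x * g' + v * (p' * g' * g x + p (g x) * g')) x :=
  (((hasDerivAt_id x).mul hg).add
    (((hasDerivAt_const x v).mul (hp.comp x hg)).mul hg)).congr_deriv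
    (by simp only [id_eq, Function.comp_apply, Pi.mul_apply]; ring)

theorem hasDerivAt_revenue_adValoremTax (t : ℝ) (hg : HasDerivAt g g' x)
    (hp : HasDerivAt p p' (g x)) :
    HasDerivAt (fun v => t * g v + v * p (g v) * g v)
      (t * g' + p (g x) * g x + x * (p' * g' * g x + p (g x) * g')) x :=
  (((hasDerivAt_const x t).mul hg).add
    (((hasDerivAt_id x).mul (hp.comp x hg)).mul hg)).congr_deriv
    (by simp only [id_eq, Function.comp_apply, Pi.mul_apply]; ring)

end Calculus

/- At the equilibrium quantity `q`: `P`, `P'` are the price and the slope of inverse demand, `m`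
the marginal cost and `dq` the quantity response to the tax, so that `ε = 1 / (-q P' / P)` and
`τ = v + t / P`. -/

section Algebra

variable {q P P' m θ t v dq : ℝ}

theorem markup_eq_of_foc (hP : P ≠ 0) (hv : 1 - v ≠ 0)
    (hfoc : P - (t + m) / (1 - v) = θ * (-q * P' / P) * P) :
    P - m = t + v * P - (1 - v) * θ * q * P' := by
  field_simp at hfoc
  linear_combination hfoc

theorem neg_marginal_welfare_eq (hq : q ≠ 0) (hP : P ≠ 0) (hP' : P' ≠ 0)
    (hmarkup : P - m = t + v * P - (1 - v) * θ * q * P') :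
    -((P - m) * dq)
      = q * P' * dq * ((1 - v) * θ + 1 / (-q * P' / P) * (v + t / P)) := by
  rw [hmarkup]
  field_simp
  ring

theorem marginalCostOfPublicFunds_unitTax_eq (hq : q ≠ 0) (hP : P ≠ 0) (hP' : P' ≠ 0)
    (hdq : dq ≠ 0)
    (hmarkup : P - m = t + v * P - (1 - v) * θ * q * P') :
    -((P - m) * dq) / (q + t * dq + v * (P' * dq * q + P * dq))
      = ((1 - v) * θ + 1 / (-q * P' / P) * (v + t / P))
        / (1 / (P' * dq) + v - 1 / (-q * P' / P) * (v + t / P)) := by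
  have hrevenue : q + t * dq + v * (P' * dq * q + P * dq)
      = q * P' * dq * (1 / (P' * dq) + v - 1 / (-q * P' / P) * (v + t / P)) := by
    field_simp
    ring
  rw [neg_marginal_welfare_eq hq hP hP' hmarkup, hrevenue,
    mul_div_mul_left _ _ (by positivity)]

theorem marginalCostOfPublicFunds_adValoremTax_eq (hq : q ≠ 0) (hP : P ≠ 0) (hP' : P' ≠ 0)
    (hdq : dq ≠ 0)
    (hmarkup : P - m = t + v * P - (1 - v) * θ * q * P') :
    -((P - m) * dq) / (t * dq + P * q + v * (P' * dq * q + P * dq))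
      = ((1 - v) * θ + 1 / (-q * P' / P) * (v + t / P))
        / (1 / (1 / P * (P' * dq)) + v - 1 / (-q * P' / P) * (v + t / P)) := by
  have hrevenue : t * dq + P * q + v * (P' * dq * q + P * dq)
      = q * P' * dq * (1 / (1 / P * (P' * dq)) + v - 1 / (-q * P' / P) * (v + t / P)) := by
    field_simp
    ring
  rw [neg_marginal_welfare_eq hq hP hP' hmarkup, hrevenue,
    mul_div_mul_left _ _ (by positivity)]

end Algebra

theorem mc_public_funds_unit_and_ad_valorem_general
    -- inverse industry demand, twice differentiable, positive and decreasing on q > 0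
    (p p' : ℝ → ℝ)
    (hp : ∀ q : ℝ, HasDerivAt p (p' q) q)
    (hppos : ∀ q : ℝ, 0 < q → 0 < p q)
    (hpneg : ∀ q : ℝ, 0 < q → p' q < 0)
    -- cost function, twice differentiable, marginal cost mc = c'
    (c mc : ℝ → ℝ)
    (hc : ∀ q : ℝ, HasDerivAt c (mc q) q)
    -- conduct index
    (θ : ℝ → ℝ)
    -- initial taxes
    (t₀ v₀ : ℝ) (hv₀ : v₀ < 1)
    -- symmetric equilibrium on an open neighborhood of (t₀, v₀)
    (qs : ℝ × ℝ → ℝ) (U : Set (ℝ × ℝ)) (hU : IsOpen U) (hU₀ : (t₀, v₀) ∈ U)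
    (hqs : ContDiffOn ℝ 1 qs U)
    (hqpos : ∀ tv ∈ U, 0 < qs tv)
    (hFOC : ∀ tv ∈ U,
      p (qs tv) - (tv.1 + mc (qs tv)) / (1 - tv.2)
        = θ (qs tv) * (-(qs tv) * p' (qs tv) / p (qs tv)) * p (qs tv))
    -- equilibrium values of quantity, price, elasticities, tax share, conduct
    (q0 p0 η0 ε0 τ0 θ0 : ℝ)
    (hq0 : q0 = qs (t₀, v₀)) (hp0 : p0 = p q0)
    (hη0 : η0 = -q0 * p' q0 / p q0) (hε0 : ε0 = 1 / η0)
    (hτ0 : τ0 = v₀ + t₀ / p0) (hθ0 : θ0 = θ q0)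
    -- pass-through rate and semi-elasticity
    (ρt ρv : ℝ)
    (hρt : ρt = deriv (fun t => p (qs (t, v₀))) t₀)
    (hρv : ρv = (1 / p0) * deriv (fun v => p (qs (t₀, v))) v₀)
    (hρt0 : ρt ≠ 0) (hρv0 : ρv ≠ 0)
    -- per-firm surplus measures
    (CS PS R W : ℝ × ℝ → ℝ)
    (hCS : ∀ tv : ℝ × ℝ, CS tv = (∫ s in (0:ℝ)..(qs tv), p s) - p (qs tv) * qs tv)
    (hPS : ∀ tv : ℝ × ℝ,
      PS tv = (1 - tv.2) * p (qs tv) * qs tv - tv.1 * qs tv - c (qs tv))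
    (hR : ∀ tv : ℝ × ℝ, R tv = tv.1 * qs tv + tv.2 * p (qs tv) * qs tv)
    (hW : ∀ tv : ℝ × ℝ, W tv = CS tv + PS tv + R tv) :
    -(deriv (fun t => W (t, v₀)) t₀) / deriv (fun t => R (t, v₀)) t₀
        = ((1 - v₀) * θ0 + ε0 * τ0) / (1 / ρt + v₀ - ε0 * τ0)
    ∧ -(deriv (fun v => W (t₀, v)) v₀) / deriv (fun v => R (t₀, v)) v₀
        = ((1 - v₀) * θ0 + ε0 * τ0) / (1 / ρv + v₀ - ε0 * τ0) := by
  subst hq0 hp0 hη0 hε0 hτ0 hθ0 hρt hρv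
  set q0 := qs (t₀, v₀)
  have hq0 : 0 < q0 := hqpos _ hU₀
  have hP : p q0 ≠ 0 := (hppos _ hq0).ne'
  have hP' : p' q0 ≠ 0 := (hpneg _ hq0).ne
  have hmarkup := markup_eq_of_foc hP (by linarith) (hFOC _ hU₀)
  have hqs_diff : DifferentiableAt ℝ qs (t₀, v₀) :=
    (hqs.differentiableOn one_ne_zero _ hU₀).differentiableAt (hU.mem_nhds hU₀)
  obtain ⟨qt, hqt⟩ : ∃ qt, HasDerivAt (fun t => qs (t, v₀)) qt t₀ :=
    ⟨_, (hqs_diff.comp t₀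
      (differentiableAt_id.prodMk (differentiableAt_const v₀))).hasDerivAt⟩
  obtain ⟨qv, hqv⟩ : ∃ qv, HasDerivAt (fun v => qs (t₀, v)) qv v₀ :=
    ⟨_, (hqs_diff.comp v₀
      ((differentiableAt_const t₀).prodMk differentiableAt_id)).hasDerivAt⟩
  have hWeq : W = fun tv => (∫ s in (0 : ℝ)..qs tv, p s) - c (qs tv) :=
    funext fun tv => by rw [hW, hCS, hPS, hR]; ring
  have hReq : R = fun tv => tv.1 * qs tv + tv.2 * p (qs tv) * qs tv := funext hR
  have hpcont : Continuous p := Differentiable.continuous fun q => (hp q).differentiableAt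
  have hρt : deriv (fun t => p (qs (t, v₀))) t₀ = p' q0 * qt := ((hp q0).comp t₀ hqt).deriv
  have hρv : deriv (fun v => p (qs (t₀, v))) v₀ = p' q0 * qv := ((hp q0).comp v₀ hqv).deriv
  rw [hρt] at hρt0
  rw [hρv] at hρv0
  rw [hWeq, hReq, hρt, hρv]
  constructor
  · rw [(hasDerivAt_welfare hpcont hc hqt).deriv,
      (hasDerivAt_revenue_unitTax v₀ hqt (hp q0)).deriv]
    exact marginalCostOfPublicFunds_unitTax_eq hq0.ne' hP hP'
      (right_ne_zero_of_mul hρt0) hmarkup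
  · rw [(hasDerivAt_welfare hpcont hc hqv).deriv,
      (hasDerivAt_revenue_adValoremTax t₀ hqv (hp q0)).deriv]
    exact marginalCostOfPublicFunds_adValoremTax_eq hq0.ne' hP hP'
      (right_ne_zero_of_mul (right_ne_zero_of_mul hρv0)) hmarkup

/-- **Proposition 1 (Marginal cost of public funds for unit and ad valorem taxation).**
Symmetric oligopoly with unit tax `t` and ad valorem tax `v < 1`, a general conduct
index `θ`, and possibly non-constant marginal cost.  At the equilibrium,
`MC_t = ((1-v)θ + ετ)/(1/ρ_t + v - ετ)` and
`MC_v = ((1-v)θ + ετ)/(1/ρ_v + v - ετ)`. -/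
theorem mc_public_funds_unit_and_ad_valorem
    -- inverse industry demand, twice differentiable, positive and decreasing on q > 0
    (p p' p'' : ℝ → ℝ)
    (hp : ∀ q : ℝ, HasDerivAt p (p' q) q)
    (hp' : ∀ q : ℝ, HasDerivAt p' (p'' q) q)
    (hppos : ∀ q : ℝ, 0 < q → 0 < p q)
    (hpneg : ∀ q : ℝ, 0 < q → p' q < 0)
    -- cost function, twice differentiable, marginal cost mc = c'
    (c mc mc' : ℝ → ℝ)
    (hc : ∀ q : ℝ, HasDerivAt c (mc q) q)
    (hmc : ∀ q : ℝ, HasDerivAt mc (mc' q) q)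
    -- conduct index
    (θ : ℝ → ℝ) (hθ : Differentiable ℝ θ)
    -- initial taxes
    (t₀ v₀ : ℝ) (hv₀ : v₀ < 1)
    -- symmetric equilibrium on an open neighborhood of (t₀, v₀)
    (qs : ℝ × ℝ → ℝ) (U : Set (ℝ × ℝ)) (hU : IsOpen U) (hU₀ : (t₀, v₀) ∈ U)
    (hqs : ContDiffOn ℝ 1 qs U)
    (hqpos : ∀ tv ∈ U, 0 < qs tv)
    (hFOC : ∀ tv ∈ U,
      p (qs tv) - (tv.1 + mc (qs tv)) / (1 - tv.2)
        = θ (qs tv) * (-(qs tv) * p' (qs tv) / p (qs tv)) * p (qs tv))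
    -- equilibrium values of quantity, price, elasticities, tax share, conduct
    (q0 p0 η0 ε0 τ0 θ0 : ℝ)
    (hq0 : q0 = qs (t₀, v₀)) (hp0 : p0 = p q0)
    (hη0 : η0 = -q0 * p' q0 / p q0) (hε0 : ε0 = 1 / η0)
    (hτ0 : τ0 = v₀ + t₀ / p0) (hθ0 : θ0 = θ q0)
    -- pass-through rate and semi-elasticity
    (ρt ρv : ℝ)
    (hρt : ρt = deriv (fun t => p (qs (t, v₀))) t₀)
    (hρv : ρv = (1 / p0) * deriv (fun v => p (qs (t₀, v))) v₀)
    (hρt0 : ρt ≠ 0) (hρv0 : ρv ≠ 0)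
    -- per-firm surplus measures
    (CS PS R W : ℝ × ℝ → ℝ)
    (hCS : ∀ tv : ℝ × ℝ, CS tv = (∫ s in (0:ℝ)..(qs tv), p s) - p (qs tv) * qs tv)
    (hPS : ∀ tv : ℝ × ℝ,
      PS tv = (1 - tv.2) * p (qs tv) * qs tv - tv.1 * qs tv - c (qs tv))
    (hR : ∀ tv : ℝ × ℝ, R tv = tv.1 * qs tv + tv.2 * p (qs tv) * qs tv)
    (hW : ∀ tv : ℝ × ℝ, W tv = CS tv + PS tv + R tv)
    -- nonzero marginal revenue of taxation
    (hRt : deriv (fun t => R (t, v₀)) t₀ ≠ 0)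
    (hRv : deriv (fun v => R (t₀, v)) v₀ ≠ 0) :
    -(deriv (fun t => W (t, v₀)) t₀) / deriv (fun t => R (t, v₀)) t₀
        = ((1 - v₀) * θ0 + ε0 * τ0) / (1 / ρt + v₀ - ε0 * τ0)
    ∧ -(deriv (fun v => W (t₀, v)) v₀) / deriv (fun v => R (t₀, v)) v₀
        = ((1 - v₀) * θ0 + ε0 * τ0) / (1 / ρv + v₀ - ε0 * τ0) :=
  mc_public_funds_unit_and_ad_valorem_general p p' hp hppos hpneg c mc hc θ t₀ v₀ hv₀ qs U hU hU₀
    hqs hqpos hFOC q0 p0 η0 ε0 τ0 θ0 hq0 hp0 hη0 hε0 hτ0 hθ0 ρt ρv hρt hρv hρt0 hρv0 CS PS R W hCS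
    hPS hR hW
end

section
/- Incidence of unit and ad valorem taxation (Proposition 2). Assume ρ_t ≠ 0 and ρ_v ≠ 0. Then, at (t₀, v₀), (∂PS/∂t)/(∂CS/∂t) = 1/ρ_t − (1−v)·(1−θ) and (∂PS/∂v)/(∂CS/∂v) = 1/ρ_v − (1−v)·(1−θ); equivalently, the incidences I_t := (∂CS/∂t)/(∂PS/∂t) and I_v := (∂CS/∂v)/(∂PS/∂v) satisfy 1/I_t = 1/ρ_t − (1−v)·(1−θ) and 1/I_v = 1/ρ_v − (1−v)·(1−θ), where θ is evaluated at the equilibrium quantity q*(t₀, v₀). -/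
/-- **Proposition 2 (Incidence of unit and ad valorem taxation).** -/
theorem incidence_of_unit_and_ad_valorem_taxation
    -- inverse industry demand, twice differentiable, positive and decreasing on q > 0
    (p p' p'' : ℝ → ℝ)
    (hp : ∀ q : ℝ, HasDerivAt p (p' q) q)
    (hp' : ∀ q : ℝ, HasDerivAt p' (p'' q) q)
    (hppos : ∀ q : ℝ, 0 < q → 0 < p q)
    (hpneg : ∀ q : ℝ, 0 < q → p' q < 0)
    -- cost function, twice differentiable, marginal cost mc = c'
    (c mc mc' : ℝ → ℝ)
    (hc : ∀ q : ℝ, HasDerivAt c (mc q) q)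
    (hmc : ∀ q : ℝ, HasDerivAt mc (mc' q) q)
    -- conduct index
    (θ : ℝ → ℝ) (hθ : Differentiable ℝ θ)
    -- initial taxes
    (t₀ v₀ : ℝ) (hv₀ : v₀ < 1)
    -- symmetric equilibrium on an open neighborhood of (t₀, v₀)
    (qs : ℝ × ℝ → ℝ) (U : Set (ℝ × ℝ)) (hU : IsOpen U) (hU₀ : (t₀, v₀) ∈ U)
    (hqs : ContDiffOn ℝ 1 qs U)
    (hqpos : ∀ tv ∈ U, 0 < qs tv)
    (hFOC : ∀ tv ∈ U,
      p (qs tv) - (tv.1 + mc (qs tv)) / (1 - tv.2)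
        = θ (qs tv) * (-(qs tv) * p' (qs tv) / p (qs tv)) * p (qs tv))
    -- equilibrium values of quantity, price, elasticities, tax share, conduct
    (q0 p0 η0 ε0 τ0 θ0 : ℝ)
    (hq0 : q0 = qs (t₀, v₀)) (hp0 : p0 = p q0)
    (hη0 : η0 = -q0 * p' q0 / p q0) (hε0 : ε0 = 1 / η0)
    (hτ0 : τ0 = v₀ + t₀ / p0) (hθ0 : θ0 = θ q0)
    -- pass-through rate and semi-elasticity
    (ρt ρv : ℝ)
    (hρt : ρt = deriv (fun t => p (qs (t, v₀))) t₀)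
    (hρv : ρv = (1 / p0) * deriv (fun v => p (qs (t₀, v))) v₀)
    (hρt0 : ρt ≠ 0) (hρv0 : ρv ≠ 0)
    -- per-firm consumer and producer surplus
    (CS PS : ℝ × ℝ → ℝ)
    (hCS : ∀ tv : ℝ × ℝ, CS tv = (∫ s in (0:ℝ)..(qs tv), p s) - p (qs tv) * qs tv)
    (hPS : ∀ tv : ℝ × ℝ,
      PS tv = (1 - tv.2) * p (qs tv) * qs tv - tv.1 * qs tv - c (qs tv)) :
    -- (∂PS/∂t)/(∂CS/∂t) = 1/ρ_t − (1−v)(1−θ), and the same for v; equivalently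
    -- 1/I_t = 1/ρ_t − (1−v)(1−θ) with I_t = (∂CS/∂t)/(∂PS/∂t), etc.
    deriv (fun t => PS (t, v₀)) t₀ / deriv (fun t => CS (t, v₀)) t₀
        = 1 / ρt - (1 - v₀) * (1 - θ0)
    ∧ deriv (fun v => PS (t₀, v)) v₀ / deriv (fun v => CS (t₀, v)) v₀
        = 1 / ρv - (1 - v₀) * (1 - θ0)
    ∧ (deriv (fun t => CS (t, v₀)) t₀ / deriv (fun t => PS (t, v₀)) t₀)⁻¹
        = 1 / ρt - (1 - v₀) * (1 - θ0)
    ∧ (deriv (fun v => CS (t₀, v)) v₀ / deriv (fun v => PS (t₀, v)) v₀)⁻¹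
        = 1 / ρv - (1 - v₀) * (1 - θ0) := by

  subst hq0 hp0 hθ0
  -- basic positivity / nonvanishing facts
  have hq0pos : 0 < qs (t₀, v₀) := hqpos _ hU₀
  have hq0ne : qs (t₀, v₀) ≠ 0 := ne_of_gt hq0pos
  have hp0pos : 0 < p (qs (t₀, v₀)) := hppos _ hq0pos
  have hp0ne : p (qs (t₀, v₀)) ≠ 0 := ne_of_gt hp0pos
  have hv1pos : (0:ℝ) < 1 - v₀ := by linarith
  have hv1 : (1 : ℝ) - v₀ ≠ 0 := hv1pos.ne'
  have hpdiff : Differentiable ℝ p := fun x => (hp x).differentiableAt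
  have hpc : Continuous p := hpdiff.continuous
  -- differentiability of qs and directional derivatives
  have hdq : DifferentiableAt ℝ qs (t₀, v₀) :=
    (hqs.contDiffAt (hU.mem_nhds hU₀)).differentiableAt one_ne_zero
  set L := fderiv ℝ qs (t₀, v₀) with hLdef
  have hL := hdq.hasFDerivAt
  set qt := L (1, 0) with hqtdef
  set qv := L (0, 1) with hqvdef
  have hqt : HasDerivAt (fun t => qs (t, v₀)) qt t₀ :=
    hL.comp_hasDerivAt t₀ (HasDerivAt.prodMk (hasDerivAt_id t₀) (hasDerivAt_const t₀ v₀))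
  have hqv : HasDerivAt (fun v => qs (t₀, v)) qv v₀ :=
    hL.comp_hasDerivAt v₀ (HasDerivAt.prodMk (hasDerivAt_const v₀ t₀) (hasDerivAt_id v₀))
  -- price derivatives
  have hPt : HasDerivAt (fun t => p (qs (t, v₀))) (p' (qs (t₀, v₀)) * qt) t₀ :=
    (hp _).comp t₀ hqt
  have hPv : HasDerivAt (fun v => p (qs (t₀, v))) (p' (qs (t₀, v₀)) * qv) v₀ :=
    (hp _).comp v₀ hqv
  have hρt' : ρt = p' (qs (t₀, v₀)) * qt := by rw [hρt, hPt.deriv]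
  have hρv' : p' (qs (t₀, v₀)) * qv = p (qs (t₀, v₀)) * ρv := by
    rw [hρv, hPv.deriv]; field_simp
  have hrtne : p' (qs (t₀, v₀)) * qt ≠ 0 := hρt' ▸ hρt0
  have hrvne : p' (qs (t₀, v₀)) * qv ≠ 0 := by
    rw [hρv']; exact mul_ne_zero hp0ne hρv0
  -- the first-order condition at (t₀, v₀)
  have hfoc := hFOC (t₀, v₀) hU₀
  have hkey : t₀ + mc (qs (t₀, v₀))
      = (1 - v₀) * (p (qs (t₀, v₀)) + θ (qs (t₀, v₀)) * qs (t₀, v₀) * p' (qs (t₀, v₀))) := by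
    field_simp at hfoc
    nlinarith [hfoc]
  -- derivative of the integral term
  have hint : HasDerivAt (fun x => ∫ s in (0:ℝ)..x, p s) (p (qs (t₀, v₀))) (qs (t₀, v₀)) :=
    intervalIntegral.integral_hasDerivAt_right (hpc.intervalIntegrable _ _)
      (hpc.stronglyMeasurableAtFilter _ _) hpc.continuousAt
  -- CS derivatives
  have hCSt : HasDerivAt (fun t => CS (t, v₀)) (-(qs (t₀, v₀) * (p' (qs (t₀, v₀)) * qt))) t₀ := by
    have heq : (fun t => CS (t, v₀))
        = fun t => (∫ s in (0:ℝ)..(qs (t, v₀)), p s) - p (qs (t, v₀)) * qs (t, v₀) :=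
      funext fun t => hCS (t, v₀)
    rw [heq]
    have h := (hint.comp t₀ hqt).sub (hPt.mul hqt)
    exact h.congr_deriv (by ring)
  have hCSv : HasDerivAt (fun v => CS (t₀, v)) (-(qs (t₀, v₀) * (p' (qs (t₀, v₀)) * qv))) v₀ := by
    have heq : (fun v => CS (t₀, v))
        = fun v => (∫ s in (0:ℝ)..(qs (t₀, v)), p s) - p (qs (t₀, v)) * qs (t₀, v) :=
      funext fun v => hCS (t₀, v)
    rw [heq]
    have h := (hint.comp v₀ hqv).sub (hPv.mul hqv)
    exact h.congr_deriv (by ring)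
  -- PS derivatives (with FOC substituted)
  have hPSt : HasDerivAt (fun t => PS (t, v₀))
      ((1 - v₀) * (1 - θ (qs (t₀, v₀))) * (p' (qs (t₀, v₀)) * qt) * qs (t₀, v₀)
        - qs (t₀, v₀)) t₀ := by
    have heq : (fun t => PS (t, v₀))
        = fun t => (1 - v₀) * p (qs (t, v₀)) * qs (t, v₀) - t * qs (t, v₀) - c (qs (t, v₀)) :=
      funext fun t => hPS (t, v₀)
    rw [heq]
    have h := ((((hasDerivAt_const t₀ ((1:ℝ) - v₀)).mul hPt).mul hqt).sub
      ((hasDerivAt_id t₀).mul hqt)).sub ((hc _).comp t₀ hqt)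
    refine h.congr_deriv ?_
    simp only [Pi.mul_apply, id_eq]
    linear_combination (-qt) * hkey
  have hPSv : HasDerivAt (fun v => PS (t₀, v))
      ((1 - v₀) * (1 - θ (qs (t₀, v₀))) * (p' (qs (t₀, v₀)) * qv) * qs (t₀, v₀)
        - p (qs (t₀, v₀)) * qs (t₀, v₀)) v₀ := by
    have heq : (fun v => PS (t₀, v))
        = fun v => (1 - v) * p (qs (t₀, v)) * qs (t₀, v) - t₀ * qs (t₀, v) - c (qs (t₀, v)) :=
      funext fun v => hPS (t₀, v)
    rw [heq]
    have h1v : HasDerivAt (fun v : ℝ => (1 : ℝ) - v) (-1) v₀ := by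
      exact ((hasDerivAt_const v₀ (1:ℝ)).sub (hasDerivAt_id' v₀)).congr_deriv (by norm_num)
    have h := (((h1v.mul hPv).mul hqv).sub
      ((hasDerivAt_const v₀ t₀).mul hqv)).sub ((hc _).comp v₀ hqv)
    refine h.congr_deriv ?_
    simp only [Pi.mul_apply]
    linear_combination (-qv) * hkey
  refine ⟨?_, ?_, ?_, ?_⟩
  · rw [hPSt.deriv, hCSt.deriv, hρt']
    field_simp [left_ne_zero_of_mul hrtne, right_ne_zero_of_mul hrtne]
    ring
  · rw [hPSv.deriv, hCSv.deriv, hρv']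
    field_simp
    ring
  · rw [inv_div, hPSt.deriv, hCSt.deriv, hρt']
    field_simp [left_ne_zero_of_mul hrtne, right_ne_zero_of_mul hrtne]
    ring
  · rw [inv_div, hPSv.deriv, hCSv.deriv, hρv']
    field_simp
    ring
end

section
/- Relationship between pass-through of ad valorem and unit taxes (Proposition 3). At (t₀, v₀), the ad valorem pass-through semi-elasticity and the unit-tax pass-through rate satisfy ρ_v = (1 − θ·η)·ρ_t, equivalently ρ_v = (1 − θ/ε)·ρ_t, where θ, η, ε are evaluated at the equilibrium quantity q*(t₀, v₀). -/
/-- **Proposition 3 (Relationship between pass-through of ad valorem and unit taxes).** -/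
theorem ad_valorem_vs_unit_pass_through
    -- inverse industry demand, twice differentiable, positive and decreasing on q > 0
    (p p' p'' : ℝ → ℝ)
    (hp : ∀ q : ℝ, HasDerivAt p (p' q) q)
    (hp' : ∀ q : ℝ, HasDerivAt p' (p'' q) q)
    (hppos : ∀ q : ℝ, 0 < q → 0 < p q)
    (hpneg : ∀ q : ℝ, 0 < q → p' q < 0)
    -- cost function, twice differentiable, marginal cost mc = c'
    (c mc mc' : ℝ → ℝ)
    (hc : ∀ q : ℝ, HasDerivAt c (mc q) q)
    (hmc : ∀ q : ℝ, HasDerivAt mc (mc' q) q)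
    -- conduct index
    (θ : ℝ → ℝ) (hθ : Differentiable ℝ θ)
    -- initial taxes
    (t₀ v₀ : ℝ) (hv₀ : v₀ < 1)
    -- symmetric equilibrium on an open neighborhood of (t₀, v₀)
    (qs : ℝ × ℝ → ℝ) (U : Set (ℝ × ℝ)) (hU : IsOpen U) (hU₀ : (t₀, v₀) ∈ U)
    (hqs : ContDiffOn ℝ 1 qs U)
    (hqpos : ∀ tv ∈ U, 0 < qs tv)
    (hFOC : ∀ tv ∈ U,
      p (qs tv) - (tv.1 + mc (qs tv)) / (1 - tv.2)
        = θ (qs tv) * (-(qs tv) * p' (qs tv) / p (qs tv)) * p (qs tv))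
    -- equilibrium values of quantity, price, elasticities, tax share, conduct
    (q0 p0 η0 ε0 τ0 θ0 : ℝ)
    (hq0 : q0 = qs (t₀, v₀)) (hp0 : p0 = p q0)
    (hη0 : η0 = -q0 * p' q0 / p q0) (hε0 : ε0 = 1 / η0)
    (hτ0 : τ0 = v₀ + t₀ / p0) (hθ0 : θ0 = θ q0)
    -- pass-through rate and semi-elasticity
    (ρt ρv : ℝ)
    (hρt : ρt = deriv (fun t => p (qs (t, v₀))) t₀)
    (hρv : ρv = (1 / p0) * deriv (fun v => p (qs (t₀, v))) v₀)
    :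
    -- ρ_v = (1 − θ·η)·ρ_t, equivalently ρ_v = (1 − θ/ε)·ρ_t
    ρv = (1 - θ0 * η0) * ρt ∧ ρv = (1 - θ0 / ε0) * ρt := by
  have hq0pos : 0 < q0 := hq0 ▸ hqpos _ hU₀
  have hp0pos : 0 < p0 := hp0 ▸ hppos _ hq0pos
  have hp0ne : p0 ≠ 0 := ne_of_gt hp0pos
  set Φ : ℝ → ℝ := fun q => p q + θ q * q * p' q with hΦdef
  -- rearranged FOC
  have hFOC' : ∀ tv ∈ U, tv.2 < 1 → (1 - tv.2) * Φ (qs tv) - mc (qs tv) = tv.1 := by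
    intro tv htv hv
    have hqp : 0 < qs tv := hqpos tv htv
    have hpq : p (qs tv) ≠ 0 := ne_of_gt (hppos _ hqp)
    have h1v : (1 : ℝ) - tv.2 ≠ 0 := by linarith
    have this0 := hFOC tv htv
    have hR : θ (qs tv) * (-(qs tv) * p' (qs tv) / p (qs tv)) * p (qs tv)
        = -(θ (qs tv) * qs tv * p' (qs tv)) := by
      have hd := div_mul_cancel₀ (-(qs tv) * p' (qs tv)) hpq
      linear_combination θ (qs tv) * hd
    rw [hR] at this0
    simp only [hΦdef]
    field_simp at this0 ⊢
    linarith [this0]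
  -- derivatives of Φ and curves
  have hΦdiff : ∀ q, DifferentiableAt ℝ Φ q := fun q =>
    ((hp q).differentiableAt.add
      (((hθ q).mul differentiableAt_id).mul (hp' q).differentiableAt))
  obtain ⟨Φd, hΦd⟩ : ∃ d, HasDerivAt Φ d q0 := ⟨_, (hΦdiff q0).hasDerivAt⟩
  have hqsd : DifferentiableAt ℝ qs (t₀, v₀) :=
    (hqs.contDiffAt (hU.mem_nhds hU₀)).differentiableAt one_ne_zero
  -- t-direction
  have hc1 : HasDerivAt (fun t : ℝ => ((t, v₀) : ℝ × ℝ)) (1, 0) t₀ :=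
    (hasDerivAt_id t₀).prodMk (hasDerivAt_const t₀ v₀)
  obtain ⟨a, hfa⟩ : ∃ a, HasDerivAt (fun t => qs (t, v₀)) a t₀ :=
    ⟨_, hqsd.hasFDerivAt.comp_hasDerivAt t₀ hc1⟩
  -- v-direction
  have hc2 : HasDerivAt (fun v : ℝ => ((t₀, v) : ℝ × ℝ)) (0, 1) v₀ :=
    (hasDerivAt_const v₀ t₀).prodMk (hasDerivAt_id v₀)
  obtain ⟨b, hfb⟩ : ∃ b, HasDerivAt (fun v => qs (t₀, v)) b v₀ :=
    ⟨_, hqsd.hasFDerivAt.comp_hasDerivAt v₀ hc2⟩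
  have hq0' : qs (t₀, v₀) = q0 := hq0.symm
  -- price derivatives
  have hPt : HasDerivAt (fun t => p (qs (t, v₀))) (p' q0 * a) t₀ := by
    have := (hp (qs (t₀, v₀))).comp t₀ hfa
    rwa [hq0'] at this
  have hPv : HasDerivAt (fun v => p (qs (t₀, v))) (p' q0 * b) v₀ := by
    have := (hp (qs (t₀, v₀))).comp v₀ hfb
    rwa [hq0'] at this
  have hρt' : ρt = p' q0 * a := by rw [hρt, hPt.deriv]
  have hρv' : ρv = (1 / p0) * (p' q0 * b) := by rw [hρv, hPv.deriv]
  -- eventual facts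
  have hevt : ∀ᶠ t in nhds t₀, ((t, v₀) : ℝ × ℝ) ∈ U :=
    (continuous_id.prodMk continuous_const).continuousAt.eventually_mem
      (hU.mem_nhds hU₀)
  have hevv : ∀ᶠ v in nhds v₀, ((t₀, v) : ℝ × ℝ) ∈ U ∧ v < 1 := by
    filter_upwards [(continuous_const.prodMk continuous_id).continuousAt.eventually_mem
      (hU.mem_nhds hU₀), Filter.tendsto_id.eventually_lt_const hv₀] with v h1 h2
    exact ⟨h1, h2⟩
  set A : ℝ := (1 - v₀) * Φd - mc' q0 with hA
  -- derivative of H1 at t₀ is A * a, and H1 = id near t₀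
  have hH1 : HasDerivAt (fun t => (1 - v₀) * Φ (qs (t, v₀)) - mc (qs (t, v₀)))
      ((1 - v₀) * (Φd * a) - mc' q0 * a) t₀ := by
    have hΦd' : HasDerivAt Φ Φd (qs (t₀, v₀)) := by rw [hq0']; exact hΦd
    have h1 : HasDerivAt (fun t => Φ (qs (t, v₀))) (Φd * a) t₀ := by
      have := hΦd'.comp t₀ hfa; exact this
    have h2 : HasDerivAt (fun t => mc (qs (t, v₀))) (mc' q0 * a) t₀ := by
      have := (hmc (qs (t₀, v₀))).comp t₀ hfa; rwa [hq0'] at this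
    exact (h1.const_mul _).sub h2
  have hAa : A * a = 1 := by
    have heq : (fun t : ℝ => t) =ᶠ[nhds t₀]
        (fun t => (1 - v₀) * Φ (qs (t, v₀)) - mc (qs (t, v₀))) := by
      filter_upwards [hevt] with t ht
      exact (hFOC' (t, v₀) ht hv₀).symm
    have := hH1.congr_of_eventuallyEq heq
    have h1 := (hasDerivAt_id t₀).unique this
    simp only [hA]; linarith [h1]
  have hAne : A ≠ 0 := fun h => by simp [h] at hAa
  -- derivative of H2 at v₀
  have hH2 : HasDerivAt (fun v => (1 - v) * Φ (qs (t₀, v)) - mc (qs (t₀, v)))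
      ((-1) * Φ q0 + (1 - v₀) * (Φd * b) - mc' q0 * b) v₀ := by
    have hΦd' : HasDerivAt Φ Φd (qs (t₀, v₀)) := by rw [hq0']; exact hΦd
    have h1 : HasDerivAt (fun v => Φ (qs (t₀, v))) (Φd * b) v₀ := by
      have := hΦd'.comp v₀ hfb; exact this
    have h2 : HasDerivAt (fun v => mc (qs (t₀, v))) (mc' q0 * b) v₀ := by
      have := (hmc (qs (t₀, v₀))).comp v₀ hfb; rwa [hq0'] at this
    have h3 : HasDerivAt (fun v : ℝ => 1 - v) (-1 : ℝ) v₀ := by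
      simpa using (hasDerivAt_id v₀).const_sub (1:ℝ)
    have := (h3.mul h1).sub h2
    rw [hq0'] at this
    exact this
  have hAb : A * b = Φ q0 := by
    have heq : (fun _ : ℝ => t₀) =ᶠ[nhds v₀]
        (fun v => (1 - v) * Φ (qs (t₀, v)) - mc (qs (t₀, v))) := by
      filter_upwards [hevv] with v hv
      exact (hFOC' (t₀, v) hv.1 hv.2).symm
    have := hH2.congr_of_eventuallyEq heq
    have h1 := (hasDerivAt_const v₀ t₀).unique this
    simp only [hA]; linarith [h1]
  -- so b = Φ q0 * a
  have hb : b = Φ q0 * a := by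
    apply mul_left_cancel₀ hAne
    rw [hAb]
    linear_combination Φ q0 * hAa.symm
  have hΦq0 : Φ q0 = p0 + θ0 * q0 * p' q0 := by simp [hΦdef, hp0, hθ0]
  have key : ρv = (1 - θ0 * η0) * ρt := by
    rw [hρv', hρt', hb, hΦq0, hη0, ← hp0]
    field_simp
    ring
  refine ⟨key, ?_⟩
  rw [key, hε0, div_div_eq_mul_div, div_one]
end

section
/- Sufficient statistics for the marginal costs of public funds (Proposition 4). Assume ρ_t ≠ 0, ρ_v ≠ 0, 1 + (v − ε·τ)·ρ_t ≠ 0, 1 + (v − ε·τ)·ρ_v ≠ 0, and that ∂R/∂t and ∂R/∂v are nonzero at (t₀, v₀). Then the marginal costs of public funds MC_t := −(∂W/∂t)/(∂R/∂t) and MC_v := −(∂W/∂v)/(∂R/∂v) satisfy MC_t = ε·[(1−v+τ)·ρ_t − (1−v)·ρ_v] / [1 + (v − ε·τ)·ρ_t] and MC_v = ε·(ρ_v/ρ_t)·[(1−v+τ)·ρ_t − (1−v)·ρ_v] / [1 + (v − ε·τ)·ρ_v], where ε and τ are evaluated at the equilibrium point q = q*(t₀, v₀), p = P(t₀, v₀),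 (t, v) = (t₀, v₀). In particular ρ_t, ρ_v, ε, τ, v suffice to compute MC_t and MC_v without knowledge of the conduct index θ. -/
/-!
Clearing denominators, the first-order condition reads `(1 - v) M(q) = t + mc(q)` with the
perceived marginal revenue `M = p + θ q p'`. Differentiating it in `t` and in `v` puts the same
factor `(1 - v) M' - mc'` in front of `q_t` and `q_v`, whence `q_v = M q_t`: the conduct index
enters only through `M`, which the pass-throughs reveal as `M / p = ρ_v / ρ_t`. Welfare is
`∫₀^q p - c(q)`, so `W_x = (p - mc) q_x` with `mc = (1 - v) M - t`, and after substituting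
`ε = -p / (q p')` and `τ = v + t / p` the numerator and denominator of `MC_t` (resp. `MC_v`) share
the factor `q` (resp. `p q`), which cancels.
-/

open Filter Topology

noncomputable def totalSurplus (p c : ℝ → ℝ) (q : ℝ) : ℝ := (∫ s in (0 : ℝ)..q, p s) - c q

lemma hasDerivAt_totalSurplus_comp {p c f : ℝ → ℝ} {m f' x : ℝ} (hp : Continuous p)
    (hc : HasDerivAt c m (f x)) (hf : HasDerivAt f f' x) :
    HasDerivAt (fun y => totalSurplus p c (f y)) ((p (f x) - m) * f') x :=
  ((hp.integral_hasStrictDerivAt 0 (f x)).hasDerivAt.sub hc).comp x hf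

lemma hasDerivAt_revenue_unit {p Q : ℝ → ℝ} {d Q' t₀ v : ℝ} (hp : HasDerivAt p d (Q t₀))
    (hQ : HasDerivAt Q Q' t₀) :
    HasDerivAt (fun t => t * Q t + v * p (Q t) * Q t)
      (Q t₀ + t₀ * Q' + v * (d * Q' * Q t₀ + p (Q t₀) * Q')) t₀ :=
  (((hasDerivAt_id' t₀).fun_mul hQ).fun_add (((hp.comp t₀ hQ).const_mul v).fun_mul hQ)).congr_deriv
    (by simp only [Function.comp_apply]; ring)

lemma hasDerivAt_revenue_adValorem {p Q : ℝ → ℝ} {d Q' t v₀ : ℝ} (hp : HasDerivAt p d (Q v₀))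
    (hQ : HasDerivAt Q Q' v₀) :
    HasDerivAt (fun v => t * Q v + v * p (Q v) * Q v)
      (p (Q v₀) * Q v₀ + t * Q' + v₀ * (d * Q' * Q v₀ + p (Q v₀) * Q')) v₀ :=
  ((hQ.const_mul t).fun_add (((hasDerivAt_id' v₀).fun_mul (hp.comp v₀ hQ)).fun_mul hQ)).congr_deriv
    (by simp only [Function.comp_apply]; ring)

def perceivedMarginalRevenue (p p' θ : ℝ → ℝ) (q : ℝ) : ℝ := p q + θ q * q * p' q

lemma differentiable_perceivedMarginalRevenue {p p' p'' θ : ℝ → ℝ}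
    (hp : ∀ q, HasDerivAt p (p' q) q) (hp' : ∀ q, HasDerivAt p' (p'' q) q)
    (hθ : Differentiable ℝ θ) : Differentiable ℝ (perceivedMarginalRevenue p p' θ) := by
  have : Differentiable ℝ p := fun q => (hp q).differentiableAt
  have : Differentiable ℝ p' := fun q => (hp' q).differentiableAt
  unfold perceivedMarginalRevenue; fun_prop

lemma foc_iff_perceivedMarginalRevenue {P m t v θ q d : ℝ} (hP : P ≠ 0) (hv : v ≠ 1) :
    P - (t + m) / (1 - v) = θ * (-q * d / P) * P ↔ (1 - v) * (P + θ * q * d) = t + m := by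
  rw [mul_assoc, div_mul_cancel₀ _ hP, sub_eq_iff_eq_add', ← sub_eq_iff_eq_add,
    eq_div_iff (sub_ne_zero.mpr hv.symm)]
  constructor <;> intro h <;> linear_combination h

lemma eventually_foc_perceivedMarginalRevenue {p p' θ mc : ℝ → ℝ} {qs : ℝ × ℝ → ℝ}
    {U : Set (ℝ × ℝ)} {x : ℝ × ℝ} (hU : U ∈ 𝓝 x) (hx : x.2 < 1)
    (hpos : ∀ tv ∈ U, p (qs tv) ≠ 0)
    (hFOC : ∀ tv ∈ U, p (qs tv) - (tv.1 + mc (qs tv)) / (1 - tv.2)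
        = θ (qs tv) * (-(qs tv) * p' (qs tv) / p (qs tv)) * p (qs tv)) :
    ∀ᶠ tv in 𝓝 x, (1 - tv.2) * perceivedMarginalRevenue p p' θ (qs tv) = tv.1 + mc (qs tv) := by
  filter_upwards [hU, continuous_snd.continuousAt.eventually (isOpen_Iio.mem_nhds hx)]
    with tv htv hv
  exact (foc_iff_perceivedMarginalRevenue (hpos tv htv) hv.ne).1 (hFOC tv htv)

lemma deriv_v_eq_mul_deriv_t_of_foc {M mc : ℝ → ℝ} {Q : ℝ × ℝ → ℝ} {t₀ v₀ Qt Qv : ℝ}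
    (hM : DifferentiableAt ℝ M (Q (t₀, v₀))) (hmc : DifferentiableAt ℝ mc (Q (t₀, v₀)))
    (hQt : HasDerivAt (fun t => Q (t, v₀)) Qt t₀) (hQv : HasDerivAt (fun v => Q (t₀, v)) Qv v₀)
    (hfoc : ∀ᶠ tv in 𝓝 (t₀, v₀), (1 - tv.2) * M (Q tv) = tv.1 + mc (Q tv)) :
    Qv = M (Q (t₀, v₀)) * Qt := by
  set D := (1 - v₀) * deriv M (Q (t₀, v₀)) - deriv mc (Q (t₀, v₀))
  have hfoc_t : (fun t => (1 - v₀) * M (Q (t, v₀))) =ᶠ[𝓝 t₀] fun t => t + mc (Q (t, v₀)) :=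
    (continuous_id.prodMk continuous_const).continuousAt.eventually hfoc
  have hfoc_v : (fun v => (1 - v) * M (Q (t₀, v))) =ᶠ[𝓝 v₀] fun v => t₀ + mc (Q (t₀, v)) :=
    (continuous_const.prodMk continuous_id).continuousAt.eventually hfoc
  have hD_t : D * Qt = 1 := by
    have := (((hasDerivAt_id t₀).add (hmc.hasDerivAt.comp t₀ hQt)).congr_of_eventuallyEq
      hfoc_t).unique ((hM.hasDerivAt.comp t₀ hQt).const_mul (1 - v₀))
    simp only [D]; linarith
  have hD_v : D * Qv = M (Q (t₀, v₀)) := by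
    have := (((hasDerivAt_const v₀ t₀).add (hmc.hasDerivAt.comp v₀ hQv)).congr_of_eventuallyEq
      hfoc_v).unique (((hasDerivAt_id v₀).const_sub 1).mul (hM.hasDerivAt.comp v₀ hQv))
    simp only [D, id] at this ⊢; linarith
  linear_combination (-Qv) * hD_t + Qt * hD_v

section SufficientStatistics

variable {P q d M m t v Qt Qv ε τ ρt ρv : ℝ}

lemma marginal_revenue_unit_eq (hP : P ≠ 0) (hq : q ≠ 0) (hd : d ≠ 0)
    (hε : ε = 1 / (-q * d / P)) (hτ : τ = v + t / P) (hρt : ρt = d * Qt) :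
    q + t * Qt + v * (d * Qt * q + P * Qt) = q * (1 + (v - ε * τ) * ρt) := by
  subst hε hτ hρt; field_simp; ring

lemma marginal_revenue_adValorem_eq (hP : P ≠ 0) (hq : q ≠ 0) (hd : d ≠ 0)
    (hε : ε = 1 / (-q * d / P)) (hτ : τ = v + t / P) (hρv : ρv = 1 / P * (d * Qv)) :
    P * q + t * Qv + v * (d * Qv * q + P * Qv) = P * q * (1 + (v - ε * τ) * ρv) := by
  subst hε hτ hρv; field_simp; ring

lemma neg_marginal_welfare_unit_eq (hP : P ≠ 0) (hq : q ≠ 0) (hd : d ≠ 0)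
    (hε : ε = 1 / (-q * d / P)) (hτ : τ = v + t / P) (hρt : ρt = d * Qt)
    (hρv : ρv = 1 / P * (d * Qv)) (hQv : Qv = M * Qt) (hfoc : (1 - v) * M = t + m) :
    -((P - m) * Qt) = q * (ε * ((1 - v + τ) * ρt - (1 - v) * ρv)) := by
  subst hε hτ hρt hρv hQv; rw [eq_sub_of_add_eq' hfoc.symm]; field_simp; ring

lemma neg_marginal_welfare_adValorem_eq (hP : P ≠ 0) (hq : q ≠ 0) (hd : d ≠ 0)
    (hε : ε = 1 / (-q * d / P)) (hτ : τ = v + t / P) (hρt : ρt = d * Qt) (hρt0 : ρt ≠ 0)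
    (hρv : ρv = 1 / P * (d * Qv)) (hQv : Qv = M * Qt) (hfoc : (1 - v) * M = t + m) :
    -((P - m) * Qv) = P * q * (ε * (ρv / ρt) * ((1 - v + τ) * ρt - (1 - v) * ρv)) := by
  have hM : ρv / ρt = M / P := by
    rw [div_eq_div_iff hρt0 hP, hρv, hρt, hQv]; field_simp
  calc -((P - m) * Qv) = M * -((P - m) * Qt) := by rw [hQv]; ring
    _ = M * (q * (ε * ((1 - v + τ) * ρt - (1 - v) * ρv))) := by
      rw [neg_marginal_welfare_unit_eq hP hq hd hε hτ hρt hρv hQv hfoc]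
    _ = P * q * (ε * (ρv / ρt) * ((1 - v + τ) * ρt - (1 - v) * ρv)) := by
      rw [hM]; field_simp

lemma mcpf_unit_eq (hP : P ≠ 0) (hq : q ≠ 0) (hd : d ≠ 0)
    (hε : ε = 1 / (-q * d / P)) (hτ : τ = v + t / P) (hρt : ρt = d * Qt)
    (hρv : ρv = 1 / P * (d * Qv)) (hQv : Qv = M * Qt) (hfoc : (1 - v) * M = t + m) :
    -((P - m) * Qt) / (q + t * Qt + v * (d * Qt * q + P * Qt))
      = ε * ((1 - v + τ) * ρt - (1 - v) * ρv) / (1 + (v - ε * τ) * ρt) := by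
  rw [neg_marginal_welfare_unit_eq hP hq hd hε hτ hρt hρv hQv hfoc,
    marginal_revenue_unit_eq hP hq hd hε hτ hρt, mul_div_mul_left _ _ hq]

lemma mcpf_adValorem_eq (hP : P ≠ 0) (hq : q ≠ 0) (hd : d ≠ 0)
    (hε : ε = 1 / (-q * d / P)) (hτ : τ = v + t / P) (hρt : ρt = d * Qt) (hρt0 : ρt ≠ 0)
    (hρv : ρv = 1 / P * (d * Qv)) (hQv : Qv = M * Qt) (hfoc : (1 - v) * M = t + m) :
    -((P - m) * Qv) / (P * q + t * Qv + v * (d * Qv * q + P * Qv))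
      = ε * (ρv / ρt) * ((1 - v + τ) * ρt - (1 - v) * ρv) / (1 + (v - ε * τ) * ρv) := by
  rw [neg_marginal_welfare_adValorem_eq hP hq hd hε hτ hρt hρt0 hρv hQv hfoc,
    marginal_revenue_adValorem_eq hP hq hd hε hτ hρv, mul_div_mul_left _ _ (mul_ne_zero hP hq)]

end SufficientStatistics

theorem sufficient_statistics_for_mc_public_funds_general
    -- inverse industry demand, twice differentiable, positive and decreasing on q > 0
    (p p' p'' : ℝ → ℝ)
    (hp : ∀ q : ℝ, HasDerivAt p (p' q) q)
    (hp' : ∀ q : ℝ, HasDerivAt p' (p'' q) q)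
    (hppos : ∀ q : ℝ, 0 < q → 0 < p q)
    -- cost function, twice differentiable, marginal cost mc = c'
    (c mc mc' : ℝ → ℝ)
    (hc : ∀ q : ℝ, HasDerivAt c (mc q) q)
    (hmc : ∀ q : ℝ, HasDerivAt mc (mc' q) q)
    -- conduct index
    (θ : ℝ → ℝ) (hθ : Differentiable ℝ θ)
    -- initial taxes
    (t₀ v₀ : ℝ) (hv₀ : v₀ < 1)
    -- symmetric equilibrium on an open neighborhood of (t₀, v₀)
    (qs : ℝ × ℝ → ℝ) (U : Set (ℝ × ℝ)) (hU : IsOpen U) (hU₀ : (t₀, v₀) ∈ U)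
    (hqs : ContDiffOn ℝ 1 qs U)
    (hqpos : ∀ tv ∈ U, 0 < qs tv)
    (hFOC : ∀ tv ∈ U,
      p (qs tv) - (tv.1 + mc (qs tv)) / (1 - tv.2)
        = θ (qs tv) * (-(qs tv) * p' (qs tv) / p (qs tv)) * p (qs tv))
    -- equilibrium values of quantity, price, elasticities, tax share, conduct
    (q0 p0 η0 ε0 τ0 : ℝ)
    (hq0 : q0 = qs (t₀, v₀)) (hp0 : p0 = p q0)
    (hη0 : η0 = -q0 * p' q0 / p q0) (hε0 : ε0 = 1 / η0)
    (hτ0 : τ0 = v₀ + t₀ / p0)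
    -- pass-through rate and semi-elasticity
    (ρt ρv : ℝ)
    (hρt : ρt = deriv (fun t => p (qs (t, v₀))) t₀)
    (hρv : ρv = (1 / p0) * deriv (fun v => p (qs (t₀, v))) v₀)
    (hρt0 : ρt ≠ 0)
    -- per-firm surplus measures
    (CS PS R W : ℝ × ℝ → ℝ)
    (hCS : ∀ tv : ℝ × ℝ, CS tv = (∫ s in (0:ℝ)..(qs tv), p s) - p (qs tv) * qs tv)
    (hPS : ∀ tv : ℝ × ℝ,
      PS tv = (1 - tv.2) * p (qs tv) * qs tv - tv.1 * qs tv - c (qs tv))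
    (hR : ∀ tv : ℝ × ℝ, R tv = tv.1 * qs tv + tv.2 * p (qs tv) * qs tv)
    (hW : ∀ tv : ℝ × ℝ, W tv = CS tv + PS tv + R tv) :
    -- MC_t and MC_v are expressed by the sufficient statistics ρ_t, ρ_v, ε, τ, v alone
    -(deriv (fun t => W (t, v₀)) t₀) / deriv (fun t => R (t, v₀)) t₀
        = ε0 * ((1 - v₀ + τ0) * ρt - (1 - v₀) * ρv) / (1 + (v₀ - ε0 * τ0) * ρt)
    ∧ -(deriv (fun v => W (t₀, v)) v₀) / deriv (fun v => R (t₀, v)) v₀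
        = ε0 * (ρv / ρt) * ((1 - v₀ + τ0) * ρt - (1 - v₀) * ρv)
            / (1 + (v₀ - ε0 * τ0) * ρv) := by
  subst hq0 hp0 hη0 hε0 hτ0
  set q := qs (t₀, v₀)
  have hq : 0 < q := hqpos _ hU₀
  have hP : p q ≠ 0 := (hppos q hq).ne'
  have hqs' : DifferentiableAt ℝ qs (t₀, v₀) :=
    (hqs.contDiffAt (hU.mem_nhds hU₀)).differentiableAt one_ne_zero
  obtain ⟨Qt, hQt⟩ : ∃ Qt, HasDerivAt (fun t => qs (t, v₀)) Qt t₀ :=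
    ⟨_, (hqs'.comp t₀ (differentiableAt_id.prodMk (differentiableAt_const _))).hasDerivAt⟩
  obtain ⟨Qv, hQv⟩ : ∃ Qv, HasDerivAt (fun v => qs (t₀, v)) Qv v₀ :=
    ⟨_, (hqs'.comp v₀ ((differentiableAt_const _).prodMk differentiableAt_id)).hasDerivAt⟩
  have hρt' : ρt = p' q * Qt := hρt.trans ((hp q).comp t₀ hQt).deriv
  have hρv' : ρv = 1 / p q * (p' q * Qv) := hρv.trans (congrArg _ ((hp q).comp v₀ hQv).deriv)
  have hd : p' q ≠ 0 := left_ne_zero_of_mul (hρt' ▸ hρt0)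
  have hfoc := eventually_foc_perceivedMarginalRevenue (hU.mem_nhds hU₀) hv₀
    (fun tv htv => (hppos _ (hqpos tv htv)).ne') hFOC
  have hfoc₀ : (1 - v₀) * perceivedMarginalRevenue p p' θ q = t₀ + mc q := hfoc.self_of_nhds
  have hQv_eq := deriv_v_eq_mul_deriv_t_of_foc
    (differentiable_perceivedMarginalRevenue hp hp' hθ _) (hmc q).differentiableAt hQt hQv hfoc
  have hW' : ∀ tv, W tv = totalSurplus p c (qs tv) := fun tv => by
    rw [hW, hCS, hPS, hR, totalSurplus]; ring
  have hpc : Continuous p := continuous_iff_continuousAt.2 fun x => (hp x).continuousAt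
  constructor
  · simp only [hW', hR, (hasDerivAt_totalSurplus_comp hpc (hc q) hQt).deriv,
      (hasDerivAt_revenue_unit (hp q) hQt).deriv]
    exact mcpf_unit_eq hP hq.ne' hd rfl rfl hρt' hρv' hQv_eq hfoc₀
  · simp only [hW', hR, (hasDerivAt_totalSurplus_comp hpc (hc q) hQv).deriv,
      (hasDerivAt_revenue_adValorem (hp q) hQv).deriv]
    exact mcpf_adValorem_eq hP hq.ne' hd rfl rfl hρt' hρt0 hρv' hQv_eq hfoc₀

/-- **Proposition 4 (Sufficient statistics for the marginal costs of public funds).** -/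
theorem sufficient_statistics_for_mc_public_funds
    -- inverse industry demand, twice differentiable, positive and decreasing on q > 0
    (p p' p'' : ℝ → ℝ)
    (hp : ∀ q : ℝ, HasDerivAt p (p' q) q)
    (hp' : ∀ q : ℝ, HasDerivAt p' (p'' q) q)
    (hppos : ∀ q : ℝ, 0 < q → 0 < p q)
    (hpneg : ∀ q : ℝ, 0 < q → p' q < 0)
    -- cost function, twice differentiable, marginal cost mc = c'
    (c mc mc' : ℝ → ℝ)
    (hc : ∀ q : ℝ, HasDerivAt c (mc q) q)
    (hmc : ∀ q : ℝ, HasDerivAt mc (mc' q) q)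
    -- conduct index
    (θ : ℝ → ℝ) (hθ : Differentiable ℝ θ)
    -- initial taxes
    (t₀ v₀ : ℝ) (hv₀ : v₀ < 1)
    -- symmetric equilibrium on an open neighborhood of (t₀, v₀)
    (qs : ℝ × ℝ → ℝ) (U : Set (ℝ × ℝ)) (hU : IsOpen U) (hU₀ : (t₀, v₀) ∈ U)
    (hqs : ContDiffOn ℝ 1 qs U)
    (hqpos : ∀ tv ∈ U, 0 < qs tv)
    (hFOC : ∀ tv ∈ U,
      p (qs tv) - (tv.1 + mc (qs tv)) / (1 - tv.2)
        = θ (qs tv) * (-(qs tv) * p' (qs tv) / p (qs tv)) * p (qs tv))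
    -- equilibrium values of quantity, price, elasticities, tax share, conduct
    (q0 p0 η0 ε0 τ0 θ0 : ℝ)
    (hq0 : q0 = qs (t₀, v₀)) (hp0 : p0 = p q0)
    (hη0 : η0 = -q0 * p' q0 / p q0) (hε0 : ε0 = 1 / η0)
    (hτ0 : τ0 = v₀ + t₀ / p0) (hθ0 : θ0 = θ q0)
    -- pass-through rate and semi-elasticity
    (ρt ρv : ℝ)
    (hρt : ρt = deriv (fun t => p (qs (t, v₀))) t₀)
    (hρv : ρv = (1 / p0) * deriv (fun v => p (qs (t₀, v))) v₀)
    (hρt0 : ρt ≠ 0) (hρv0 : ρv ≠ 0)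
    (hden_t : 1 + (v₀ - ε0 * τ0) * ρt ≠ 0)
    (hden_v : 1 + (v₀ - ε0 * τ0) * ρv ≠ 0)
    -- per-firm surplus measures
    (CS PS R W : ℝ × ℝ → ℝ)
    (hCS : ∀ tv : ℝ × ℝ, CS tv = (∫ s in (0:ℝ)..(qs tv), p s) - p (qs tv) * qs tv)
    (hPS : ∀ tv : ℝ × ℝ,
      PS tv = (1 - tv.2) * p (qs tv) * qs tv - tv.1 * qs tv - c (qs tv))
    (hR : ∀ tv : ℝ × ℝ, R tv = tv.1 * qs tv + tv.2 * p (qs tv) * qs tv)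
    (hW : ∀ tv : ℝ × ℝ, W tv = CS tv + PS tv + R tv)
    -- nonzero marginal revenue of taxation
    (hRt : deriv (fun t => R (t, v₀)) t₀ ≠ 0)
    (hRv : deriv (fun v => R (t₀, v)) v₀ ≠ 0) :
    -- MC_t and MC_v are expressed by the sufficient statistics ρ_t, ρ_v, ε, τ, v alone
    -(deriv (fun t => W (t, v₀)) t₀) / deriv (fun t => R (t, v₀)) t₀
        = ε0 * ((1 - v₀ + τ0) * ρt - (1 - v₀) * ρv) / (1 + (v₀ - ε0 * τ0) * ρt)
    ∧ -(deriv (fun v => W (t₀, v)) v₀) / deriv (fun v => R (t₀, v)) v₀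
        = ε0 * (ρv / ρt) * ((1 - v₀ + τ0) * ρt - (1 - v₀) * ρv)
            / (1 + (v₀ - ε0 * τ0) * ρv) :=
  sufficient_statistics_for_mc_public_funds_general p p' p'' hp hp' hppos c mc mc' hc hmc θ hθ t₀ v₀
    hv₀ qs U hU hU₀ hqs hqpos hFOC q0 p0 η0 ε0 τ0 hq0 hp0 hη0 hε0 hτ0 ρt ρv hρt hρv hρt0 CS PS R W
    hCS hPS hR hW
end

section
/- Pass-through under symmetric oligopoly with a general mode of competition (Proposition 5). Assume mc(q*(t₀, v₀)) ≠ 0, so that χ is defined at the equilibrium quantity. Then, evaluating all functions at the equilibrium point q = q*(t₀, v₀), p = P(t₀, v₀), (t, v) = (t₀, v₀), the pass-through rates satisfy (1−v)·D·ρ_t = 1 and (1−v)·D·ρ_v = 1 − θ·η, where D = [1 + ((1−τ)/(1−v))·ε·χ] − (η + χ)·θ + ε·q·(θ·η)'(q), and (θ·η)' denotes the derivative with respect to q of the function q ↦ θ(q)·η(q). Equivalently, ρ_t = (1/(1−v))·(1/D) and ρ_v = ((ε−θ)/((1−v)·ε))·(1/D). -/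
open Topology Filter


/-- **Proposition 5 (Pass-through under symmetric oligopoly with a general mode of competition).** -/
theorem pass_through_general_symmetric_oligopoly
    -- inverse industry demand, twice differentiable, positive and decreasing on q > 0
    (p p' p'' : ℝ → ℝ)
    (hp : ∀ q : ℝ, HasDerivAt p (p' q) q)
    (hp' : ∀ q : ℝ, HasDerivAt p' (p'' q) q)
    (hppos : ∀ q : ℝ, 0 < q → 0 < p q)
    (hpneg : ∀ q : ℝ, 0 < q → p' q < 0)
    -- cost function, twice differentiable, marginal cost mc = c'
    (c mc mc' : ℝ → ℝ)
    (hc : ∀ q : ℝ, HasDerivAt c (mc q) q)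
    (hmc : ∀ q : ℝ, HasDerivAt mc (mc' q) q)
    -- conduct index
    (θ : ℝ → ℝ) (hθ : Differentiable ℝ θ)
    -- initial taxes
    (t₀ v₀ : ℝ) (hv₀ : v₀ < 1)
    -- symmetric equilibrium on an open neighborhood of (t₀, v₀)
    (qs : ℝ × ℝ → ℝ) (U : Set (ℝ × ℝ)) (hU : IsOpen U) (hU₀ : (t₀, v₀) ∈ U)
    (hqs : ContDiffOn ℝ 1 qs U)
    (hqpos : ∀ tv ∈ U, 0 < qs tv)
    (hFOC : ∀ tv ∈ U,
      p (qs tv) - (tv.1 + mc (qs tv)) / (1 - tv.2)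
        = θ (qs tv) * (-(qs tv) * p' (qs tv) / p (qs tv)) * p (qs tv))
    -- equilibrium values of quantity, price, elasticities, tax share, conduct
    (q0 p0 η0 ε0 τ0 θ0 : ℝ)
    (hq0 : q0 = qs (t₀, v₀)) (hp0 : p0 = p q0)
    (hη0 : η0 = -q0 * p' q0 / p q0) (hε0 : ε0 = 1 / η0)
    (hτ0 : τ0 = v₀ + t₀ / p0) (hθ0 : θ0 = θ q0)
    -- pass-through rate and semi-elasticity
    (ρt ρv : ℝ)
    (hρt : ρt = deriv (fun t => p (qs (t, v₀))) t₀)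
    (hρv : ρv = (1 / p0) * deriv (fun v => p (qs (t₀, v))) v₀)
    -- marginal-cost elasticity at the equilibrium quantity
    (hmc0 : mc q0 ≠ 0)
    (χ0 : ℝ) (hχ0 : χ0 = q0 * mc' q0 / mc q0)
    -- denominator D, with (θ·η)' the derivative of q ↦ θ(q)·η(q)
    (D : ℝ)
    (hD : D = (1 + (1 - τ0) / (1 - v₀) * ε0 * χ0) - (η0 + χ0) * θ0
        + ε0 * q0 * deriv (fun x => θ x * (-x * p' x / p x)) q0) :
    (1 - v₀) * D * ρt = 1
    ∧ (1 - v₀) * D * ρv = 1 - θ0 * η0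
    ∧ ρt = 1 / ((1 - v₀) * D)
    ∧ ρv = (ε0 - θ0) / ((1 - v₀) * ε0) * (1 / D) := by
  -- abbreviations
  have hq0' : qs (t₀, v₀) = q0 := hq0.symm
  have hqpos0 : 0 < q0 := by rw [hq0]; exact hqpos _ hU₀
  have hppos0 : 0 < p q0 := hppos _ hqpos0
  have hpne : p q0 ≠ 0 := hppos0.ne'
  have hp'neg : p' q0 < 0 := hpneg _ hqpos0
  have hp'ne : p' q0 ≠ 0 := hp'neg.ne
  have hv : (0:ℝ) < 1 - v₀ := by linarith
  have hvne : (1:ℝ) - v₀ ≠ 0 := hv.ne'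
  have hqne : q0 ≠ 0 := hqpos0.ne'
  have hη0ne : η0 ≠ 0 := by
    rw [hη0]
    have : 0 < -q0 * p' q0 / p q0 := by
      apply div_pos _ hppos0
      nlinarith
    exact this.ne'
  -- differentiability of qs at the point
  have hdq : DifferentiableAt ℝ qs (t₀, v₀) :=
    (hqs.contDiffAt (hU.mem_nhds hU₀)).differentiableAt one_ne_zero
  have hqtd : DifferentiableAt ℝ (fun t => qs (t, v₀)) t₀ :=
    hdq.comp t₀ (differentiableAt_id.prodMk (differentiableAt_const _))
  have hqvd : DifferentiableAt ℝ (fun v => qs (t₀, v)) v₀ :=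
    hdq.comp v₀ ((differentiableAt_const _).prodMk differentiableAt_id)
  set qt := deriv (fun t => qs (t, v₀)) t₀ with hqt_def
  set qv := deriv (fun v => qs (t₀, v)) v₀ with hqv_def
  have hqt : HasDerivAt (fun t => qs (t, v₀)) qt t₀ := hqtd.hasDerivAt
  have hqv : HasDerivAt (fun v => qs (t₀, v)) qv v₀ := hqvd.hasDerivAt
  -- the "markup" function K x = θ x * x * p' x and its derivative
  have hθq : HasDerivAt θ (deriv θ q0) q0 := (hθ q0).hasDerivAt
  set k' := (deriv θ q0 * q0 + θ q0) * p' q0 + θ q0 * q0 * p'' q0 with hk'def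
  have h1 : HasDerivAt (fun x : ℝ => θ x * x) (deriv θ q0 * q0 + θ q0) q0 := by
    simpa using hθq.fun_mul (hasDerivAt_id q0)
  have hK : HasDerivAt (fun x => θ x * x * p' x) k' q0 := by
    exact h1.mul (hp' q0)
  -- the derivative appearing in D
  have hKp : HasDerivAt (fun x => -(θ x * x * p' x) / p x)
      ((-k' * p q0 - -(θ q0 * q0 * p' q0) * p' q0) / p q0 ^ 2) q0 :=
    hK.neg.div (hp q0) hpne
  have hfun : (fun x => θ x * (-x * p' x / p x)) = fun x => -(θ x * x * p' x) / p x := by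
    funext x; ring
  have hE4 : deriv (fun x => θ x * (-x * p' x / p x)) q0
      = (-k' * p q0 - -(θ q0 * q0 * p' q0) * p' q0) / p q0 ^ 2 := by
    rw [hfun]; exact hKp.deriv
  -- derivatives of composed maps
  have hpq0 : HasDerivAt p (p' q0) (qs (t₀, v₀)) := by rw [hq0']; exact hp q0
  have hKq0 : HasDerivAt (fun x => θ x * x * p' x) k' (qs (t₀, v₀)) := by rw [hq0']; exact hK
  have hmcq0 : HasDerivAt mc (mc' q0) (qs (t₀, v₀)) := by rw [hq0']; exact hmc q0
  have hpc : HasDerivAt (fun t => p (qs (t, v₀))) (p' q0 * qt) t₀ := hpq0.comp t₀ hqt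
  have hKc : HasDerivAt (fun t => θ (qs (t, v₀)) * qs (t, v₀) * p' (qs (t, v₀)))
      (k' * qt) t₀ := HasDerivAt.comp (h₂ := fun x => θ x * x * p' x) t₀ hKq0 hqt
  have hmcc : HasDerivAt (fun t => t + mc (qs (t, v₀))) (1 + mc' q0 * qt) t₀ := by
    simpa using (hasDerivAt_id t₀).fun_add (hmcq0.comp t₀ hqt)
  have hpcv : HasDerivAt (fun v => p (qs (t₀, v))) (p' q0 * qv) v₀ := hpq0.comp v₀ hqv
  have hKcv : HasDerivAt (fun v => θ (qs (t₀, v)) * qs (t₀, v) * p' (qs (t₀, v)))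
      (k' * qv) v₀ := HasDerivAt.comp (h₂ := fun x => θ x * x * p' x) v₀ hKq0 hqv
  have hnum : HasDerivAt (fun v => t₀ + mc (qs (t₀, v))) (mc' q0 * qv) v₀ := by
    simpa using (hasDerivAt_const v₀ t₀).fun_add (hmcq0.comp v₀ hqv)
  have hden : HasDerivAt (fun v : ℝ => 1 - v) (-1) v₀ := by
    simpa using (hasDerivAt_const v₀ (1:ℝ)).fun_sub (hasDerivAt_id v₀)
  have hdivv : HasDerivAt (fun v => (t₀ + mc (qs (t₀, v))) / (1 - v))
      ((mc' q0 * qv * (1 - v₀) - (t₀ + mc q0) * (-1)) / (1 - v₀) ^ 2) v₀ := by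
    have := hnum.fun_div hden hvne
    simpa [hq0'] using this
  -- the FOC as an eventually-zero function along t
  have hnearU_t : ∀ᶠ t in 𝓝 t₀, (t, v₀) ∈ U :=
    (hU.preimage (continuous_id.prodMk continuous_const)).mem_nhds hU₀
  have hnearU_v : ∀ᶠ v in 𝓝 v₀, (t₀, v) ∈ U :=
    (hU.preimage (continuous_const.prodMk continuous_id)).mem_nhds hU₀
  have hFOCpt : ∀ tv ∈ U, p (qs tv) + θ (qs tv) * qs tv * p' (qs tv)
      - (tv.1 + mc (qs tv)) / (1 - tv.2) = 0 := by
    intro tv htv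
    have h := hFOC tv htv
    have hpq : p (qs tv) ≠ 0 := (hppos _ (hqpos _ htv)).ne'
    have hrhs : θ (qs tv) * (-(qs tv) * p' (qs tv) / p (qs tv)) * p (qs tv)
        = -(θ (qs tv) * qs tv * p' (qs tv)) := by
      rw [mul_assoc, div_mul_cancel₀ _ hpq]; ring
    rw [hrhs] at h
    linarith
  have hΦ0 : (fun t => p (qs (t, v₀)) + θ (qs (t, v₀)) * qs (t, v₀) * p' (qs (t, v₀))
      - (t + mc (qs (t, v₀))) / (1 - v₀)) =ᶠ[𝓝 t₀] fun _ => (0:ℝ) := by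
    filter_upwards [hnearU_t] with t ht
    exact hFOCpt (t, v₀) ht
  have hΨ0 : (fun v => p (qs (t₀, v)) + θ (qs (t₀, v)) * qs (t₀, v) * p' (qs (t₀, v))
      - (t₀ + mc (qs (t₀, v))) / (1 - v)) =ᶠ[𝓝 v₀] fun _ => (0:ℝ) := by
    filter_upwards [hnearU_v] with v hv'
    exact hFOCpt (t₀, v) hv'
  have hΦ : HasDerivAt (fun t => p (qs (t, v₀)) + θ (qs (t, v₀)) * qs (t, v₀) * p' (qs (t, v₀))
      - (t + mc (qs (t, v₀))) / (1 - v₀))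
      (p' q0 * qt + k' * qt - (1 + mc' q0 * qt) / (1 - v₀)) t₀ :=
    (hpc.add hKc).sub (hmcc.div_const _)
  have hΦz : HasDerivAt (fun t => p (qs (t, v₀)) + θ (qs (t, v₀)) * qs (t, v₀) * p' (qs (t, v₀))
      - (t + mc (qs (t, v₀))) / (1 - v₀)) 0 t₀ :=
    (hasDerivAt_const t₀ (0:ℝ)).congr_of_eventuallyEq hΦ0
  have hEt : p' q0 * qt + k' * qt - (1 + mc' q0 * qt) / (1 - v₀) = 0 := hΦ.unique hΦz
  have hΨ : HasDerivAt (fun v => p (qs (t₀, v)) + θ (qs (t₀, v)) * qs (t₀, v) * p' (qs (t₀, v))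
      - (t₀ + mc (qs (t₀, v))) / (1 - v))
      (p' q0 * qv + k' * qv
        - (mc' q0 * qv * (1 - v₀) - (t₀ + mc q0) * (-1)) / (1 - v₀) ^ 2) v₀ :=
    (hpcv.add hKcv).sub hdivv
  have hΨz : HasDerivAt (fun v => p (qs (t₀, v)) + θ (qs (t₀, v)) * qs (t₀, v) * p' (qs (t₀, v))
      - (t₀ + mc (qs (t₀, v))) / (1 - v)) 0 v₀ :=
    (hasDerivAt_const v₀ (0:ℝ)).congr_of_eventuallyEq hΨ0
  have hEv : p' q0 * qv + k' * qv
      - (mc' q0 * qv * (1 - v₀) - (t₀ + mc q0) * (-1)) / (1 - v₀) ^ 2 = 0 := hΨ.unique hΨz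
  -- FOC at the point in clean form
  have hM : t₀ + mc q0 = (1 - v₀) * (p q0 + θ q0 * q0 * p' q0) := by
    have h := hFOCpt (t₀, v₀) hU₀
    simp only [hq0'] at h
    have h2 : (t₀ + mc q0) / (1 - v₀) = p q0 + θ q0 * q0 * p' q0 := by linarith
    field_simp at h2
    linarith
  -- pass-through values
  have hρt' : ρt = p' q0 * qt := by rw [hρt]; exact hpc.deriv
  have hρv' : ρv = 1 / p0 * (p' q0 * qv) := by rw [hρv, hpcv.deriv]
  -- polynomial forms of the derivative conditions
  have hAt : ((p' q0 + k') * (1 - v₀) - mc' q0) * qt = 1 := by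
    have h := hEt
    field_simp at h
    linarith
  have hAv : ((p' q0 + k') * (1 - v₀) - mc' q0) * qv * (1 - v₀) = t₀ + mc q0 := by
    have h := hEv
    field_simp at h
    linarith
  -- the key identity: D * p' * (1-v₀) = A
  have hDA : D * p' q0 * (1 - v₀) = (p' q0 + k') * (1 - v₀) - mc' q0 := by
    have hmcq : mc q0 = (1 - v₀) * (p q0 + θ q0 * q0 * p' q0) - t₀ := by linarith
    rw [hD, hE4, hθ0, hχ0, hε0, hη0, hτ0, hp0, hmcq]
    have hmcne : (1 - v₀) * (p q0 + θ q0 * q0 * p' q0) - t₀ ≠ 0 := by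
      rw [← hmcq]; exact hmc0
    have hX : (p q0 - p q0 * v₀ - v₀ * p' q0 * q0 * θ q0 + p' q0 * q0 * θ q0 - t₀) * (p q0 - p q0 * v₀ - v₀ * p' q0 * q0 * θ q0 + p' q0 * q0 * θ q0 - t₀)⁻¹ = 1 := by
      apply mul_inv_cancel₀
      intro h; apply hmcne; linear_combination h
    field_simp
    linear_combination (-(p q0 * mc' q0)) * hX
  -- main conclusions
  have G1 : (1 - v₀) * D * ρt = 1 := by
    rw [hρt']
    calc (1 - v₀) * D * (p' q0 * qt) = (D * p' q0 * (1 - v₀)) * qt := by ring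
    _ = ((p' q0 + k') * (1 - v₀) - mc' q0) * qt := by rw [hDA]
    _ = 1 := hAt
  have G2 : (1 - v₀) * D * ρv = 1 - θ0 * η0 := by
    rw [hρv', hθ0, hη0, hp0]
    have : (1 - v₀) * D * (1 / p q0 * (p' q0 * qv))
        = (D * p' q0 * (1 - v₀)) * qv / p q0 := by ring
    rw [this, hDA]
    have h3 : ((p' q0 + k') * (1 - v₀) - mc' q0) * qv = p q0 + θ q0 * q0 * p' q0 := by
      apply mul_right_cancel₀ hvne
      rw [hAv, hM]; ring
    rw [h3]
    field_simp
    ring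
  have hDne : D ≠ 0 := by
    intro h
    rw [h] at G1
    simp at G1
  refine ⟨G1, G2, ?_, ?_⟩
  · rw [eq_div_iff (by intro h; rw [h] at G1; simp at G1)]
    linarith [G1]
  · have h4 : ρv = (1 - θ0 * η0) / ((1 - v₀) * D) := by
      rw [eq_div_iff (mul_ne_zero hvne hDne)]
      linear_combination G2
    rw [h4, hε0]
    field_simp
end

section
/- Pass-through under quantity competition (Proposition 7). Assume mc(Q₀) ≠ 0 and p'(Q₀) ≠ 0 at the equilibrium per-firm quantity Q₀ = Q*(t₀, v₀), and assume the curvature aggregation relation σ(Q₀)·η(Q₀) = (σ_F(Q₀) + σ_C(Q₀))·η_F(Q₀) holds. Then, with η, η_F, σ, τ = v + t/p(Q₀), and χ = q·mc'(q)/mc(q) evaluated at the equilibrium, the pass-through rates satisfy (1−v)·D_Q·ρ_t = 1 and (1−v)·D_Q·ρ_v = 1 − η_F, where D_Q = 1 + η_F/η − σ + ((1−τ)/(1−v) − η_F)·χ/η. Equivalently, ρ_t = 1/[(1−v)·D_Q] and ρ_v = (1 − η_F)/[(1−v)·D_Q]. -/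
/-- **Proposition 7 (Pass-through under quantity competition).**
Symmetric differentiated Cournot oligopoly with `n ≥ 2` firms, unit and ad valorem
taxation, and possibly non-constant marginal cost. -/
theorem pass_through_quantity_competition
    (n : ℕ) (hn : 2 ≤ n)
    -- inverse demand system, twice continuously differentiable
    (Pj : Fin n → (Fin n → ℝ) → ℝ)
    (hPj : ∀ j, ContDiff ℝ 2 (Pj j))
    -- symmetry: values at symmetric quantity vectors are index-independent
    (pbar Down Dcross D2own D2cross : ℝ → ℝ)
    (hpbar : ∀ (q : ℝ) (j : Fin n), Pj j (fun _ : Fin n => q) = pbar q)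
    (hDown : ∀ (q : ℝ) (j : Fin n),
      deriv (fun s => Pj j (Function.update (fun _ : Fin n => q) j s)) q = Down q)
    (hDcross : ∀ (q : ℝ) (j j' : Fin n), j ≠ j' →
      deriv (fun s => Pj j (Function.update (fun _ : Fin n => q) j' s)) q = Dcross q)
    (hD2own : ∀ (q : ℝ) (j : Fin n),
      deriv (deriv (fun s => Pj j (Function.update (fun _ : Fin n => q) j s))) q
        = D2own q)
    (hD2cross : ∀ (q : ℝ) (j j' : Fin n), j ≠ j' →
      deriv (fun s =>
          deriv (fun r =>
              Pj j (Function.update (Function.update (fun _ : Fin n => q) j' s) j r)) q)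
        q = D2cross q)
    -- cost function, twice differentiable, marginal cost mc = c'
    (c mc mc' : ℝ → ℝ)
    (hc : ∀ q : ℝ, HasDerivAt c (mc q) q)
    (hmc : ∀ q : ℝ, HasDerivAt mc (mc' q) q)
    -- taxes
    (t₀ v₀ : ℝ) (hv₀ : v₀ < 1)
    -- symmetric quantity equilibrium on an open neighborhood of (t₀, v₀)
    (Qs : ℝ × ℝ → ℝ) (U : Set (ℝ × ℝ)) (hU : IsOpen U) (hU₀ : (t₀, v₀) ∈ U)
    (hQs : ContDiffOn ℝ 1 Qs U)
    (hFOC : ∀ tv ∈ U, ∀ j : Fin n,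
      deriv (fun s =>
          (1 - tv.2) * Pj j (Function.update (fun _ : Fin n => Qs tv) j s) * s
            - tv.1 * s - c s) (Qs tv) = 0)
    -- equilibrium values
    (Q₀ η0 ηF0 σ0 σF0 σC0 τ0 χ0 : ℝ)
    (hQ₀ : Q₀ = Qs (t₀, v₀))
    (hQpos : 0 < Q₀) (hppos : 0 < pbar Q₀)
    (hDneg : Down Q₀ < 0) (hp'neg : deriv pbar Q₀ < 0)
    (hη0 : η0 = -Q₀ * deriv pbar Q₀ / pbar Q₀)
    (hηF0 : ηF0 = -(Q₀ / pbar Q₀) * Down Q₀)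
    (hσ0 : σ0 = -Q₀ * deriv (deriv pbar) Q₀ / deriv pbar Q₀)
    (hσF0 : σF0 = -Q₀ * (Down Q₀)⁻¹ * D2own Q₀)
    (hσC0 : σC0 = -((n : ℝ) - 1) * Q₀ * (Down Q₀)⁻¹ * D2cross Q₀)
    (hτ0 : τ0 = v₀ + t₀ / pbar Q₀)
    (hmc0 : mc Q₀ ≠ 0)
    (hχ0 : χ0 = Q₀ * mc' Q₀ / mc Q₀)
    -- curvature aggregation relation σ·η = (σ_F + σ_C)·η_F
    (hagg : σ0 * η0 = (σF0 + σC0) * ηF0)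
    -- pass-through for the equilibrium price P(t,v) = p(Q*(t,v))
    (ρt ρv : ℝ)
    (hρt : ρt = deriv (fun t => pbar (Qs (t, v₀))) t₀)
    (hρv : ρv = (1 / pbar Q₀) * deriv (fun v => pbar (Qs (t₀, v))) v₀)
    (DQ : ℝ)
    (hDQ : DQ = 1 + ηF0 / η0 - σ0
        + ((1 - τ0) / (1 - v₀) - ηF0) * χ0 / η0) :
    (1 - v₀) * DQ * ρt = 1
    ∧ (1 - v₀) * DQ * ρv = 1 - ηF0
    ∧ ρt = 1 / ((1 - v₀) * DQ)
    ∧ ρv = (1 - ηF0) / ((1 - v₀) * DQ) := by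
  -- indices
  have hn0 : 0 < n := by omega
  have hn1 : 1 < n := by omega
  set j : Fin n := ⟨0, hn0⟩ with hj
  set j'' : Fin n := ⟨1, hn1⟩ with hj''
  have hjne : j ≠ j'' := by simp [hj, hj'', Fin.ext_iff]
  set f : (Fin n → ℝ) → ℝ := Pj j with hfdef
  have hf : ContDiff ℝ 2 f := hPj j
  have hfd : Differentiable ℝ f := hf.differentiable (by norm_num)
  have hf' : ContDiff ℝ 1 (fderiv ℝ f) := hf.fderiv_right (by norm_num)
  have hf'd : Differentiable ℝ (fderiv ℝ f) := hf'.differentiable (by norm_num)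
  -- update curve has derivative Pi.single k 1
  have hupd : ∀ (w : Fin n → ℝ) (k : Fin n) (s : ℝ),
      HasDerivAt (fun s => Function.update w k s) (Pi.single k 1) s := by
    intro w k s
    rw [hasDerivAt_pi]
    intro m
    by_cases h : m = k
    · subst h
      simp only [Function.update_self, Pi.single_eq_same]
      exact hasDerivAt_id s
    · simp only [Function.update_of_ne h, Pi.single_eq_of_ne h]
      exact hasDerivAt_const s (w m)
  have hupdself : ∀ (q : ℝ) (k : Fin n),
      Function.update (fun _ : Fin n => q) k q = fun _ => q := by
    intro q k; ext m; simp [Function.update_apply]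
  -- chain rule A
  have hchainA : ∀ (w : Fin n → ℝ) (k : Fin n) (s₀ : ℝ),
      HasDerivAt (fun s => f (Function.update w k s))
        (fderiv ℝ f (Function.update w k s₀) (Pi.single k 1)) s₀ := by
    intro w k s₀
    exact (hfd _).hasFDerivAt.comp_hasDerivAt s₀ (hupd w k s₀)
  -- diagonal curve
  have hdiag : ∀ q : ℝ, HasDerivAt (fun q : ℝ => (fun _ : Fin n => q))
      (fun _ : Fin n => (1:ℝ)) q := by
    intro q
    rw [hasDerivAt_pi]
    intro m
    exact hasDerivAt_id q
  -- Down identification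
  have hDownEq : ∀ q : ℝ, Down q = fderiv ℝ f (fun _ => q) (Pi.single j 1) := by
    intro q
    rw [← hDown q j]
    have h := hchainA (fun _ => q) j q
    rw [hupdself q j] at h
    exact h.deriv
  -- g = partial_j f
  set g : (Fin n → ℝ) → ℝ := fun x => fderiv ℝ f x (Pi.single j 1) with hgdef
  have hg : ∀ x, HasFDerivAt g
      ((ContinuousLinearMap.apply ℝ ℝ (Pi.single j 1)).comp (fderiv ℝ (fderiv ℝ f) x)) x := by
    intro x
    exact (ContinuousLinearMap.apply ℝ ℝ (Pi.single j 1)).hasFDerivAt.comp x (hf'd x).hasFDerivAt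
  -- D2own identification
  have hD2ownEq : ∀ q : ℝ,
      (fderiv ℝ (fderiv ℝ f) (fun _ => q)) (Pi.single j 1) (Pi.single j 1) = D2own q := by
    intro q
    rw [← hD2own q j]
    have hinner : deriv (fun s => Pj j (Function.update (fun _ : Fin n => q) j s))
        = fun s => g (Function.update (fun _ : Fin n => q) j s) := by
      funext s
      exact (hchainA (fun _ => q) j s).deriv
    rw [hinner]
    have h := (hg (Function.update (fun _ : Fin n => q) j q)).comp_hasDerivAt q
      (hupd (fun _ : Fin n => q) j q)
    rw [hupdself q j] at h
    have h' : HasDerivAt (fun s => g (Function.update (fun _ : Fin n => q) j s))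
        ((((ContinuousLinearMap.apply ℝ ℝ) (Pi.single j 1)).comp
          (fderiv ℝ (fderiv ℝ f) fun _ => q)) (Pi.single j 1)) q := h
    rw [h'.deriv]
    simp
  -- D2cross identification
  have hD2crossEq : ∀ (q : ℝ) (k : Fin n), j ≠ k →
      (fderiv ℝ (fderiv ℝ f) (fun _ => q)) (Pi.single k 1) (Pi.single j 1) = D2cross q := by
    intro q k hk
    rw [← hD2cross q j k hk]
    have hinner : (fun s => deriv (fun r =>
        Pj j (Function.update (Function.update (fun _ : Fin n => q) k s) j r)) q)
        = fun s => g (Function.update (fun _ : Fin n => q) k s) := by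
      funext s
      have h1 := (hchainA (Function.update (fun _ : Fin n => q) k s) j q).deriv
      have hval : Function.update (Function.update (fun _ : Fin n => q) k s) j q
          = Function.update (fun _ : Fin n => q) k s := by
        ext m
        rcases eq_or_ne m j with rfl | hm
        · rw [Function.update_self, Function.update_of_ne hk]
        · rw [Function.update_of_ne hm]
      rw [h1, hval]
    rw [hinner]
    have h := (hg (Function.update (fun _ : Fin n => q) k q)).comp_hasDerivAt q
      (hupd (fun _ : Fin n => q) k q)
    rw [hupdself q k] at h
    have h' : HasDerivAt (fun s => g (Function.update (fun _ : Fin n => q) k s))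
        ((((ContinuousLinearMap.apply ℝ ℝ) (Pi.single j 1)).comp
          (fderiv ℝ (fderiv ℝ f) fun _ => q)) (Pi.single k 1)) q := h
    rw [h'.deriv]
    simp
  -- Down as a function
  have hDownFun : Down = fun q => g (fun _ : Fin n => q) := by
    funext q
    rw [hDownEq q]
  -- S : second-derivative aggregate
  set S : ℝ := D2own Q₀ + ((n:ℝ) - 1) * D2cross Q₀ with hSdef
  -- derivative of Down at Q₀
  have hDown' : HasDerivAt Down S Q₀ := by
    have h0 := (hg (fun _ : Fin n => Q₀)).comp_hasDerivAt Q₀ (hdiag Q₀)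
    have h : HasDerivAt Down
        ((((ContinuousLinearMap.apply ℝ ℝ) (Pi.single j 1)).comp
          (fderiv ℝ (fderiv ℝ f) fun _ => Q₀)) (fun _ => 1)) Q₀ := by
      rw [hDownFun]; exact h0
    convert h using 1
    have hone : (fun _ : Fin n => (1:ℝ)) = ∑ k : Fin n, Pi.single k (1:ℝ) :=
      (Finset.univ_sum_single _).symm
    simp only [ContinuousLinearMap.coe_comp', Function.comp_apply,
      ContinuousLinearMap.apply_apply]
    rw [hone, map_sum, ContinuousLinearMap.sum_apply]
    rw [← Finset.add_sum_erase Finset.univ _ (Finset.mem_univ j)]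
    rw [hD2ownEq Q₀]
    have hrest : ∑ k ∈ Finset.univ.erase j,
        (fderiv ℝ (fderiv ℝ f) (fun _ : Fin n => Q₀)) (Pi.single k 1) (Pi.single j 1)
        = ((n:ℝ) - 1) * D2cross Q₀ := by
      rw [Finset.sum_congr rfl (fun k hk => hD2crossEq Q₀ k (Ne.symm (Finset.mem_erase.1 hk).1))]
      rw [Finset.sum_const, Finset.card_erase_of_mem (Finset.mem_univ j),
        Finset.card_univ, Fintype.card_fin, nsmul_eq_mul,
        Nat.cast_sub (by omega : 1 ≤ n), Nat.cast_one]
    rw [hrest, hSdef]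
  -- pbar derivative
  have hpbarFun : pbar = fun q => f (fun _ : Fin n => q) := by
    funext q; exact (hpbar q j).symm
  set P' : ℝ := fderiv ℝ f (fun _ : Fin n => Q₀) (fun _ : Fin n => 1) with hP'def
  have hpbar' : HasDerivAt pbar P' Q₀ := by
    have h := (hfd (fun _ : Fin n => Q₀)).hasFDerivAt.comp_hasDerivAt Q₀ (hdiag Q₀)
    rw [hpbarFun]
    exact h
  have hP'val : deriv pbar Q₀ = P' := hpbar'.deriv
  -- scalar FOC
  have hfocAll : ∀ tv ∈ U,
      (1 - tv.2) * (Down (Qs tv) * Qs tv + pbar (Qs tv)) - tv.1 - mc (Qs tv) = 0 := by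
    intro tv htv
    have h := hFOC tv htv j
    set q := Qs tv with hq
    have h1 : HasDerivAt (fun s => Pj j (Function.update (fun _ : Fin n => q) j s))
        (Down q) q := by
      have h2 := hchainA (fun _ : Fin n => q) j q
      rw [hupdself q j] at h2
      rw [hDownEq q]
      exact h2
    have hD : HasDerivAt (fun s =>
        (1 - tv.2) * Pj j (Function.update (fun _ : Fin n => q) j s) * s
          - tv.1 * s - c s)
        ((1 - tv.2) * (Down q * q + pbar q) - tv.1 - mc q) q := by
      have hm := ((h1.const_mul (1 - tv.2)).mul (hasDerivAt_id q)).sub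
        ((hasDerivAt_id q).const_mul tv.1) |>.sub (hc q)
      refine hm.congr_deriv ?_
      rw [hupdself q j, hpbar q j]
      simp only [id_eq]
      ring
    rw [hD.deriv] at h
    exact h
  -- partial derivatives of Qs
  have hQdiff : DifferentiableAt ℝ Qs (t₀, v₀) :=
    (hQs.differentiableOn (by norm_num)).differentiableAt (hU.mem_nhds hU₀)
  set Qt : ℝ := fderiv ℝ Qs (t₀, v₀) (1, 0) with hQtdef
  set Qv : ℝ := fderiv ℝ Qs (t₀, v₀) (0, 1) with hQvdef
  have hcurvt : HasDerivAt (fun t : ℝ => ((t, v₀) : ℝ × ℝ)) ((1:ℝ), (0:ℝ)) t₀ :=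
    (hasDerivAt_id t₀).prodMk (hasDerivAt_const t₀ v₀)
  have hcurvv : HasDerivAt (fun v : ℝ => ((t₀, v) : ℝ × ℝ)) ((0:ℝ), (1:ℝ)) v₀ :=
    (hasDerivAt_const v₀ t₀).prodMk (hasDerivAt_id v₀)
  have hQt : HasDerivAt (fun t => Qs (t, v₀)) Qt t₀ :=
    hQdiff.hasFDerivAt.comp_hasDerivAt t₀ hcurvt
  have hQv : HasDerivAt (fun v => Qs (t₀, v)) Qv v₀ :=
    hQdiff.hasFDerivAt.comp_hasDerivAt v₀ hcurvv
  -- notation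
  set P : ℝ := pbar Q₀ with hPdef
  set Dn : ℝ := Down Q₀ with hDndef
  -- derivative of A(q) = Down q * q + pbar q
  have hA : HasDerivAt (fun q => Down q * q + pbar q) (S * Q₀ + Dn + P') Q₀ := by
    have h := (hDown'.mul (hasDerivAt_id Q₀)).add hpbar'
    refine h.congr_deriv ?_
    simp [hDndef]
  set K : ℝ := (1 - v₀) * (S * Q₀ + Dn + P') - mc' Q₀ with hKdef
  have hB : HasDerivAt (fun q => (1 - v₀) * (Down q * q + pbar q) - mc q) K Q₀ :=
    (hA.const_mul (1 - v₀)).sub (hmc Q₀)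
  have hQ₀' : Qs (t₀, v₀) = Q₀ := hQ₀.symm
  -- t-direction
  have hKQt : K * Qt = 1 := by
    have hBQ : HasDerivAt (fun q => (1 - v₀) * (Down q * q + pbar q) - mc q) K
        (Qs (t₀, v₀)) := hQ₀' ▸ hB
    have hcomp : HasDerivAt (fun t =>
        ((1 - v₀) * (Down (Qs (t, v₀)) * Qs (t, v₀) + pbar (Qs (t, v₀)))
          - mc (Qs (t, v₀))) - t) (K * Qt - 1) t₀ :=
      by have := (hBQ.comp t₀ hQt).sub (hasDerivAt_id t₀); exact this
    have hev : (fun t =>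
        ((1 - v₀) * (Down (Qs (t, v₀)) * Qs (t, v₀) + pbar (Qs (t, v₀)))
          - mc (Qs (t, v₀))) - t) =ᶠ[nhds t₀] (fun _ => (0:ℝ)) := by
      have hcont : Continuous fun t : ℝ => ((t, v₀) : ℝ × ℝ) :=
        continuous_id.prodMk continuous_const
      have hmem : ∀ᶠ t in nhds t₀, ((t, v₀) : ℝ × ℝ) ∈ U :=
        (hcont.tendsto t₀).eventually (hU.eventually_mem hU₀)
      filter_upwards [hmem] with t ht
      have h3 := hfocAll (t, v₀) ht
      simp only at h3 ⊢
      linarith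
    have h0 : HasDerivAt (fun _ : ℝ => (0:ℝ)) (K * Qt - 1) t₀ :=
      hcomp.congr_of_eventuallyEq hev.symm
    have h4 := (hasDerivAt_const t₀ (0:ℝ)).unique h0
    linarith
  -- v-direction
  have hKQv : K * Qv = Dn * Q₀ + P := by
    have hAQ : HasDerivAt (fun q => Down q * q + pbar q) (S * Q₀ + Dn + P')
        (Qs (t₀, v₀)) := hQ₀' ▸ hA
    have hmcQ : HasDerivAt mc (mc' Q₀) (Qs (t₀, v₀)) := hQ₀' ▸ hmc Q₀
    have honep : HasDerivAt (fun v : ℝ => 1 - v) (-1 : ℝ) v₀ := by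
      simpa using (hasDerivAt_id v₀).const_sub 1
    have hcomp : HasDerivAt (fun v =>
        (1 - v) * (Down (Qs (t₀, v)) * Qs (t₀, v) + pbar (Qs (t₀, v)))
          - t₀ - mc (Qs (t₀, v)))
        ((-1) * (Dn * Q₀ + P) + (1 - v₀) * ((S * Q₀ + Dn + P') * Qv)
          - 0 - mc' Q₀ * Qv) v₀ := by
      have hprod := honep.mul (hAQ.comp v₀ hQv)
      have h5 := (hprod.sub (hasDerivAt_const v₀ t₀)).sub (hmcQ.comp v₀ hQv)
      refine h5.congr_deriv ?_
      simp only [Function.comp_apply, hQ₀', id_eq]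
      rfl
    have hev : (fun v =>
        (1 - v) * (Down (Qs (t₀, v)) * Qs (t₀, v) + pbar (Qs (t₀, v)))
          - t₀ - mc (Qs (t₀, v))) =ᶠ[nhds v₀] (fun _ => (0:ℝ)) := by
      have hcont : Continuous fun v : ℝ => ((t₀, v) : ℝ × ℝ) :=
        continuous_const.prodMk continuous_id
      have hmem : ∀ᶠ v in nhds v₀, ((t₀, v) : ℝ × ℝ) ∈ U :=
        (hcont.tendsto v₀).eventually (hU.eventually_mem hU₀)
      filter_upwards [hmem] with v hv
      exact hfocAll (t₀, v) hv
    have h0 : HasDerivAt (fun _ : ℝ => (0:ℝ)) _ v₀ :=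
      hcomp.congr_of_eventuallyEq hev.symm
    have h6 := (hasDerivAt_const v₀ (0:ℝ)).unique h0
    rw [hKdef]
    linear_combination -h6
  -- pass-through values
  have hpbarQ : HasDerivAt pbar P' (Qs (t₀, v₀)) := hQ₀' ▸ hpbar'
  have hρt2 : ρt = P' * Qt := by
    rw [hρt]; exact (hpbarQ.comp t₀ hQt).deriv
  have hρv2 : ρv = (1 / P) * (P' * Qv) := by
    have hder : HasDerivAt (fun v => pbar (Qs (t₀, v))) (P' * Qv) v₀ := hpbarQ.comp v₀ hQv
    rw [hρv, hder.deriv]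
  -- nonzero facts
  have hPne : P ≠ 0 := ne_of_gt hppos
  have hQne : Q₀ ≠ 0 := ne_of_gt hQpos
  have hP'ne : P' ≠ 0 := by rw [← hP'val]; exact ne_of_lt hp'neg
  have hDnne : Dn ≠ 0 := ne_of_lt hDneg
  have h1v : (1 : ℝ) - v₀ ≠ 0 := by linarith
  -- FOC at equilibrium
  have hfoc0 : (1 - v₀) * (Dn * Q₀ + P) - t₀ - mc Q₀ = 0 := by
    have h7 := hfocAll (t₀, v₀) hU₀
    simp only [hQ₀'] at h7
    exact h7
  -- sigma from aggregation
  have hagg2 := hagg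
  rw [hη0, hηF0, hσF0, hσC0, hP'val] at hagg2
  have hσP : σ0 * P' = -(Q₀ * S) := by
    rw [hSdef]
    field_simp at hagg2
    have hfac : Q₀ * (Dn * Dn * P) ≠ 0 :=
      mul_ne_zero hQne (mul_ne_zero (mul_ne_zero hDnne hDnne) hPne)
    refine mul_right_cancel₀ hfac ?_
    linear_combination (-(Q₀ * (Dn * Dn * P))) * hagg2
  -- sigma explicitly
  have hσ : σ0 = -(Q₀ * S) / P' := by
    rw [eq_div_iff hP'ne]; exact hσP
  -- auxiliary algebraic identities
  have hη0ne : η0 ≠ 0 := by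
    rw [hη0, hP'val]
    exact div_ne_zero (by
      simp only [neg_mul, ne_eq, neg_eq_zero]
      exact fun h => (mul_ne_zero hQne hP'ne) h) hPne
  have hmid : ηF0 / η0 * P' = Dn := by
    rw [hηF0, hη0, hP'val]
    field_simp
  have hlast : ((1 - τ0) / (1 - v₀) - ηF0) * χ0 / η0 * ((1 - v₀) * P') = -mc' Q₀ := by
    rw [hτ0, hχ0, hηF0, hη0, hP'val]
    field_simp
    linear_combination (-mc' Q₀) * hfoc0
  -- key identity
  have hKid : (1 - v₀) * DQ * P' = K := by
    rw [hDQ, hKdef]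
    linear_combination (1 - v₀) * hmid - (1 - v₀) * hσP + hlast
  -- conclusions
  have g1 : (1 - v₀) * DQ * ρt = 1 := by
    rw [hρt2]
    linear_combination Qt * hKid + hKQt
  have hPQv : (1 - v₀) * DQ * (P' * Qv) = Dn * Q₀ + P := by
    linear_combination Qv * hKid + hKQv
  have g2 : (1 - v₀) * DQ * ρv = 1 - ηF0 := by
    rw [hρv2, hηF0]
    field_simp
    linear_combination hPQv
  have hne : (1 - v₀) * DQ ≠ 0 := by
    intro h
    rw [h, zero_mul] at g1
    exact zero_ne_one g1
  refine ⟨g1, g2, ?_, ?_⟩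
  · rw [eq_div_iff hne]
    linear_combination g1
  · rw [eq_div_iff hne]
    linear_combination g2
end

section
/- Relative size of pass-through vector components (Proposition 8, corrected orientation consistent with Equation (4.1) of the paper). For any two indices ℓ, ℓ' ∈ {1, …, d}, the pass-through rates satisfy ρ̃_{T_ℓ}·(τ_{T_{ℓ'}} − ν_{T_{ℓ'}}·η·θ) = ρ̃_{T_{ℓ'}}·(τ_{T_ℓ} − ν_{T_ℓ}·η·θ), and, whenever f_{T_ℓ} ≠ 0 and f_{T_{ℓ'}} ≠ 0, the pass-through quasi-elasticities satisfy ρ_{T_ℓ}·f_{T_ℓ}·(τ_{T_{ℓ'}} − ν_{T_{ℓ'}}·η·θ) = ρ_{T_{ℓ'}}·f_{T_{ℓ'}}·(τ_{T_ℓ} − ν_{T_ℓ}·η·θ), where η, θ, and all sensitivities are evaluated at the equilibrium point (p(q*(T₀)), q*(T₀), T₀). -/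
/-!
Write the first-order condition as `H (q*(T), T) = 0`. Implicit differentiation in `T_ℓ` gives
`∂_q H · ∂q*/∂T_ℓ + ∂_{T_ℓ} H = 0`, and at fixed `q` only `τ` and `ν` depend on `T`, so
`∂_{T_ℓ} H = -(τ_{T_ℓ} - ν_{T_ℓ} η θ) p`. Multiplying by `p'` turns `∂q*/∂T_ℓ` into `ρ̃_{T_ℓ}`:
`∂_q H · ρ̃_{T_ℓ} = p' p (τ_{T_ℓ} - ν_{T_ℓ} η θ)` with one factor `∂_q H` for all `ℓ` and
`p' p ≠ 0`, which forces the cross-multiplied identities (also when `∂_q H = 0`, for then every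
`τ_{T_ℓ} - ν_{T_ℓ} η θ` vanishes). Since `ρ_{T_ℓ} f_{T_ℓ} = ρ̃_{T_ℓ}` when `f_{T_ℓ} ≠ 0`, the
statement about quasi-elasticities is the same identity.
-/

open Function Filter Topology

section Calculus

variable {E : Type*} [NormedAddCommGroup E] [NormedSpace ℝ E]

theorem HasFDerivAt.hasDerivAt_comp_update {ι F : Type*} [Fintype ι] [DecidableEq ι]
    [NormedAddCommGroup F] [NormedSpace ℝ F] {f : (ι → ℝ) → F} {f' : (ι → ℝ) →L[ℝ] F}
    {x : ι → ℝ} (hf : HasFDerivAt f f' x) (i : ι) :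
    HasDerivAt (fun s => f (update x i s)) (f' (Pi.single i 1)) (x i) :=
  hf.comp_hasDerivAt_of_eq (x i) (hasDerivAt_update x i (x i)) (update_eq_self i x).symm

theorem DifferentiableAt.hasDerivAt_comp_update {ι F : Type*} [Fintype ι] [DecidableEq ι]
    [NormedAddCommGroup F] [NormedSpace ℝ F] {f : (ι → ℝ) → F} {x : ι → ℝ}
    (hf : DifferentiableAt ℝ f x) (i : ι) :
    HasDerivAt (fun s => f (update x i s)) (deriv (fun s => f (update x i s)) (x i)) (x i) :=
  (hf.hasFDerivAt.hasDerivAt_comp_update i).differentiableAt.hasDerivAt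

theorem HasFDerivAt.implicit_differentiation {H : ℝ × E → ℝ} {H' : ℝ × E →L[ℝ] ℝ}
    {g : E → ℝ} {g' : E →L[ℝ] ℝ} {x : E} (hH : HasFDerivAt H H' (g x, x))
    (hg : HasFDerivAt g g' x) (hzero : ∀ᶠ y in 𝓝 x, H (g y, y) = 0) (v : E) :
    H' (1, 0) * g' v + H' (0, v) = 0 := by
  have hcomp : HasFDerivAt (fun y => H (g y, y))
      (H'.comp (g'.prod (ContinuousLinearMap.id ℝ E))) x :=
    HasFDerivAt.comp (f := fun y => (g y, y)) x hH (hg.prodMk (hasFDerivAt_id x))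
  have hconst : HasFDerivAt (fun y => H (g y, y)) (0 : E →L[ℝ] ℝ) x :=
    (hasFDerivAt_const 0 x).congr_of_eventuallyEq hzero
  have hsplit : ((g' v, v) : ℝ × E) = g' v • ((1 : ℝ), (0 : E)) + ((0 : ℝ), v) := by simp
  have h := congrArg (· v) (hcomp.unique hconst)
  simp only [ContinuousLinearMap.comp_apply, ContinuousLinearMap.prod_apply,
    ContinuousLinearMap.id_apply, zero_apply] at h
  rwa [hsplit, map_add, map_smul, smul_eq_mul, mul_comm] at h

theorem implicit_differentiation_update {ι : Type*} [Fintype ι] [DecidableEq ι]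
    {H : ℝ × (ι → ℝ) → ℝ} {H' : ℝ × (ι → ℝ) →L[ℝ] ℝ} {g : (ι → ℝ) → ℝ} {g' : (ι → ℝ) →L[ℝ] ℝ}
    {x : ι → ℝ} (hH : HasFDerivAt H H' (g x, x)) (hg : HasFDerivAt g g' x)
    (hzero : ∀ᶠ y in 𝓝 x, H (g y, y) = 0) (i : ι) {b : ℝ}
    (hb : HasDerivAt (fun s => H (g x, update x i s)) b (x i)) :
    H' (1, 0) * g' (Pi.single i 1) + b = 0 := by
  have hslice : HasDerivAt (fun s => H (g x, update x i s)) (H' (0, Pi.single i 1)) (x i) :=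
    (hH.comp x (hasFDerivAt_prodMk_right (g x) x)).hasDerivAt_comp_update i
  rw [← hslice.unique hb]
  exact hH.implicit_differentiation hg hzero _

end Calculus

theorem mul_eq_mul_of_forall_mul_eq_mul {ι R : Type*} [CommRing R] [IsDomain R] {ρ A : ι → R}
    {G k : R} (hk : k ≠ 0) (h : ∀ i, G * ρ i = k * A i) (i j : ι) :
    ρ i * A j = ρ j * A i := by
  apply mul_left_cancel₀ hk
  calc k * (ρ i * A j) = ρ i * (G * ρ j) := by rw [h j]; ring
    _ = ρ j * (G * ρ i) := by ring
    _ = k * (ρ j * A i) := by rw [h i]; ring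

section TaxSensitivity

variable {E : Type*} [NormedAddCommGroup E] [NormedSpace ℝ E] {φ : ℝ → ℝ → E → ℝ}

theorem ContDiff.differentiable_fderiv_apply {F : Type*} [NormedAddCommGroup F]
    [NormedSpace ℝ F] {f : E → F} {n : WithTop ℕ∞} (hf : ContDiff ℝ n f) (hn : 2 ≤ n) (v : E) :
    Differentiable ℝ (fun x => fderiv ℝ f x v) :=
  ((hf.fderiv_right (m := 1) hn).clm_apply contDiff_const).differentiable one_ne_zero

theorem hasDerivAt_slice_fst {a b : ℝ} {T : E}
    (hφ : DifferentiableAt ℝ (fun x : ℝ × ℝ × E => φ x.1 x.2.1 x.2.2) (a, b, T)) :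
    HasDerivAt (fun x => φ x b T)
      (fderiv ℝ (fun x : ℝ × ℝ × E => φ x.1 x.2.1 x.2.2) (a, b, T) (1, 0, 0)) a :=
  (hφ.hasFDerivAt.comp_hasDerivAt a
    ((hasDerivAt_id' a).prodMk ((hasDerivAt_const a b).prodMk (hasDerivAt_const a T))) :)

theorem hasDerivAt_slice_snd {a b : ℝ} {T : E}
    (hφ : DifferentiableAt ℝ (fun x : ℝ × ℝ × E => φ x.1 x.2.1 x.2.2) (a, b, T)) :
    HasDerivAt (fun x => φ a x T)
      (fderiv ℝ (fun x : ℝ × ℝ × E => φ x.1 x.2.1 x.2.2) (a, b, T) (0, 1, 0)) b :=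
  (hφ.hasFDerivAt.comp_hasDerivAt b
    ((hasDerivAt_const b a).prodMk ((hasDerivAt_id' b).prodMk (hasDerivAt_const b T))) :)

theorem differentiableAt_uncurry_of_eq_inv_mul_deriv_fst
    (hφ : ContDiff ℝ 2 (fun x : ℝ × ℝ × E => φ x.1 x.2.1 x.2.2)) {ν : ℝ → ℝ → E → ℝ}
    (hν : ∀ a b T, ν a b T = 1 / b * deriv (fun x => φ x b T) a) {z : ℝ × ℝ × E}
    (hz : z.2.1 ≠ 0) : DifferentiableAt ℝ (fun x : ℝ × ℝ × E => ν x.1 x.2.1 x.2.2) z := by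
  have hfun : (fun x : ℝ × ℝ × E => ν x.1 x.2.1 x.2.2) = fun x => 1 / x.2.1 *
      fderiv ℝ (fun x : ℝ × ℝ × E => φ x.1 x.2.1 x.2.2) x (1, 0, 0) := by
    funext x
    rw [hν, (hasDerivAt_slice_fst (hφ.differentiable two_ne_zero _)).deriv]
  have := hφ.differentiable_fderiv_apply le_rfl (1, 0, 0)
  rw [hfun]
  fun_prop (disch := assumption)

theorem differentiableAt_uncurry_of_eq_inv_mul_deriv_snd
    (hφ : ContDiff ℝ 2 (fun x : ℝ × ℝ × E => φ x.1 x.2.1 x.2.2)) {τ : ℝ → ℝ → E → ℝ}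
    (hτ : ∀ a b T, τ a b T = 1 / a * deriv (fun x => φ a x T) b) {z : ℝ × ℝ × E}
    (hz : z.1 ≠ 0) : DifferentiableAt ℝ (fun x : ℝ × ℝ × E => τ x.1 x.2.1 x.2.2) z := by
  have hfun : (fun x : ℝ × ℝ × E => τ x.1 x.2.1 x.2.2) = fun x => 1 / x.1 *
      fderiv ℝ (fun x : ℝ × ℝ × E => φ x.1 x.2.1 x.2.2) x (0, 1, 0) := by
    funext x
    rw [hτ, (hasDerivAt_slice_snd (hφ.differentiable two_ne_zero _)).deriv]
  have := hφ.differentiable_fderiv_apply le_rfl (0, 1, 0)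
  rw [hfun]
  fun_prop (disch := assumption)

end TaxSensitivity

section FirstOrderCondition

variable {E : Type*} {p p' θ mc : ℝ → ℝ} {τ ν : ℝ → ℝ → E → ℝ}

noncomputable def focResidual (p p' θ mc : ℝ → ℝ) (τ ν : ℝ → ℝ → E → ℝ) (z : ℝ × E) : ℝ :=
  (1 - τ (p z.1) z.1 z.2 - (1 - ν (p z.1) z.1 z.2) * (-z.1 * p' z.1 / p z.1) * θ z.1) * p z.1
    - mc z.1

theorem differentiableAt_focResidual [NormedAddCommGroup E] [NormedSpace ℝ E] {q : ℝ} {T : E}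
    (hp : DifferentiableAt ℝ p q) (hp' : DifferentiableAt ℝ p' q) (hθ : DifferentiableAt ℝ θ q)
    (hmc : DifferentiableAt ℝ mc q)
    (hτ : DifferentiableAt ℝ (fun x : ℝ × ℝ × E => τ x.1 x.2.1 x.2.2) (p q, q, T))
    (hν : DifferentiableAt ℝ (fun x : ℝ × ℝ × E => ν x.1 x.2.1 x.2.2) (p q, q, T))
    (hpq : p q ≠ 0) : DifferentiableAt ℝ (focResidual p p' θ mc τ ν) (q, T) := by
  unfold focResidual
  fun_prop (disch := assumption)

theorem hasDerivAt_focResidual_comp {q : ℝ} {γ : ℝ → E} {s₀ τ' ν' : ℝ}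
    (hτ : HasDerivAt (fun s => τ (p q) q (γ s)) τ' s₀)
    (hν : HasDerivAt (fun s => ν (p q) q (γ s)) ν' s₀) :
    HasDerivAt (fun s => focResidual p p' θ mc τ ν (q, γ s))
      (-(τ' - ν' * (-q * p' q / p q) * θ q) * p q) s₀ :=
  ((((hτ.const_sub 1).sub (((hν.const_sub 1).mul_const (-q * p' q / p q)).mul_const
    (θ q))).mul_const (p q)).sub_const (mc q)).congr_deriv (by ring)

theorem focResidual_fst_deriv_mul_passThrough {ι : Type*} [Fintype ι] [DecidableEq ι]
    {qs : (ι → ℝ) → ℝ} {qs' : (ι → ℝ) →L[ℝ] ℝ} {T₀ : ι → ℝ} {H' : ℝ × (ι → ℝ) →L[ℝ] ℝ}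
    {τ ν : ℝ → ℝ → (ι → ℝ) → ℝ} (hH : HasFDerivAt (focResidual p p' θ mc τ ν) H' (qs T₀, T₀))
    (hqs : HasFDerivAt qs qs' T₀) (hzero : ∀ᶠ T in 𝓝 T₀, focResidual p p' θ mc τ ν (qs T, T) = 0)
    (hp : HasDerivAt p (p' (qs T₀)) (qs T₀)) (ℓ : ι) {τ' ν' : ℝ}
    (hτ : HasDerivAt (fun s => τ (p (qs T₀)) (qs T₀) (update T₀ ℓ s)) τ' (T₀ ℓ))
    (hν : HasDerivAt (fun s => ν (p (qs T₀)) (qs T₀) (update T₀ ℓ s)) ν' (T₀ ℓ)) :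
    H' (1, 0) * deriv (fun s => p (qs (update T₀ ℓ s))) (T₀ ℓ)
      = p' (qs T₀) * p (qs T₀) * (τ' - ν' * (-qs T₀ * p' (qs T₀) / p (qs T₀)) * θ (qs T₀)) := by
  have hρ : deriv (fun s => p (qs (update T₀ ℓ s))) (T₀ ℓ) = p' (qs T₀) * qs' (Pi.single ℓ 1) :=
    (hp.comp_of_eq (T₀ ℓ) (hqs.hasDerivAt_comp_update ℓ) (by rw [update_eq_self])).deriv
  have himplicit := implicit_differentiation_update hH hqs hzero ℓ
    (hasDerivAt_focResidual_comp (p' := p') (θ := θ) (mc := mc) hτ hν)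
  rw [hρ]
  linear_combination p' (qs T₀) * himplicit

end FirstOrderCondition

theorem relative_size_of_pass_through_components_general
    -- inverse industry demand, twice differentiable, positive and decreasing on q > 0
    (d : ℕ)
    (p p' p'' : ℝ → ℝ)
    (hp : ∀ q : ℝ, HasDerivAt p (p' q) q)
    (hp' : ∀ q : ℝ, HasDerivAt p' (p'' q) q)
    (hppos : ∀ q : ℝ, 0 < q → 0 < p q)
    (hpneg : ∀ q : ℝ, 0 < q → p' q < 0)
    -- cost function, twice differentiable, marginal cost mc = c'
    (mc mc' : ℝ → ℝ)
    (hmc : ∀ q : ℝ, HasDerivAt mc (mc' q) q)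
    -- conduct index
    (θ : ℝ → ℝ) (hθ : Differentiable ℝ θ)
    -- tax function φ(p, q, T), twice continuously differentiable
    (φ : ℝ → ℝ → (Fin d → ℝ) → ℝ)
    (hφ : ContDiff ℝ 2 (fun x : ℝ × ℝ × (Fin d → ℝ) => φ x.1 x.2.1 x.2.2))
    -- first-order price and quantity sensitivities of the tax revenue
    (ν τf : ℝ → ℝ → (Fin d → ℝ) → ℝ)
    (hν : ∀ (a b : ℝ) (T : Fin d → ℝ), ν a b T = (1 / b) * deriv (fun x => φ x b T) a)
    (hτf : ∀ (a b : ℝ) (T : Fin d → ℝ), τf a b T = (1 / a) * deriv (fun x => φ a x T) b)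
    -- symmetric equilibrium on an open neighborhood of T₀
    (T₀ : Fin d → ℝ) (qs : (Fin d → ℝ) → ℝ)
    (U : Set (Fin d → ℝ)) (hU : IsOpen U) (hT₀ : T₀ ∈ U)
    (hqs : ContDiffOn ℝ 1 qs U)
    (hqpos : ∀ T ∈ U, 0 < qs T)
    (hFOC : ∀ T ∈ U,
      (1 - τf (p (qs T)) (qs T) T
          - (1 - ν (p (qs T)) (qs T) T) * (-(qs T) * p' (qs T) / p (qs T)) * θ (qs T))
        * p (qs T) = mc (qs T))
    -- equilibrium values
    (q0 p0 η0 θ0 : ℝ)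
    (hq0 : q0 = qs T₀) (hp0 : p0 = p q0)
    (hη0 : η0 = -q0 * p' q0 / p q0)
    (hθ0 : θ0 = θ q0)
    -- pass-through rate vector and tax-instrument derivatives of φ, τ, ν
    (ρvec fvec τvec νvec : Fin d → ℝ)
    (hρvec : ∀ ℓ : Fin d,
      ρvec ℓ = deriv (fun s => p (qs (Function.update T₀ ℓ s))) (T₀ ℓ))
    (hτvec : ∀ ℓ : Fin d,
      τvec ℓ = deriv (fun s => τf p0 q0 (Function.update T₀ ℓ s)) (T₀ ℓ))
    (hνvec : ∀ ℓ : Fin d,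
      νvec ℓ = deriv (fun s => ν p0 q0 (Function.update T₀ ℓ s)) (T₀ ℓ))
    :
    -- pass-through rates
    (∀ ℓ ℓ' : Fin d,
      ρvec ℓ * (τvec ℓ' - νvec ℓ' * η0 * θ0)
        = ρvec ℓ' * (τvec ℓ - νvec ℓ * η0 * θ0))
    -- pass-through quasi-elasticities ρ_{T_ℓ} = ρ̃_{T_ℓ}/f_{T_ℓ}
    ∧ (∀ ℓ ℓ' : Fin d, fvec ℓ ≠ 0 → fvec ℓ' ≠ 0 →
      (ρvec ℓ / fvec ℓ) * fvec ℓ * (τvec ℓ' - νvec ℓ' * η0 * θ0)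
        = (ρvec ℓ' / fvec ℓ') * fvec ℓ' * (τvec ℓ - νvec ℓ * η0 * θ0)) := by
  subst hq0 hp0 hη0 hθ0
  have hq : 0 < qs T₀ := hqpos T₀ hT₀
  have hpq : 0 < p (qs T₀) := hppos _ hq
  have hτ : DifferentiableAt ℝ (fun x : ℝ × ℝ × (Fin d → ℝ) => τf x.1 x.2.1 x.2.2)
      (p (qs T₀), qs T₀, T₀) := differentiableAt_uncurry_of_eq_inv_mul_deriv_snd hφ hτf hpq.ne'
  have hν : DifferentiableAt ℝ (fun x : ℝ × ℝ × (Fin d → ℝ) => ν x.1 x.2.1 x.2.2)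
      (p (qs T₀), qs T₀, T₀) := differentiableAt_uncurry_of_eq_inv_mul_deriv_fst hφ hν hq.ne'
  set H := focResidual p p' θ mc τf ν
  have hH : HasFDerivAt H (fderiv ℝ H (qs T₀, T₀)) (qs T₀, T₀) :=
    (differentiableAt_focResidual (hp _).differentiableAt (hp' _).differentiableAt (hθ _)
      (hmc _).differentiableAt hτ hν hpq.ne').hasFDerivAt
  have hqs₀ : HasFDerivAt qs (fderiv ℝ qs T₀) T₀ :=
    ((hqs.differentiableOn one_ne_zero).differentiableAt (hU.mem_nhds hT₀)).hasFDerivAt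
  have hH_eq_zero : ∀ᶠ T in 𝓝 T₀, H (qs T, T) = 0 :=
    eventually_of_mem (hU.mem_nhds hT₀) fun T hT => sub_eq_zero.mpr (hFOC T hT)
  have hslice : DifferentiableAt ℝ (fun T => (p (qs T₀), qs T₀, T)) T₀ := by fun_prop
  have hτT : DifferentiableAt ℝ (τf (p (qs T₀)) (qs T₀)) T₀ := (hτ.comp T₀ hslice :)
  have hνT : DifferentiableAt ℝ (ν (p (qs T₀)) (qs T₀)) T₀ := (hν.comp T₀ hslice :)
  have key : ∀ ℓ, fderiv ℝ H (qs T₀, T₀) (1, 0) * ρvec ℓ = p' (qs T₀) * p (qs T₀) *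
      (τvec ℓ - νvec ℓ * (-qs T₀ * p' (qs T₀) / p (qs T₀)) * θ (qs T₀)) := fun ℓ => by
    rw [hρvec, hτvec, hνvec]
    exact focResidual_fst_deriv_mul_passThrough hH hqs₀ hH_eq_zero (hp _) ℓ
      (hτT.hasDerivAt_comp_update ℓ) (hνT.hasDerivAt_comp_update ℓ)
  have hcross := mul_eq_mul_of_forall_mul_eq_mul (mul_ne_zero (hpneg _ hq).ne hpq.ne') key
  refine ⟨hcross, fun ℓ ℓ' hf hf' => ?_⟩
  rw [div_mul_cancel₀ _ hf, div_mul_cancel₀ _ hf']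
  exact hcross ℓ ℓ'

/-- **Proposition 8 (Relative size of pass-through vector components).** -/
theorem relative_size_of_pass_through_components
    -- inverse industry demand, twice differentiable, positive and decreasing on q > 0
    (d : ℕ)
    (p p' p'' : ℝ → ℝ)
    (hp : ∀ q : ℝ, HasDerivAt p (p' q) q)
    (hp' : ∀ q : ℝ, HasDerivAt p' (p'' q) q)
    (hppos : ∀ q : ℝ, 0 < q → 0 < p q)
    (hpneg : ∀ q : ℝ, 0 < q → p' q < 0)
    -- cost function, twice differentiable, marginal cost mc = c'
    (c mc mc' : ℝ → ℝ)
    (hc : ∀ q : ℝ, HasDerivAt c (mc q) q)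
    (hmc : ∀ q : ℝ, HasDerivAt mc (mc' q) q)
    -- conduct index
    (θ : ℝ → ℝ) (hθ : Differentiable ℝ θ)
    -- tax function φ(p, q, T), twice continuously differentiable
    (φ : ℝ → ℝ → (Fin d → ℝ) → ℝ)
    (hφ : ContDiff ℝ 2 (fun x : ℝ × ℝ × (Fin d → ℝ) => φ x.1 x.2.1 x.2.2))
    -- first-order price and quantity sensitivities of the tax revenue
    (ν τf : ℝ → ℝ → (Fin d → ℝ) → ℝ)
    (hν : ∀ (a b : ℝ) (T : Fin d → ℝ), ν a b T = (1 / b) * deriv (fun x => φ x b T) a)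
    (hτf : ∀ (a b : ℝ) (T : Fin d → ℝ), τf a b T = (1 / a) * deriv (fun x => φ a x T) b)
    -- symmetric equilibrium on an open neighborhood of T₀
    (T₀ : Fin d → ℝ) (qs : (Fin d → ℝ) → ℝ)
    (U : Set (Fin d → ℝ)) (hU : IsOpen U) (hT₀ : T₀ ∈ U)
    (hqs : ContDiffOn ℝ 1 qs U)
    (hqpos : ∀ T ∈ U, 0 < qs T)
    (hFOC : ∀ T ∈ U,
      (1 - τf (p (qs T)) (qs T) T
          - (1 - ν (p (qs T)) (qs T) T) * (-(qs T) * p' (qs T) / p (qs T)) * θ (qs T))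
        * p (qs T) = mc (qs T))
    -- equilibrium values
    (q0 p0 η0 ε0 θ0 ν0 τ0 : ℝ)
    (hq0 : q0 = qs T₀) (hp0 : p0 = p q0)
    (hη0 : η0 = -q0 * p' q0 / p q0) (hε0 : ε0 = 1 / η0)
    (hθ0 : θ0 = θ q0) (hν0 : ν0 = ν p0 q0 T₀) (hτ0 : τ0 = τf p0 q0 T₀)
    -- pass-through rate vector and tax-instrument derivatives of φ, τ, ν
    (ρvec fvec τvec νvec : Fin d → ℝ)
    (hρvec : ∀ ℓ : Fin d,
      ρvec ℓ = deriv (fun s => p (qs (Function.update T₀ ℓ s))) (T₀ ℓ))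
    (hfvec : ∀ ℓ : Fin d,
      fvec ℓ = (1 / q0) * deriv (fun s => φ p0 q0 (Function.update T₀ ℓ s)) (T₀ ℓ))
    (hτvec : ∀ ℓ : Fin d,
      τvec ℓ = deriv (fun s => τf p0 q0 (Function.update T₀ ℓ s)) (T₀ ℓ))
    (hνvec : ∀ ℓ : Fin d,
      νvec ℓ = deriv (fun s => ν p0 q0 (Function.update T₀ ℓ s)) (T₀ ℓ))
    :
    -- pass-through rates
    (∀ ℓ ℓ' : Fin d,
      ρvec ℓ * (τvec ℓ' - νvec ℓ' * η0 * θ0)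
        = ρvec ℓ' * (τvec ℓ - νvec ℓ * η0 * θ0))
    -- pass-through quasi-elasticities ρ_{T_ℓ} = ρ̃_{T_ℓ}/f_{T_ℓ}
    ∧ (∀ ℓ ℓ' : Fin d, fvec ℓ ≠ 0 → fvec ℓ' ≠ 0 →
      (ρvec ℓ / fvec ℓ) * fvec ℓ * (τvec ℓ' - νvec ℓ' * η0 * θ0)
        = (ρvec ℓ' / fvec ℓ') * fvec ℓ' * (τvec ℓ - νvec ℓ * η0 * θ0)) :=
  relative_size_of_pass_through_components_general d p p' p'' hp hp' hppos hpneg mc mc' hmc θ hθ φ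
    hφ ν τf hν hτf T₀ qs U hU hT₀ hqs hqpos hFOC q0 p0 η0 θ0 hq0 hp0 hη0 hθ0 ρvec fvec τvec νvec
    hρvec hτvec hνvec
end

section
/- Common factor in the multi-dimensional pass-through (Proposition 9). Assume θ(q*(T₀)) ≠ 0 and mc(q*(T₀)) ≠ 0. Then for every index ℓ ∈ {1, …, d}, the pass-through rate satisfies ρ̃_{T_ℓ}·D_M = p·(τ_{T_ℓ} − ν_{T_ℓ}·η·θ), where D_M = 1 − κ + ε·τ₍₂₎ + (1−τ)·ε·χ + [ν − κ + η·ν₍₂₎ + (ω − η − χ)·(1−ν)]·θ and ω = q·(η·θ)'(q)/(η(q)·θ(q)), with (η·θ)' the derivative with respect to q of the function q ↦ η(q)·θ(q). All quantities are evaluated at the equilibrium point (p(q*(T₀)), q*(T₀), T₀). In particular ρ̃_{T_ℓ} = (τ_{T_ℓ} − ν_{T_ℓ}·η·θ)·p·ρ₍₀₎ with the common factor ρ₍₀₎ = 1/D_M independent of ℓ. -/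
/-!
Along any path `s ↦ T s` of tax vectors the first-order condition
`(1 - τ - (1 - ν) η θ) p = mc` holds identically, so its derivative vanishes. By the chain
rule for the second derivative of `φ`,
`dτ = (κ - τ)/p · dp + τ₂/q · dq + τ_T` and `dν = ν₂/p · dp + (κ - ν)/q · dq + ν_T`,
with the same cross term `κ` in both because the Hessian of a `C²` function is symmetric.
Substituting `dp = -η p/q · dq`, `d(ηθ) = ω η θ/q · dq` and `d mc = χ mc/q · dq` turns the
vanishing derivative into the linear equation `dp · D_M = p (τ_T - ν_T η θ)`; coordinate
paths `s ↦ update T₀ ℓ s` give the theorem.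
-/

open Filter Topology

theorem hasDerivAt_fderiv_apply_comp {E G : Type*} [NormedAddCommGroup E] [NormedSpace ℝ E]
    [NormedAddCommGroup G] [NormedSpace ℝ G] {f : E → G} {γ : ℝ → E} {γ' : E} {t : ℝ}
    (hf : DifferentiableAt ℝ (fderiv ℝ f) (γ t)) (hγ : HasDerivAt γ γ' t) (v : E) :
    HasDerivAt (fun s => fderiv ℝ f (γ s) v) (fderiv ℝ (fderiv ℝ f) (γ t) γ' v) t :=
  ((ContinuousLinearMap.apply ℝ G v).hasFDerivAt.comp (γ t) hf.hasFDerivAt).comp_hasDerivAt t hγ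

theorem ContinuousLinearMap.map_triple_eq_axes {F G : Type*} [NormedAddCommGroup F]
    [NormedSpace ℝ F] [NormedAddCommGroup G] [NormedSpace ℝ G]
    (L : ℝ × ℝ × F →L[ℝ] G) (a b : ℝ) (w : F) :
    L (a, b, w) = a • L (1, 0, 0) + b • L (0, 1, 0) + L (0, 0, w) := by
  rw [← map_smul, ← map_smul, ← map_add, ← map_add]
  simp

theorem linearized_first_order_condition {P Q τ ν e mc : ℝ → ℝ}
    {P' Q' τ' ν' e' mc' t : ℝ}
    (hP : HasDerivAt P P' t) (hQ : HasDerivAt Q Q' t) (hτ : HasDerivAt τ τ' t)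
    (hν : HasDerivAt ν ν' t) (he : HasDerivAt e e' (Q t)) (hmc : HasDerivAt mc mc' (Q t))
    (hfoc : ∀ᶠ s in 𝓝 t, (1 - τ s - (1 - ν s) * e (Q s)) * P s = mc (Q s)) :
    (-τ' + ν' * e (Q t) - (1 - ν t) * (e' * Q')) * P t
      + (1 - τ t - (1 - ν t) * e (Q t)) * P' = mc' * Q' := by
  have hlhs := (((hasDerivAt_const t 1).sub hτ).sub
    (((hasDerivAt_const t 1).sub hν).mul (he.comp t hQ))).mul hP
  have := hlhs.unique ((hmc.comp t hQ).congr_of_eventuallyEq hfoc)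
  simp only [Function.comp_apply, Pi.sub_apply, Pi.mul_apply] at this
  linear_combination this

theorem pass_through_mul_denominator_of_linearized_foc
    {p q P' η θ ν τ χ ω ν₂ τ₂ κ τT νT Q' e' m m' : ℝ}
    (hp : p ≠ 0) (hq : q ≠ 0) (hη₀ : η ≠ 0) (hθ : θ ≠ 0) (hm : m ≠ 0)
    (hη : η = -q * P' / p) (hω : ω = q * e' / (η * θ)) (hχ : χ = q * m' / m)
    (hfoc₀ : (1 - τ - (1 - ν) * (η * θ)) * p = m)
    (hfoc : (-((κ - τ) / p * (P' * Q') + τ₂ / q * Q' + τT)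
        + (ν₂ / p * (P' * Q') + (κ - ν) / q * Q' + νT) * (η * θ) - (1 - ν) * (e' * Q')) * p
        + (1 - τ - (1 - ν) * (η * θ)) * (P' * Q') = m' * Q') :
    P' * Q' * (1 - κ + 1 / η * τ₂ + (1 - τ) * (1 / η) * χ
        + (ν - κ + η * ν₂ + (ω - η - χ) * (1 - ν)) * θ) = p * (τT - νT * η * θ) := by
  obtain rfl : P' = -(η * p / q) := by
    rw [hη]
    field_simp
  subst hω hχ
  -- The χ-terms of the denominator add up to `P' Q' χ (1 - τ - (1 - ν) η θ) / η`, which the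
  -- first-order condition `hfoc₀` turns into `-m' Q'`, the marginal-cost term of `hfoc`.
  linear_combination (norm := skip) hfoc - Q' * m' / m * hfoc₀
  field_simp
  ring

section TaxFunction

variable {F : Type*} [NormedAddCommGroup F] [NormedSpace ℝ F] {φ : ℝ → ℝ → F → ℝ}

def uncurry₃ (φ : ℝ → ℝ → F → ℝ) (x : ℝ × ℝ × F) : ℝ := φ x.1 x.2.1 x.2.2

theorem deriv_fst_eq_fderiv_uncurry₃ {a b : ℝ} {w : F}
    (hφ : DifferentiableAt ℝ (uncurry₃ φ) (a, b, w)) :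
    deriv (fun x => φ x b w) a = fderiv ℝ (uncurry₃ φ) (a, b, w) (1, 0, 0) := by
  have := hφ.hasFDerivAt.comp_hasDerivAt a ((hasDerivAt_id' a).prodMk
    ((hasDerivAt_const a b).prodMk (hasDerivAt_const a w)))
  exact this.deriv

theorem deriv_snd_eq_fderiv_uncurry₃ {a b : ℝ} {w : F}
    (hφ : DifferentiableAt ℝ (uncurry₃ φ) (a, b, w)) :
    deriv (fun y => φ a y w) b = fderiv ℝ (uncurry₃ φ) (a, b, w) (0, 1, 0) := by
  have := hφ.hasFDerivAt.comp_hasDerivAt b ((hasDerivAt_const b a).prodMk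
    ((hasDerivAt_id' b).prodMk (hasDerivAt_const b w)))
  exact this.deriv

variable {P Q : ℝ → ℝ} {T : ℝ → F} {P' Q' t p q κ : ℝ} {T' w : F}

theorem hasDerivAt_deriv_fst_comp (hφ : Differentiable ℝ (uncurry₃ φ))
    (hφ' : DifferentiableAt ℝ (fderiv ℝ (uncurry₃ φ)) (P t, Q t, T t))
    (hP : HasDerivAt P P' t) (hQ : HasDerivAt Q Q' t) (hT : HasDerivAt T T' t) :
    HasDerivAt (fun s => deriv (fun x => φ x (Q s) (T s)) (P s))
      (fderiv ℝ (fderiv ℝ (uncurry₃ φ)) (P t, Q t, T t) (P', Q', T') (1, 0, 0)) t := by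
  simp only [fun s => deriv_fst_eq_fderiv_uncurry₃ (hφ (P s, Q s, T s))]
  exact hasDerivAt_fderiv_apply_comp hφ' (hP.prodMk (hQ.prodMk hT)) _

theorem hasDerivAt_deriv_snd_comp (hφ : Differentiable ℝ (uncurry₃ φ))
    (hφ' : DifferentiableAt ℝ (fderiv ℝ (uncurry₃ φ)) (P t, Q t, T t))
    (hP : HasDerivAt P P' t) (hQ : HasDerivAt Q Q' t) (hT : HasDerivAt T T' t) :
    HasDerivAt (fun s => deriv (fun y => φ (P s) y (T s)) (Q s))
      (fderiv ℝ (fderiv ℝ (uncurry₃ φ)) (P t, Q t, T t) (P', Q', T') (0, 1, 0)) t := by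
  simp only [fun s => deriv_snd_eq_fderiv_uncurry₃ (hφ (P s, Q s, T s))]
  exact hasDerivAt_fderiv_apply_comp hφ' (hP.prodMk (hQ.prodMk hT)) _

theorem hasDerivAt_quantity_sensitivity {τ τ₂ τT : ℝ} (hφ : ContDiff ℝ 2 (uncurry₃ φ))
    (hP : HasDerivAt P P' t) (hQ : HasDerivAt Q Q' t) (hT : HasDerivAt T T' t)
    (hPt : P t = p) (hQt : Q t = q) (hTt : T t = w) (hp : p ≠ 0) (hq : q ≠ 0)
    (hτ : τ = p⁻¹ * deriv (fun y => φ p y w) q)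
    (hκ : κ = deriv (fun x => deriv (fun y => φ x y w) q) p)
    (hτ₂ : τ₂ = q / p * deriv (deriv fun y => φ p y w) q)
    (hτT : τT = deriv (fun s => p⁻¹ * deriv (fun y => φ p y (T s)) q) t) :
    HasDerivAt (fun s => (P s)⁻¹ * deriv (fun y => φ (P s) y (T s)) (Q s))
      ((κ - τ) / p * P' + τ₂ / q * Q' + τT) t := by
  subst hPt hQt hTt
  have hφ₁ : Differentiable ℝ (uncurry₃ φ) := hφ.differentiable two_ne_zero
  have hφ₂ : Differentiable ℝ (fderiv ℝ (uncurry₃ φ)) :=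
    (hφ.fderiv_right (m := 1) le_rfl).differentiable one_ne_zero
  set H := fderiv ℝ (fderiv ℝ (uncurry₃ φ)) (P t, Q t, T t)
  have hκH : κ = H (1, 0, 0) (0, 1, 0) := hκ.trans (hasDerivAt_deriv_snd_comp hφ₁ (hφ₂ _)
    (hasDerivAt_id' _) (hasDerivAt_const _ _) (hasDerivAt_const _ _)).deriv
  have hτ₂H : τ₂ = Q t / P t * H (0, 1, 0) (0, 1, 0) := hτ₂.trans <| congrArg _
    (hasDerivAt_deriv_snd_comp hφ₁ (hφ₂ _) (hasDerivAt_const _ _) (hasDerivAt_id' _)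
      (hasDerivAt_const _ _)).deriv
  have hτTH : τT = (P t)⁻¹ * H (0, 0, T') (0, 1, 0) := hτT.trans ((hasDerivAt_deriv_snd_comp
    hφ₁ (hφ₂ _) (hasDerivAt_const _ _) (hasDerivAt_const _ _) hT).const_mul _).deriv
  refine ((hP.fun_inv hp).fun_mul
    (hasDerivAt_deriv_snd_comp hφ₁ (hφ₂ _) hP hQ hT)).congr_deriv ?_
  rw [H.map_triple_eq_axes, hτ, hκH, hτ₂H, hτTH]
  simp only [add_apply, smul_apply, smul_eq_mul]
  field_simp
  ring

theorem hasDerivAt_price_sensitivity {ν ν₂ νT : ℝ} (hφ : ContDiff ℝ 2 (uncurry₃ φ))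
    (hP : HasDerivAt P P' t) (hQ : HasDerivAt Q Q' t) (hT : HasDerivAt T T' t)
    (hPt : P t = p) (hQt : Q t = q) (hTt : T t = w) (hp : p ≠ 0) (hq : q ≠ 0)
    (hν : ν = q⁻¹ * deriv (fun x => φ x q w) p)
    (hκ : κ = deriv (fun x => deriv (fun y => φ x y w) q) p)
    (hν₂ : ν₂ = p / q * deriv (deriv fun x => φ x q w) p)
    (hνT : νT = deriv (fun s => q⁻¹ * deriv (fun x => φ x q (T s)) p) t) :
    HasDerivAt (fun s => (Q s)⁻¹ * deriv (fun x => φ x (Q s) (T s)) (P s))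
      (ν₂ / p * P' + (κ - ν) / q * Q' + νT) t := by
  subst hPt hQt hTt
  have hφ₁ : Differentiable ℝ (uncurry₃ φ) := hφ.differentiable two_ne_zero
  have hφ₂ : Differentiable ℝ (fderiv ℝ (uncurry₃ φ)) :=
    (hφ.fderiv_right (m := 1) le_rfl).differentiable one_ne_zero
  set H := fderiv ℝ (fderiv ℝ (uncurry₃ φ)) (P t, Q t, T t)
  have hκH : κ = H (0, 1, 0) (1, 0, 0) := by
    rw [hκ, (hasDerivAt_deriv_snd_comp hφ₁ (hφ₂ _) (hasDerivAt_id' _) (hasDerivAt_const _ _)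
      (hasDerivAt_const _ _)).deriv]
    exact (hφ.contDiffAt.isSymmSndFDerivAt (by simp)).eq _ _
  have hν₂H : ν₂ = P t / Q t * H (1, 0, 0) (1, 0, 0) := hν₂.trans <| congrArg _
    (hasDerivAt_deriv_fst_comp hφ₁ (hφ₂ _) (hasDerivAt_id' _) (hasDerivAt_const _ _)
      (hasDerivAt_const _ _)).deriv
  have hνTH : νT = (Q t)⁻¹ * H (0, 0, T') (1, 0, 0) := hνT.trans ((hasDerivAt_deriv_fst_comp
    hφ₁ (hφ₂ _) (hasDerivAt_const _ _) (hasDerivAt_const _ _) hT).const_mul _).deriv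
  refine ((hQ.fun_inv hq).fun_mul
    (hasDerivAt_deriv_fst_comp hφ₁ (hφ₂ _) hP hQ hT)).congr_deriv ?_
  rw [H.map_triple_eq_axes, hν, hκH, hν₂H, hνTH]
  simp only [add_apply, smul_apply, smul_eq_mul]
  field_simp
  ring

theorem pass_through_mul_denominator_of_foc {e mc : ℝ → ℝ}
    {e' mc' η θ ν τ χ ω ν₂ τ₂ νT τT : ℝ} (hφ : ContDiff ℝ 2 (uncurry₃ φ))
    (hP : HasDerivAt P P' q) (hQ : HasDerivAt Q Q' t) (hT : HasDerivAt T T' t)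
    (hQt : Q t = q) (hTt : T t = w) (hPq : P q = p)
    (hp : p ≠ 0) (hq : q ≠ 0) (hP' : P' ≠ 0) (hθ : θ ≠ 0) (hη : η = -q * P' / P q)
    (he : HasDerivAt e e' q) (heq : e q = η * θ) (hω : ω = q * e' / (η * θ))
    (hmc : HasDerivAt mc mc' q) (hmcq : mc q ≠ 0) (hχ : χ = q * mc' / mc q)
    (hν : ν = q⁻¹ * deriv (fun x => φ x q w) p)
    (hτ : τ = p⁻¹ * deriv (fun y => φ p y w) q)
    (hκ : κ = deriv (fun x => deriv (fun y => φ x y w) q) p)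
    (hν₂ : ν₂ = p / q * deriv (deriv fun x => φ x q w) p)
    (hτ₂ : τ₂ = q / p * deriv (deriv fun y => φ p y w) q)
    (hνT : νT = deriv (fun s => q⁻¹ * deriv (fun x => φ x q (T s)) p) t)
    (hτT : τT = deriv (fun s => p⁻¹ * deriv (fun y => φ p y (T s)) q) t)
    (hfoc : ∀ᶠ s in 𝓝 t, (1 - (P (Q s))⁻¹ * deriv (fun y => φ (P (Q s)) y (T s)) (Q s)
      - (1 - (Q s)⁻¹ * deriv (fun x => φ x (Q s) (T s)) (P (Q s))) * e (Q s)) * P (Q s)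
        = mc (Q s)) :
    P' * Q' * (1 - κ + 1 / η * τ₂ + (1 - τ) * (1 / η) * χ
        + (ν - κ + η * ν₂ + (ω - η - χ) * (1 - ν)) * θ) = p * (τT - νT * η * θ) := by
  rw [hPq] at hη
  have hη₀ : η ≠ 0 := by
    rw [hη]
    exact div_ne_zero (mul_ne_zero (neg_ne_zero.2 hq) hP') hp
  have hPQ : HasDerivAt (fun s => P (Q s)) (P' * Q') t := hP.comp_of_eq t hQ hQt.symm
  have hPQt : P (Q t) = p := by rw [hQt, hPq]
  have hfoc₀ := hfoc.self_of_nhds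
  have hlin := linearized_first_order_condition hPQ hQ
    (hasDerivAt_quantity_sensitivity hφ hPQ hQ hT hPQt hQt hTt hp hq hτ hκ hτ₂ hτT)
    (hasDerivAt_price_sensitivity hφ hPQ hQ hT hPQt hQt hTt hp hq hν hκ hν₂ hνT)
    (hQt ▸ he) (hQt ▸ hmc) hfoc
  rw [hPQt, hQt, hTt, heq, ← hτ, ← hν] at hlin hfoc₀
  exact pass_through_mul_denominator_of_linearized_foc hp hq hη₀ hθ hmcq hη hω hχ hfoc₀
    hlin

end TaxFunction

theorem common_factor_in_pass_through_general
    -- inverse industry demand, twice differentiable, positive and decreasing on q > 0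
    (d : ℕ)
    (p p' p'' : ℝ → ℝ)
    (hp : ∀ q : ℝ, HasDerivAt p (p' q) q)
    (hp' : ∀ q : ℝ, HasDerivAt p' (p'' q) q)
    (hppos : ∀ q : ℝ, 0 < q → 0 < p q)
    (hpneg : ∀ q : ℝ, 0 < q → p' q < 0)
    -- cost function, twice differentiable, marginal cost mc = c'
    (mc mc' : ℝ → ℝ)
    (hmc : ∀ q : ℝ, HasDerivAt mc (mc' q) q)
    -- conduct index
    (θ : ℝ → ℝ) (hθ : Differentiable ℝ θ)
    -- tax function φ(p, q, T), twice continuously differentiable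
    (φ : ℝ → ℝ → (Fin d → ℝ) → ℝ)
    (hφ : ContDiff ℝ 2 (fun x : ℝ × ℝ × (Fin d → ℝ) => φ x.1 x.2.1 x.2.2))
    -- first-order price and quantity sensitivities of the tax revenue
    (ν τf : ℝ → ℝ → (Fin d → ℝ) → ℝ)
    (hν : ∀ (a b : ℝ) (T : Fin d → ℝ), ν a b T = (1 / b) * deriv (fun x => φ x b T) a)
    (hτf : ∀ (a b : ℝ) (T : Fin d → ℝ), τf a b T = (1 / a) * deriv (fun x => φ a x T) b)
    -- symmetric equilibrium on an open neighborhood of T₀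
    (T₀ : Fin d → ℝ) (qs : (Fin d → ℝ) → ℝ)
    (U : Set (Fin d → ℝ)) (hU : IsOpen U) (hT₀ : T₀ ∈ U)
    (hqs : ContDiffOn ℝ 1 qs U)
    (hqpos : ∀ T ∈ U, 0 < qs T)
    (hFOC : ∀ T ∈ U,
      (1 - τf (p (qs T)) (qs T) T
          - (1 - ν (p (qs T)) (qs T) T) * (-(qs T) * p' (qs T) / p (qs T)) * θ (qs T))
        * p (qs T) = mc (qs T))
    -- equilibrium values
    (q0 p0 η0 ε0 θ0 ν0 τ0 : ℝ)
    (hq0 : q0 = qs T₀) (hp0 : p0 = p q0)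
    (hη0 : η0 = -q0 * p' q0 / p q0) (hε0 : ε0 = 1 / η0)
    (hθ0 : θ0 = θ q0) (hν0 : ν0 = ν p0 q0 T₀) (hτ0 : τ0 = τf p0 q0 T₀)
    -- pass-through rate vector and tax-instrument derivatives of φ, τ, ν
    (ρvec τvec νvec : Fin d → ℝ)
    (hρvec : ∀ ℓ : Fin d,
      ρvec ℓ = deriv (fun s => p (qs (Function.update T₀ ℓ s))) (T₀ ℓ))
    (hτvec : ∀ ℓ : Fin d,
      τvec ℓ = deriv (fun s => τf p0 q0 (Function.update T₀ ℓ s)) (T₀ ℓ))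
    (hνvec : ∀ ℓ : Fin d,
      νvec ℓ = deriv (fun s => ν p0 q0 (Function.update T₀ ℓ s)) (T₀ ℓ))
    -- nondegeneracy at the equilibrium
    (hθne : θ q0 ≠ 0) (hmcne : mc q0 ≠ 0)
    -- marginal-cost elasticity
    (χ0 : ℝ) (hχ0 : χ0 = q0 * mc' q0 / mc q0)
    -- second-order sensitivities of the tax revenue
    (ν2 τ2 κ0 : ℝ)
    (hν2 : ν2 = (p0 / q0) * deriv (deriv (fun x => φ x q0 T₀)) p0)
    (hτ2 : τ2 = (q0 / p0) * deriv (deriv (fun x => φ p0 x T₀)) q0)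
    (hκ0 : κ0 = deriv (fun x => deriv (fun y => φ x y T₀) q0) p0)
    -- ω = q·(η·θ)'(q)/(η(q)·θ(q))
    (ω0 : ℝ)
    (hω0 : ω0 = q0 * deriv (fun x => (-x * p' x / p x) * θ x) q0 / (η0 * θ0))
    -- the common denominator D_M
    (DM : ℝ)
    (hDM : DM = 1 - κ0 + ε0 * τ2 + (1 - τ0) * ε0 * χ0
        + (ν0 - κ0 + η0 * ν2 + (ω0 - η0 - χ0) * (1 - ν0)) * θ0) :
    (∀ ℓ : Fin d, ρvec ℓ * DM = p0 * (τvec ℓ - νvec ℓ * η0 * θ0))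
    ∧ (DM ≠ 0 → ∀ ℓ : Fin d,
        ρvec ℓ = (τvec ℓ - νvec ℓ * η0 * θ0) * p0 * (1 / DM)) := by
  simp only [hν, hτf, one_div] at hFOC hν0 hτ0 hτvec hνvec
  have hq0pos : 0 < q0 := hq0 ▸ hqpos T₀ hT₀
  have hp0pos : 0 < p0 := hp0 ▸ hppos q0 hq0pos
  have he : DifferentiableAt ℝ (fun x => -x * p' x / p x * θ x) q0 :=
    ((differentiableAt_fun_id.fun_neg.mul (hp' q0).differentiableAt).div
      (hp q0).differentiableAt (hppos q0 hq0pos).ne').mul (hθ q0)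
  have key : ∀ ℓ, ρvec ℓ * DM = p0 * (τvec ℓ - νvec ℓ * η0 * θ0) := by
    intro ℓ
    have hTt : Function.update T₀ ℓ (T₀ ℓ) = T₀ := Function.update_eq_self ℓ T₀
    have hT := hasDerivAt_update T₀ ℓ (T₀ ℓ)
    have hQ : HasDerivAt (fun s => qs (Function.update T₀ ℓ s)) _ (T₀ ℓ) :=
      (hqs.contDiffAt (hU.mem_nhds hT₀)).differentiableAt one_ne_zero
        |>.hasFDerivAt.comp_hasDerivAt_of_eq _ hT hTt.symm
    have hP : HasDerivAt (fun s => p (qs (Function.update T₀ ℓ s))) _ (T₀ ℓ) :=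
      (hp q0).comp_of_eq _ hQ (by rw [hTt, hq0])
    rw [hρvec, hP.deriv, hDM, hε0]
    refine pass_through_mul_denominator_of_foc hφ (hp q0) hQ hT (by rw [hTt, hq0]) hTt
      hp0.symm hp0pos.ne' hq0pos.ne' (hpneg q0 hq0pos).ne (hθ0 ▸ hθne) hη0 he.hasDerivAt
      (by rw [hη0, hθ0]) hω0 (hmc q0) hmcne hχ0 hν0 hτ0 hκ0 hν2 hτ2 (hνvec ℓ) (hτvec ℓ)
      ?_
    filter_upwards [hT.continuousAt.preimage_mem_nhds (by rw [hTt]; exact hU.mem_nhds hT₀)]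
      with s hs
    linear_combination hFOC _ hs
  exact ⟨key, fun hDM ℓ => by rw [mul_one_div, eq_div_iff hDM, key ℓ]; ring⟩

/-- **Proposition 9 (Common factor in the multi-dimensional pass-through).** -/
theorem common_factor_in_pass_through
    -- inverse industry demand, twice differentiable, positive and decreasing on q > 0
    (d : ℕ)
    (p p' p'' : ℝ → ℝ)
    (hp : ∀ q : ℝ, HasDerivAt p (p' q) q)
    (hp' : ∀ q : ℝ, HasDerivAt p' (p'' q) q)
    (hppos : ∀ q : ℝ, 0 < q → 0 < p q)
    (hpneg : ∀ q : ℝ, 0 < q → p' q < 0)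
    -- cost function, twice differentiable, marginal cost mc = c'
    (c mc mc' : ℝ → ℝ)
    (hc : ∀ q : ℝ, HasDerivAt c (mc q) q)
    (hmc : ∀ q : ℝ, HasDerivAt mc (mc' q) q)
    -- conduct index
    (θ : ℝ → ℝ) (hθ : Differentiable ℝ θ)
    -- tax function φ(p, q, T), twice continuously differentiable
    (φ : ℝ → ℝ → (Fin d → ℝ) → ℝ)
    (hφ : ContDiff ℝ 2 (fun x : ℝ × ℝ × (Fin d → ℝ) => φ x.1 x.2.1 x.2.2))
    -- first-order price and quantity sensitivities of the tax revenue
    (ν τf : ℝ → ℝ → (Fin d → ℝ) → ℝ)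
    (hν : ∀ (a b : ℝ) (T : Fin d → ℝ), ν a b T = (1 / b) * deriv (fun x => φ x b T) a)
    (hτf : ∀ (a b : ℝ) (T : Fin d → ℝ), τf a b T = (1 / a) * deriv (fun x => φ a x T) b)
    -- symmetric equilibrium on an open neighborhood of T₀
    (T₀ : Fin d → ℝ) (qs : (Fin d → ℝ) → ℝ)
    (U : Set (Fin d → ℝ)) (hU : IsOpen U) (hT₀ : T₀ ∈ U)
    (hqs : ContDiffOn ℝ 1 qs U)
    (hqpos : ∀ T ∈ U, 0 < qs T)
    (hFOC : ∀ T ∈ U,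
      (1 - τf (p (qs T)) (qs T) T
          - (1 - ν (p (qs T)) (qs T) T) * (-(qs T) * p' (qs T) / p (qs T)) * θ (qs T))
        * p (qs T) = mc (qs T))
    -- equilibrium values
    (q0 p0 η0 ε0 θ0 ν0 τ0 : ℝ)
    (hq0 : q0 = qs T₀) (hp0 : p0 = p q0)
    (hη0 : η0 = -q0 * p' q0 / p q0) (hε0 : ε0 = 1 / η0)
    (hθ0 : θ0 = θ q0) (hν0 : ν0 = ν p0 q0 T₀) (hτ0 : τ0 = τf p0 q0 T₀)
    -- pass-through rate vector and tax-instrument derivatives of φ, τ, ν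
    (ρvec fvec τvec νvec : Fin d → ℝ)
    (hρvec : ∀ ℓ : Fin d,
      ρvec ℓ = deriv (fun s => p (qs (Function.update T₀ ℓ s))) (T₀ ℓ))
    (hfvec : ∀ ℓ : Fin d,
      fvec ℓ = (1 / q0) * deriv (fun s => φ p0 q0 (Function.update T₀ ℓ s)) (T₀ ℓ))
    (hτvec : ∀ ℓ : Fin d,
      τvec ℓ = deriv (fun s => τf p0 q0 (Function.update T₀ ℓ s)) (T₀ ℓ))
    (hνvec : ∀ ℓ : Fin d,
      νvec ℓ = deriv (fun s => ν p0 q0 (Function.update T₀ ℓ s)) (T₀ ℓ))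
    -- nondegeneracy at the equilibrium
    (hθne : θ q0 ≠ 0) (hmcne : mc q0 ≠ 0)
    -- marginal-cost elasticity
    (χ0 : ℝ) (hχ0 : χ0 = q0 * mc' q0 / mc q0)
    -- second-order sensitivities of the tax revenue
    (ν2 τ2 κ0 : ℝ)
    (hν2 : ν2 = (p0 / q0) * deriv (deriv (fun x => φ x q0 T₀)) p0)
    (hτ2 : τ2 = (q0 / p0) * deriv (deriv (fun x => φ p0 x T₀)) q0)
    (hκ0 : κ0 = deriv (fun x => deriv (fun y => φ x y T₀) q0) p0)
    -- ω = q·(η·θ)'(q)/(η(q)·θ(q))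
    (ω0 : ℝ)
    (hω0 : ω0 = q0 * deriv (fun x => (-x * p' x / p x) * θ x) q0 / (η0 * θ0))
    -- the common denominator D_M
    (DM : ℝ)
    (hDM : DM = 1 - κ0 + ε0 * τ2 + (1 - τ0) * ε0 * χ0
        + (ν0 - κ0 + η0 * ν2 + (ω0 - η0 - χ0) * (1 - ν0)) * θ0) :
    (∀ ℓ : Fin d, ρvec ℓ * DM = p0 * (τvec ℓ - νvec ℓ * η0 * θ0))
    ∧ (DM ≠ 0 → ∀ ℓ : Fin d,
        ρvec ℓ = (τvec ℓ - νvec ℓ * η0 * θ0) * p0 * (1 / DM)) :=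
  common_factor_in_pass_through_general d p p' p'' hp hp' hppos hpneg mc mc' hmc θ hθ φ hφ ν τf hν
    hτf T₀ qs U hU hT₀ hqs hqpos hFOC q0 p0 η0 ε0 θ0 ν0 τ0 hq0 hp0 hη0 hε0 hθ0 hν0 hτ0 ρvec τvec
    νvec hρvec hτvec hνvec hθne hmcne χ0 hχ0 ν2 τ2 κ0 hν2 hτ2 hκ0 ω0 hω0 DM hDM
end

section
/- Tax gradients of welfare components under multi-dimensional taxation (Proposition 10). For every index ℓ ∈ {1, …, d}, the following hold at T₀, with q = q*(T₀) and all sensitivities, elasticities, and θ evaluated at the equilibrium point (p(q*(T₀)), q*(T₀), T₀): (1/q)·∂CS/∂T_ℓ = −ρ̃_{T_ℓ}; (1/q)·∂PS/∂T_ℓ = (1−ν)·(1−θ)·ρ̃_{T_ℓ} − f_{T_ℓ}; (1/q)·∂R/∂T_ℓ = f_{T_ℓ} + (ν − ε·τ)·ρ̃_{T_ℓ}; and (1/q)·∂W/∂T_ℓ = −[(1−ν)·θ + ε·τ]·ρ̃_{T_ℓ}. In particular, the tax gradients of CS, PS, R, and W all lie in the two-dimensional span of the vectors (f_{T_1}, …,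 f_{T_d}) and (ρ̃_{T_1}, …, ρ̃_{T_d}). -/
/-- **Proposition 10 (Tax gradients of welfare components under multi-dimensional taxation).** -/
theorem tax_gradients_of_welfare_components
    -- inverse industry demand, twice differentiable, positive and decreasing on q > 0
    (d : ℕ)
    (p p' p'' : ℝ → ℝ)
    (hp : ∀ q : ℝ, HasDerivAt p (p' q) q)
    (hp' : ∀ q : ℝ, HasDerivAt p' (p'' q) q)
    (hppos : ∀ q : ℝ, 0 < q → 0 < p q)
    (hpneg : ∀ q : ℝ, 0 < q → p' q < 0)
    -- cost function, twice differentiable, marginal cost mc = c'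
    (c mc mc' : ℝ → ℝ)
    (hc : ∀ q : ℝ, HasDerivAt c (mc q) q)
    (hmc : ∀ q : ℝ, HasDerivAt mc (mc' q) q)
    -- conduct index
    (θ : ℝ → ℝ) (hθ : Differentiable ℝ θ)
    -- tax function φ(p, q, T), twice continuously differentiable
    (φ : ℝ → ℝ → (Fin d → ℝ) → ℝ)
    (hφ : ContDiff ℝ 2 (fun x : ℝ × ℝ × (Fin d → ℝ) => φ x.1 x.2.1 x.2.2))
    -- first-order price and quantity sensitivities of the tax revenue
    (ν τf : ℝ → ℝ → (Fin d → ℝ) → ℝ)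
    (hν : ∀ (a b : ℝ) (T : Fin d → ℝ), ν a b T = (1 / b) * deriv (fun x => φ x b T) a)
    (hτf : ∀ (a b : ℝ) (T : Fin d → ℝ), τf a b T = (1 / a) * deriv (fun x => φ a x T) b)
    -- symmetric equilibrium on an open neighborhood of T₀
    (T₀ : Fin d → ℝ) (qs : (Fin d → ℝ) → ℝ)
    (U : Set (Fin d → ℝ)) (hU : IsOpen U) (hT₀ : T₀ ∈ U)
    (hqs : ContDiffOn ℝ 1 qs U)
    (hqpos : ∀ T ∈ U, 0 < qs T)
    (hFOC : ∀ T ∈ U,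
      (1 - τf (p (qs T)) (qs T) T
          - (1 - ν (p (qs T)) (qs T) T) * (-(qs T) * p' (qs T) / p (qs T)) * θ (qs T))
        * p (qs T) = mc (qs T))
    -- equilibrium values
    (q0 p0 η0 ε0 θ0 ν0 τ0 : ℝ)
    (hq0 : q0 = qs T₀) (hp0 : p0 = p q0)
    (hη0 : η0 = -q0 * p' q0 / p q0) (hε0 : ε0 = 1 / η0)
    (hθ0 : θ0 = θ q0) (hν0 : ν0 = ν p0 q0 T₀) (hτ0 : τ0 = τf p0 q0 T₀)
    -- pass-through rate vector and tax-instrument derivatives of φ, τ, ν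
    (ρvec fvec τvec νvec : Fin d → ℝ)
    (hρvec : ∀ ℓ : Fin d,
      ρvec ℓ = deriv (fun s => p (qs (Function.update T₀ ℓ s))) (T₀ ℓ))
    (hfvec : ∀ ℓ : Fin d,
      fvec ℓ = (1 / q0) * deriv (fun s => φ p0 q0 (Function.update T₀ ℓ s)) (T₀ ℓ))
    (hτvec : ∀ ℓ : Fin d,
      τvec ℓ = deriv (fun s => τf p0 q0 (Function.update T₀ ℓ s)) (T₀ ℓ))
    (hνvec : ∀ ℓ : Fin d,
      νvec ℓ = deriv (fun s => ν p0 q0 (Function.update T₀ ℓ s)) (T₀ ℓ))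
    -- per-firm surplus measures as functions of the tax vector
    (CS PS R W : (Fin d → ℝ) → ℝ)
    (hCS : ∀ T : Fin d → ℝ,
      CS T = (∫ s in (0:ℝ)..(qs T), p s) - p (qs T) * qs T)
    (hPS : ∀ T : Fin d → ℝ,
      PS T = p (qs T) * qs T - c (qs T) - φ (p (qs T)) (qs T) T)
    (hR : ∀ T : Fin d → ℝ, R T = φ (p (qs T)) (qs T) T)
    (hW : ∀ T : Fin d → ℝ, W T = CS T + PS T + R T) :
    (∀ ℓ : Fin d,
      (1 / q0) * deriv (fun s => CS (Function.update T₀ ℓ s)) (T₀ ℓ) = -ρvec ℓ)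
    ∧ (∀ ℓ : Fin d,
      (1 / q0) * deriv (fun s => PS (Function.update T₀ ℓ s)) (T₀ ℓ)
        = (1 - ν0) * (1 - θ0) * ρvec ℓ - fvec ℓ)
    ∧ (∀ ℓ : Fin d,
      (1 / q0) * deriv (fun s => R (Function.update T₀ ℓ s)) (T₀ ℓ)
        = fvec ℓ + (ν0 - ε0 * τ0) * ρvec ℓ)
    ∧ (∀ ℓ : Fin d,
      (1 / q0) * deriv (fun s => W (Function.update T₀ ℓ s)) (T₀ ℓ)
        = -((1 - ν0) * θ0 + ε0 * τ0) * ρvec ℓ)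
    -- in particular, all four normalized tax gradients lie in the span of f and ρ̃
    ∧ (fun ℓ => (1 / q0) * deriv (fun s => CS (Function.update T₀ ℓ s)) (T₀ ℓ))
        ∈ Submodule.span ℝ ({fvec, ρvec} : Set (Fin d → ℝ))
    ∧ (fun ℓ => (1 / q0) * deriv (fun s => PS (Function.update T₀ ℓ s)) (T₀ ℓ))
        ∈ Submodule.span ℝ ({fvec, ρvec} : Set (Fin d → ℝ))
    ∧ (fun ℓ => (1 / q0) * deriv (fun s => R (Function.update T₀ ℓ s)) (T₀ ℓ))
        ∈ Submodule.span ℝ ({fvec, ρvec} : Set (Fin d → ℝ))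
    ∧ (fun ℓ => (1 / q0) * deriv (fun s => W (Function.update T₀ ℓ s)) (T₀ ℓ))
        ∈ Submodule.span ℝ ({fvec, ρvec} : Set (Fin d → ℝ)) := by

  classical
  -- basic positivity
  have hq0pos : 0 < q0 := hq0 ▸ hqpos T₀ hT₀
  have hq0ne : q0 ≠ 0 := ne_of_gt hq0pos
  have hp0pos : 0 < p0 := hp0 ▸ hppos q0 hq0pos
  have hp0ne : p0 ≠ 0 := ne_of_gt hp0pos
  have hp'neg : p' q0 < 0 := hpneg q0 hq0pos
  have hp'ne : p' q0 ≠ 0 := ne_of_lt hp'neg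
  have hη0' : η0 = -q0 * p' q0 / p0 := by rw [hη0, hp0]
  have hη0pos : 0 < η0 := by
    rw [hη0']
    apply div_pos _ hp0pos
    nlinarith
  have hη0ne : η0 ≠ 0 := ne_of_gt hη0pos
  -- FOC at T₀
  have hFOC0 : (1 - τ0 - (1 - ν0) * η0 * θ0) * p0 = mc q0 := by
    have h := hFOC T₀ hT₀
    rw [← hq0, ← hp0] at h
    rw [hτ0, hν0, hθ0, hη0', hp0] at *
    convert h using 4 <;> rw [hp0]
  -- differentiability of qs at T₀
  have hqsd : HasFDerivAt qs (fderiv ℝ qs T₀) T₀ :=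
    (((hqs T₀ hT₀).contDiffAt (hU.mem_nhds hT₀)).differentiableAt one_ne_zero).hasFDerivAt
  -- continuity of p
  have hpdiff : Differentiable ℝ p := fun x => (hp x).differentiableAt
  have hpc : Continuous p := hpdiff.continuous
  -- φ as a function on the product space
  set Φ : ℝ × ℝ × (Fin d → ℝ) → ℝ := fun x => φ x.1 x.2.1 x.2.2 with hΦdef
  have hΦd : Differentiable ℝ Φ := hφ.differentiable (by norm_num)
  set D := fderiv ℝ Φ (p0, q0, T₀) with hDdef
  have hΦ0 : HasFDerivAt Φ D (p0, q0, T₀) := (hΦd _).hasFDerivAt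
  -- partial derivative in the price direction
  have hcurveA : HasDerivAt (fun x : ℝ => ((x, q0, T₀) : ℝ × ℝ × (Fin d → ℝ)))
      ((1, 0, 0) : ℝ × ℝ × (Fin d → ℝ)) p0 :=
    (hasDerivAt_id p0).prodMk (hasDerivAt_const p0 ((q0, T₀) : ℝ × (Fin d → ℝ)))
  have hA : HasDerivAt (fun x => φ x q0 T₀) (D ((1, 0, 0) : ℝ × ℝ × (Fin d → ℝ))) p0 :=
    by have := hΦ0.comp_hasDerivAt p0 hcurveA; exact this
  have hAval : D ((1, 0, 0) : ℝ × ℝ × (Fin d → ℝ)) = q0 * ν0 := by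
    have h : ν0 = (1 / q0) * D ((1, 0, 0) : ℝ × ℝ × (Fin d → ℝ)) := by
      rw [hν0, hν, hA.deriv]
    rw [h]
    field_simp
  -- partial derivative in the quantity direction
  have hcurveB : HasDerivAt (fun x : ℝ => ((p0, x, T₀) : ℝ × ℝ × (Fin d → ℝ)))
      ((0, 1, 0) : ℝ × ℝ × (Fin d → ℝ)) q0 :=
    (hasDerivAt_const q0 p0).prodMk ((hasDerivAt_id q0).prodMk (hasDerivAt_const q0 T₀))
  have hB : HasDerivAt (fun x => φ p0 x T₀) (D ((0, 1, 0) : ℝ × ℝ × (Fin d → ℝ))) q0 :=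
    by have := hΦ0.comp_hasDerivAt q0 hcurveB; exact this
  have hBval : D ((0, 1, 0) : ℝ × ℝ × (Fin d → ℝ)) = p0 * τ0 := by
    have h : τ0 = (1 / p0) * D ((0, 1, 0) : ℝ × ℝ × (Fin d → ℝ)) := by
      rw [hτ0, hτf, hB.deriv]
    rw [h]
    field_simp
  -- main pointwise computation
  have key : ∀ ℓ : Fin d,
      ((1 / q0) * deriv (fun s => CS (Function.update T₀ ℓ s)) (T₀ ℓ) = -ρvec ℓ)
      ∧ ((1 / q0) * deriv (fun s => PS (Function.update T₀ ℓ s)) (T₀ ℓ)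
          = (1 - ν0) * (1 - θ0) * ρvec ℓ - fvec ℓ)
      ∧ ((1 / q0) * deriv (fun s => R (Function.update T₀ ℓ s)) (T₀ ℓ)
          = fvec ℓ + (ν0 - ε0 * τ0) * ρvec ℓ)
      ∧ ((1 / q0) * deriv (fun s => W (Function.update T₀ ℓ s)) (T₀ ℓ)
          = -((1 - ν0) * θ0 + ε0 * τ0) * ρvec ℓ) := by
    intro ℓ
    set e : Fin d → ℝ := Pi.single ℓ 1 with he
    set X : Fin d → ℝ := Function.update T₀ ℓ (T₀ ℓ) with hX
    have h0 : X = T₀ := Function.update_eq_self ℓ T₀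
    -- derivative of the update curve
    have hu : ∀ s : ℝ, HasDerivAt (fun s : ℝ => Function.update T₀ ℓ s) e s := by
      intro s
      have heq : (fun s : ℝ => Function.update T₀ ℓ s) = fun s => T₀ + (s - T₀ ℓ) • e := by
        funext s
        funext j
        by_cases h : j = ℓ
        · subst h
          simp [he]
        · simp [Function.update_of_ne h, he, Pi.single_eq_of_ne h]
      rw [heq]
      have h1 : HasDerivAt (fun s : ℝ => s - T₀ ℓ) 1 s := (hasDerivAt_id s).sub_const _
      simpa using (h1.smul_const e).const_add T₀
    set q' : ℝ := (fderiv ℝ qs T₀) e with hq'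
    -- derivative of the quantity
    have hg : HasDerivAt (fun s => qs (Function.update T₀ ℓ s)) q' (T₀ ℓ) := by
      have h1 : HasFDerivAt qs (fderiv ℝ qs T₀) X := by rw [h0]; exact hqsd
      exact h1.comp_hasDerivAt (T₀ ℓ) (hu (T₀ ℓ))
    have hq0' : qs X = q0 := by rw [h0, ← hq0]
    have hp0' : p (qs X) = p0 := by rw [hq0']; exact hp0.symm
    -- derivative of the price
    have hPd : HasDerivAt (fun s => p (qs (Function.update T₀ ℓ s))) (p' q0 * q') (T₀ ℓ) := by
      have h1 : HasDerivAt p (p' q0) (qs X) := by rw [hq0']; exact hp q0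
      exact h1.comp (T₀ ℓ) hg
    have hρ : ρvec ℓ = p' q0 * q' := by rw [hρvec ℓ, hPd.deriv]
    -- derivative of the integral term
    have hI : HasDerivAt (fun s => ∫ t in (0:ℝ)..(qs (Function.update T₀ ℓ s)), p t)
        (p0 * q') (T₀ ℓ) := by
      have h1 : HasDerivAt (fun y => ∫ t in (0:ℝ)..y, p t) p0 (qs X) := by
        rw [hq0', ← hp0.symm]
        exact (hpc.integral_hasStrictDerivAt 0 q0).hasDerivAt
      exact h1.comp (T₀ ℓ) hg
    -- derivative of the revenue term p·q
    have hmul : HasDerivAt (fun s => p (qs (Function.update T₀ ℓ s)) * qs (Function.update T₀ ℓ s))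
        (p' q0 * q' * qs X + p (qs X) * q') (T₀ ℓ) := hPd.mul hg
    rw [hp0', hq0'] at hmul
    -- derivative of the cost term
    have hcd : HasDerivAt (fun s => c (qs (Function.update T₀ ℓ s))) (mc q0 * q') (T₀ ℓ) := by
      have h1 : HasDerivAt c (mc q0) (qs X) := by rw [hq0']; exact hc q0
      exact h1.comp (T₀ ℓ) hg
    -- derivative of the tax term
    have hγ : HasDerivAt (fun s => ((p (qs (Function.update T₀ ℓ s)),
        qs (Function.update T₀ ℓ s), Function.update T₀ ℓ s) : ℝ × ℝ × (Fin d → ℝ)))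
        ((p' q0 * q', q', e) : ℝ × ℝ × (Fin d → ℝ)) (T₀ ℓ) :=
      hPd.prodMk (hg.prodMk (hu (T₀ ℓ)))
    have hΦγ : HasDerivAt (fun s => φ (p (qs (Function.update T₀ ℓ s)))
        (qs (Function.update T₀ ℓ s)) (Function.update T₀ ℓ s))
        (D ((p' q0 * q', q', e) : ℝ × ℝ × (Fin d → ℝ))) (T₀ ℓ) := by
      have h1 : HasFDerivAt Φ D ((p (qs X), qs X, X) : ℝ × ℝ × (Fin d → ℝ)) := by
        rw [hq0', h0, ← hp0]; exact hΦ0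
      exact h1.comp_hasDerivAt (T₀ ℓ) hγ
    -- tax-direction partial derivative
    have hCcurve : HasDerivAt (fun s : ℝ => ((p0, q0, Function.update T₀ ℓ s) : ℝ × ℝ × (Fin d → ℝ)))
        ((0, 0, e) : ℝ × ℝ × (Fin d → ℝ)) (T₀ ℓ) :=
      (hasDerivAt_const (T₀ ℓ) p0).prodMk ((hasDerivAt_const (T₀ ℓ) q0).prodMk (hu (T₀ ℓ)))
    have hCd : HasDerivAt (fun s => φ p0 q0 (Function.update T₀ ℓ s))
        (D ((0, 0, e) : ℝ × ℝ × (Fin d → ℝ))) (T₀ ℓ) := by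
      have h1 : HasFDerivAt Φ D ((p0, q0, X) : ℝ × ℝ × (Fin d → ℝ)) := by rw [h0]; exact hΦ0
      exact h1.comp_hasDerivAt (T₀ ℓ) hCcurve
    have hCval : D ((0, 0, e) : ℝ × ℝ × (Fin d → ℝ)) = q0 * fvec ℓ := by
      have h : fvec ℓ = (1 / q0) * D ((0, 0, e) : ℝ × ℝ × (Fin d → ℝ)) := by
        rw [hfvec ℓ, hCd.deriv]
      rw [h]
      field_simp
    -- linearity of D
    have hDlin : D ((p' q0 * q', q', e) : ℝ × ℝ × (Fin d → ℝ))
        = p' q0 * q' * (q0 * ν0) + q' * (p0 * τ0) + q0 * fvec ℓ := by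
      have hsplit : ((p' q0 * q', q', e) : ℝ × ℝ × (Fin d → ℝ))
          = (p' q0 * q') • ((1, 0, 0) : ℝ × ℝ × (Fin d → ℝ))
            + q' • ((0, 1, 0) : ℝ × ℝ × (Fin d → ℝ))
            + ((0, 0, e) : ℝ × ℝ × (Fin d → ℝ)) := by
        simp [Prod.ext_iff]
      rw [hsplit, map_add, map_add, map_smul, map_smul, smul_eq_mul, smul_eq_mul,
        hAval, hBval, hCval]
    -- CS
    have hCSd : HasDerivAt (fun s => CS (Function.update T₀ ℓ s))
        (p0 * q' - (p' q0 * q' * q0 + p0 * q')) (T₀ ℓ) := by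
      have heq : (fun s => CS (Function.update T₀ ℓ s))
          = fun s => (∫ t in (0:ℝ)..(qs (Function.update T₀ ℓ s)), p t)
              - p (qs (Function.update T₀ ℓ s)) * qs (Function.update T₀ ℓ s) :=
        funext fun s => hCS _
      rw [heq]
      exact hI.sub hmul
    -- PS
    have hPSd : HasDerivAt (fun s => PS (Function.update T₀ ℓ s))
        ((p' q0 * q' * q0 + p0 * q') - mc q0 * q'
          - D ((p' q0 * q', q', e) : ℝ × ℝ × (Fin d → ℝ))) (T₀ ℓ) := by
      have heq : (fun s => PS (Function.update T₀ ℓ s))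
          = fun s => p (qs (Function.update T₀ ℓ s)) * qs (Function.update T₀ ℓ s)
              - c (qs (Function.update T₀ ℓ s))
              - φ (p (qs (Function.update T₀ ℓ s))) (qs (Function.update T₀ ℓ s))
                  (Function.update T₀ ℓ s) :=
        funext fun s => hPS _
      rw [heq]
      exact (hmul.sub hcd).sub hΦγ
    -- R
    have hRd : HasDerivAt (fun s => R (Function.update T₀ ℓ s))
        (D ((p' q0 * q', q', e) : ℝ × ℝ × (Fin d → ℝ))) (T₀ ℓ) := by
      have heq : (fun s => R (Function.update T₀ ℓ s))
          = fun s => φ (p (qs (Function.update T₀ ℓ s))) (qs (Function.update T₀ ℓ s))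
              (Function.update T₀ ℓ s) :=
        funext fun s => hR _
      rw [heq]
      exact hΦγ
    -- the four scalar identities
    have res1 : (1 / q0) * deriv (fun s => CS (Function.update T₀ ℓ s)) (T₀ ℓ) = -ρvec ℓ := by
      rw [hCSd.deriv, hρ]
      field_simp
      ring
    have res3 : (1 / q0) * deriv (fun s => R (Function.update T₀ ℓ s)) (T₀ ℓ)
        = fvec ℓ + (ν0 - ε0 * τ0) * ρvec ℓ := by
      rw [hRd.deriv, hDlin, hρ, hε0, hη0']
      field_simp
      ring
    have res2 : (1 / q0) * deriv (fun s => PS (Function.update T₀ ℓ s)) (T₀ ℓ)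
        = (1 - ν0) * (1 - θ0) * ρvec ℓ - fvec ℓ := by
      rw [hPSd.deriv, hDlin, hρ, ← hFOC0, hη0']
      field_simp
      ring
    have res4 : (1 / q0) * deriv (fun s => W (Function.update T₀ ℓ s)) (T₀ ℓ)
        = -((1 - ν0) * θ0 + ε0 * τ0) * ρvec ℓ := by
      have heq : (fun s => W (Function.update T₀ ℓ s))
          = fun s => CS (Function.update T₀ ℓ s) + PS (Function.update T₀ ℓ s)
              + R (Function.update T₀ ℓ s) :=
        funext fun s => hW _
      have hWd : HasDerivAt (fun s => CS (Function.update T₀ ℓ s) + PS (Function.update T₀ ℓ s)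
          + R (Function.update T₀ ℓ s)) _ (T₀ ℓ) := ((hCSd.add hPSd).add hRd)
      have hder : deriv (fun s => W (Function.update T₀ ℓ s)) (T₀ ℓ)
          = deriv (fun s => CS (Function.update T₀ ℓ s)) (T₀ ℓ)
            + deriv (fun s => PS (Function.update T₀ ℓ s)) (T₀ ℓ)
            + deriv (fun s => R (Function.update T₀ ℓ s)) (T₀ ℓ) := by
        rw [heq, hWd.deriv, hCSd.deriv, hPSd.deriv, hRd.deriv]
      rw [hder, mul_add, mul_add, res1, res2, res3]
      ring
    exact ⟨res1, res2, res3, res4⟩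
  -- span facts
  have hmem : ∀ a b : ℝ, a • fvec + b • ρvec ∈ Submodule.span ℝ ({fvec, ρvec} : Set (Fin d → ℝ)) :=
    fun a b => Submodule.add_mem _
      (Submodule.smul_mem _ _ (Submodule.subset_span (by simp)))
      (Submodule.smul_mem _ _ (Submodule.subset_span (by simp)))
  refine ⟨fun ℓ => (key ℓ).1, fun ℓ => (key ℓ).2.1, fun ℓ => (key ℓ).2.2.1,
    fun ℓ => (key ℓ).2.2.2, ?_, ?_, ?_, ?_⟩
  · have : (fun ℓ => (1 / q0) * deriv (fun s => CS (Function.update T₀ ℓ s)) (T₀ ℓ))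
        = (0:ℝ) • fvec + (-1:ℝ) • ρvec := by
      funext ℓ
      rw [(key ℓ).1]
      simp
    rw [this]; exact hmem 0 (-1)
  · have : (fun ℓ => (1 / q0) * deriv (fun s => PS (Function.update T₀ ℓ s)) (T₀ ℓ))
        = (-1:ℝ) • fvec + ((1 - ν0) * (1 - θ0)) • ρvec := by
      funext ℓ
      rw [(key ℓ).2.1]
      simp [Pi.add_apply]
      ring
    rw [this]; exact hmem (-1) _
  · have : (fun ℓ => (1 / q0) * deriv (fun s => R (Function.update T₀ ℓ s)) (T₀ ℓ))
        = (1:ℝ) • fvec + (ν0 - ε0 * τ0) • ρvec := by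
      funext ℓ
      rw [(key ℓ).2.2.1]
      simp [Pi.add_apply]
    rw [this]; exact hmem 1 _
  · have : (fun ℓ => (1 / q0) * deriv (fun s => W (Function.update T₀ ℓ s)) (T₀ ℓ))
        = (0:ℝ) • fvec + (-((1 - ν0) * θ0 + ε0 * τ0)) • ρvec := by
      funext ℓ
      rw [(key ℓ).2.2.2]
      simp [Pi.add_apply]
    rw [this]; exact hmem 0 _
end

section
/- Welfare-change ratios under multi-dimensional taxation (Proposition 11). Fix ℓ ∈ {1, …, d} and assume f_{T_ℓ} ≠ 0, ρ̃_{T_ℓ} ≠ 0, ∂R/∂T_ℓ ≠ 0, and ∂PS/∂T_ℓ ≠ 0 at T₀. Then, with ν, τ, θ, ε evaluated at the equilibrium point (p(q*(T₀)), q*(T₀), T₀) and ρ_{T_ℓ} = ρ̃_{T_ℓ}/f_{T_ℓ}: the marginal cost of public funds MC_{T_ℓ} := −(∂W/∂T_ℓ)/(∂R/∂T_ℓ) equals [(1−ν)·θ + ε·τ]/(1/ρ_{T_ℓ} + ν − ε·τ); the incidence I_{T_ℓ} := (∂CS/∂T_ℓ)/(∂PS/∂T_ℓ) equals 1/(1/ρ_{T_ℓ}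 − (1−ν)·(1−θ)); and the social incidence SI_{T_ℓ} := (∂W/∂T_ℓ)/(∂PS/∂T_ℓ) equals [(1−ν)·θ + ε·τ]/(1/ρ_{T_ℓ} − (1−ν)·(1−θ)). -/
/-- **Proposition 11 (Welfare-change ratios under multi-dimensional taxation).** -/
theorem welfare_change_ratios_multidimensional
    -- inverse industry demand, twice differentiable, positive and decreasing on q > 0
    (d : ℕ)
    (p p' p'' : ℝ → ℝ)
    (hp : ∀ q : ℝ, HasDerivAt p (p' q) q)
    (hp' : ∀ q : ℝ, HasDerivAt p' (p'' q) q)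
    (hppos : ∀ q : ℝ, 0 < q → 0 < p q)
    (hpneg : ∀ q : ℝ, 0 < q → p' q < 0)
    -- cost function, twice differentiable, marginal cost mc = c'
    (c mc mc' : ℝ → ℝ)
    (hc : ∀ q : ℝ, HasDerivAt c (mc q) q)
    (hmc : ∀ q : ℝ, HasDerivAt mc (mc' q) q)
    -- conduct index
    (θ : ℝ → ℝ) (hθ : Differentiable ℝ θ)
    -- tax function φ(p, q, T), twice continuously differentiable
    (φ : ℝ → ℝ → (Fin d → ℝ) → ℝ)
    (hφ : ContDiff ℝ 2 (fun x : ℝ × ℝ × (Fin d → ℝ) => φ x.1 x.2.1 x.2.2))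
    -- first-order price and quantity sensitivities of the tax revenue
    (ν τf : ℝ → ℝ → (Fin d → ℝ) → ℝ)
    (hν : ∀ (a b : ℝ) (T : Fin d → ℝ), ν a b T = (1 / b) * deriv (fun x => φ x b T) a)
    (hτf : ∀ (a b : ℝ) (T : Fin d → ℝ), τf a b T = (1 / a) * deriv (fun x => φ a x T) b)
    -- symmetric equilibrium on an open neighborhood of T₀
    (T₀ : Fin d → ℝ) (qs : (Fin d → ℝ) → ℝ)
    (U : Set (Fin d → ℝ)) (hU : IsOpen U) (hT₀ : T₀ ∈ U)
    (hqs : ContDiffOn ℝ 1 qs U)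
    (hqpos : ∀ T ∈ U, 0 < qs T)
    (hFOC : ∀ T ∈ U,
      (1 - τf (p (qs T)) (qs T) T
          - (1 - ν (p (qs T)) (qs T) T) * (-(qs T) * p' (qs T) / p (qs T)) * θ (qs T))
        * p (qs T) = mc (qs T))
    -- equilibrium values
    (q0 p0 η0 ε0 θ0 ν0 τ0 : ℝ)
    (hq0 : q0 = qs T₀) (hp0 : p0 = p q0)
    (hη0 : η0 = -q0 * p' q0 / p q0) (hε0 : ε0 = 1 / η0)
    (hθ0 : θ0 = θ q0) (hν0 : ν0 = ν p0 q0 T₀) (hτ0 : τ0 = τf p0 q0 T₀)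
    -- pass-through rate vector and tax-instrument derivatives of φ, τ, ν
    (ρvec fvec τvec νvec : Fin d → ℝ)
    (hρvec : ∀ ℓ : Fin d,
      ρvec ℓ = deriv (fun s => p (qs (Function.update T₀ ℓ s))) (T₀ ℓ))
    (hfvec : ∀ ℓ : Fin d,
      fvec ℓ = (1 / q0) * deriv (fun s => φ p0 q0 (Function.update T₀ ℓ s)) (T₀ ℓ))
    (hτvec : ∀ ℓ : Fin d,
      τvec ℓ = deriv (fun s => τf p0 q0 (Function.update T₀ ℓ s)) (T₀ ℓ))
    (hνvec : ∀ ℓ : Fin d,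
      νvec ℓ = deriv (fun s => ν p0 q0 (Function.update T₀ ℓ s)) (T₀ ℓ))
    -- per-firm surplus measures as functions of the tax vector
    (CS PS R W : (Fin d → ℝ) → ℝ)
    (hCS : ∀ T : Fin d → ℝ,
      CS T = (∫ s in (0:ℝ)..(qs T), p s) - p (qs T) * qs T)
    (hPS : ∀ T : Fin d → ℝ,
      PS T = p (qs T) * qs T - c (qs T) - φ (p (qs T)) (qs T) T)
    (hR : ∀ T : Fin d → ℝ, R T = φ (p (qs T)) (qs T) T)
    (hW : ∀ T : Fin d → ℝ, W T = CS T + PS T + R T)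
    -- fix a tax instrument with nondegenerate responses
    (ℓ : Fin d)
    (hf : fvec ℓ ≠ 0) (hρ : ρvec ℓ ≠ 0)
    (hR' : deriv (fun s => R (Function.update T₀ ℓ s)) (T₀ ℓ) ≠ 0)
    (hPS' : deriv (fun s => PS (Function.update T₀ ℓ s)) (T₀ ℓ) ≠ 0)
    -- the pass-through quasi-elasticity
    (ρℓ : ℝ) (hρℓ : ρℓ = ρvec ℓ / fvec ℓ) :
    -- marginal cost of public funds
    -(deriv (fun s => W (Function.update T₀ ℓ s)) (T₀ ℓ))
        / deriv (fun s => R (Function.update T₀ ℓ s)) (T₀ ℓ)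
      = ((1 - ν0) * θ0 + ε0 * τ0) / (1 / ρℓ + ν0 - ε0 * τ0)
    -- incidence
    ∧ deriv (fun s => CS (Function.update T₀ ℓ s)) (T₀ ℓ)
        / deriv (fun s => PS (Function.update T₀ ℓ s)) (T₀ ℓ)
      = 1 / (1 / ρℓ - (1 - ν0) * (1 - θ0))
    -- social incidence
    ∧ deriv (fun s => W (Function.update T₀ ℓ s)) (T₀ ℓ)
        / deriv (fun s => PS (Function.update T₀ ℓ s)) (T₀ ℓ)
      = ((1 - ν0) * θ0 + ε0 * τ0) / (1 / ρℓ - (1 - ν0) * (1 - θ0)) := by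

  classical
  -- basic positivity
  have hq0pos : 0 < q0 := hq0 ▸ hqpos T₀ hT₀
  have hq0ne : q0 ≠ 0 := ne_of_gt hq0pos
  have hp0pos : 0 < p0 := hp0 ▸ hppos q0 hq0pos
  have hp0ne : p0 ≠ 0 := ne_of_gt hp0pos
  have hAneg : p' q0 < 0 := hpneg q0 hq0pos
  have hAne : p' q0 ≠ 0 := ne_of_lt hAneg
  set t0 : ℝ := T₀ ℓ with ht0
  set e : Fin d → ℝ := Pi.single ℓ 1 with he
  have hut0 : Function.update T₀ ℓ t0 = T₀ := Function.update_eq_self ℓ T₀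
  -- derivative of the path in tax space
  have hu' : HasDerivAt (fun s => Function.update T₀ ℓ s) e t0 := by
    have hueq : (fun s => Function.update T₀ ℓ s)
        = fun s : ℝ => T₀ + (s - t0) • e := by
      funext s; funext j
      by_cases hj : j = ℓ
      · subst hj; simp [he, t0]
      · simp [Function.update_of_ne hj, he, Pi.single_apply, hj]
    rw [hueq]
    have h1 : HasDerivAt (fun s : ℝ => s - t0) 1 t0 := (hasDerivAt_id t0).sub_const t0
    simpa using (h1.smul_const e).const_add T₀
  -- derivative of equilibrium quantity along the path
  have hqdiff : DifferentiableAt ℝ qs T₀ :=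
    (hqs.contDiffAt (hU.mem_nhds hT₀)).differentiableAt one_ne_zero
  set Q' : ℝ := fderiv ℝ qs T₀ e with hQ'
  have hg' : HasDerivAt (fun s => qs (Function.update T₀ ℓ s)) Q' t0 := by
    have hqsF : HasFDerivAt qs (fderiv ℝ qs T₀) (Function.update T₀ ℓ t0) := by
      rw [hut0]; exact hqdiff.hasFDerivAt
    exact hqsF.comp_hasDerivAt t0 hu'
  have hgt0 : qs (Function.update T₀ ℓ t0) = q0 := by rw [hut0, hq0]
  -- derivative of equilibrium price along the path
  have hP' : HasDerivAt (fun s => p (qs (Function.update T₀ ℓ s))) (p' q0 * Q') t0 := by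
    have := (hp (qs (Function.update T₀ ℓ t0))).comp t0 hg'
    rw [hgt0] at this
    exact this
  have hPt0 : p (qs (Function.update T₀ ℓ t0)) = p0 := by rw [hgt0, hp0]
  -- the pass-through value
  have hρl : ρvec ℓ = p' q0 * Q' := by rw [hρvec ℓ]; exact hP'.deriv
  have hρne : p' q0 * Q' ≠ 0 := hρl ▸ hρ
  -- derivative of the tax function along the path
  have hΦd : Differentiable ℝ (fun x : ℝ × ℝ × (Fin d → ℝ) => φ x.1 x.2.1 x.2.2) :=
    hφ.differentiable (by norm_num)
  set Φ : ℝ × ℝ × (Fin d → ℝ) → ℝ := fun x => φ x.1 x.2.1 x.2.2 with hΦ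
  set D := fderiv ℝ Φ (p0, q0, T₀) with hDdef
  have hD : HasFDerivAt Φ D (p0, q0, T₀) := (hΦd (p0, q0, T₀)).hasFDerivAt
  -- identify the three partial derivatives of Φ
  have hDp : D (1, 0, 0) = ν0 * q0 := by
    have hj : HasDerivAt (fun x : ℝ => (x, q0, T₀)) ((1 : ℝ), (0 : ℝ), (0 : Fin d → ℝ)) p0 :=
      (hasDerivAt_id p0).prodMk
        ((hasDerivAt_const p0 q0).prodMk (hasDerivAt_const p0 T₀))
    have hcomp : HasDerivAt (fun x : ℝ => φ x q0 T₀) (D (1, 0, 0)) p0 :=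
      by have := hD.comp_hasDerivAt p0 hj; exact this
    have := hν p0 q0 T₀
    rw [hcomp.deriv] at this
    rw [hν0, this]; field_simp
  have hDq : D (0, 1, 0) = τ0 * p0 := by
    have hj : HasDerivAt (fun x : ℝ => (p0, x, T₀)) ((0 : ℝ), (1 : ℝ), (0 : Fin d → ℝ)) q0 :=
      (hasDerivAt_const q0 p0).prodMk
        ((hasDerivAt_id q0).prodMk (hasDerivAt_const q0 T₀))
    have hcomp : HasDerivAt (fun x : ℝ => φ p0 x T₀) (D (0, 1, 0)) q0 :=
      by have := hD.comp_hasDerivAt q0 hj; exact this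
    have := hτf p0 q0 T₀
    rw [hcomp.deriv] at this
    rw [hτ0, this]; field_simp
  have hDT : D (0, 0, e) = fvec ℓ * q0 := by
    have hj : HasDerivAt (fun s : ℝ => ((p0 : ℝ), (q0 : ℝ), Function.update T₀ ℓ s))
        ((0 : ℝ), (0 : ℝ), e) t0 :=
      (hasDerivAt_const t0 p0).prodMk ((hasDerivAt_const t0 q0).prodMk hu')
    have hj' : HasDerivAt (fun s : ℝ => ((p0 : ℝ), (q0 : ℝ), Function.update T₀ ℓ s))
        ((0 : ℝ), (0 : ℝ), e) t0 := hj
    have hD' : HasFDerivAt Φ D (p0, q0, Function.update T₀ ℓ t0) := by rw [hut0]; exact hD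
    have hcomp : HasDerivAt (fun s : ℝ => φ p0 q0 (Function.update T₀ ℓ s)) (D (0, 0, e)) t0 :=
      by have := hD'.comp_hasDerivAt t0 hj'; exact this
    have := hfvec ℓ
    rw [hcomp.deriv] at this
    rw [this]; field_simp
  -- derivative of φ along the equilibrium path
  have hφpath : HasDerivAt
      (fun s => φ (p (qs (Function.update T₀ ℓ s))) (qs (Function.update T₀ ℓ s))
        (Function.update T₀ ℓ s))
      (ν0 * q0 * (p' q0 * Q') + τ0 * p0 * Q' + fvec ℓ * q0) t0 := by
    have hγ : HasDerivAt
        (fun s => (p (qs (Function.update T₀ ℓ s)), qs (Function.update T₀ ℓ s),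
          Function.update T₀ ℓ s)) (p' q0 * Q', Q', e) t0 :=
      hP'.prodMk (hg'.prodMk hu')
    have hD' : HasFDerivAt Φ D
        (p (qs (Function.update T₀ ℓ t0)), qs (Function.update T₀ ℓ t0),
          Function.update T₀ ℓ t0) := by
      rw [hPt0, hgt0, hut0]; exact hD
    have hcomp := hD'.comp_hasDerivAt t0 hγ
    have hdec : D (p' q0 * Q', Q', e)
        = ν0 * q0 * (p' q0 * Q') + τ0 * p0 * Q' + fvec ℓ * q0 := by
      have hsum : ((p' q0 * Q', Q', e) : ℝ × ℝ × (Fin d → ℝ))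
          = (p' q0 * Q') • ((1 : ℝ), (0 : ℝ), (0 : Fin d → ℝ))
            + Q' • ((0 : ℝ), (1 : ℝ), (0 : Fin d → ℝ))
            + ((0 : ℝ), (0 : ℝ), e) := by
        simp [Prod.ext_iff]
      rw [hsum, map_add, map_add, map_smul, map_smul, hDp, hDq, hDT]
      simp [smul_eq_mul]; ring
    rw [hdec] at hcomp
    exact hcomp
  -- fundamental theorem of calculus piece
  have hpc : Continuous p := by
    have : Differentiable ℝ p := fun x => (hp x).differentiableAt
    exact this.continuous
  have hpq0ne : p q0 ≠ 0 := by rw [hp0] at hp0ne; exact hp0ne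
  have hFint : ∀ x : ℝ, HasDerivAt (fun y => ∫ s in (0:ℝ)..y, p s) (p x) x :=
    fun x => (hpc.integral_hasStrictDerivAt 0 x).hasDerivAt
  -- derivative of consumer surplus
  have hCSd : HasDerivAt (fun s => CS (Function.update T₀ ℓ s))
      (p0 * Q' - ((p' q0 * Q') * q0 + p0 * Q')) t0 := by
    have heq : (fun s => CS (Function.update T₀ ℓ s))
        = fun s => (∫ x in (0:ℝ)..(qs (Function.update T₀ ℓ s)), p x)
            - p (qs (Function.update T₀ ℓ s)) * qs (Function.update T₀ ℓ s) := by
      funext s; exact hCS _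
    rw [heq]
    have h1 : HasDerivAt
        (fun s => ∫ x in (0:ℝ)..(qs (Function.update T₀ ℓ s)), p x) (p0 * Q') t0 := by
      have := (hFint (qs (Function.update T₀ ℓ t0))).comp t0 hg'
      rw [hPt0] at this
      exact this
    have h2 : HasDerivAt
        (fun s => p (qs (Function.update T₀ ℓ s)) * qs (Function.update T₀ ℓ s))
        ((p' q0 * Q') * q0 + p0 * Q') t0 := by
      have := hP'.mul hg'
      rw [hPt0, hgt0] at this
      exact this
    exact h1.sub h2
  have hCSderiv : deriv (fun s => CS (Function.update T₀ ℓ s)) t0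
      = -((p' q0 * Q') * q0) := by rw [hCSd.deriv]; ring
  -- derivative of producer surplus
  have hPSd : HasDerivAt (fun s => PS (Function.update T₀ ℓ s))
      (((p' q0 * Q') * q0 + p0 * Q') - mc q0 * Q'
        - (ν0 * q0 * (p' q0 * Q') + τ0 * p0 * Q' + fvec ℓ * q0)) t0 := by
    have heq : (fun s => PS (Function.update T₀ ℓ s))
        = fun s => p (qs (Function.update T₀ ℓ s)) * qs (Function.update T₀ ℓ s)
            - c (qs (Function.update T₀ ℓ s))
            - φ (p (qs (Function.update T₀ ℓ s))) (qs (Function.update T₀ ℓ s))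
                (Function.update T₀ ℓ s) := by
      funext s; exact hPS _
    rw [heq]
    have h2 : HasDerivAt
        (fun s => p (qs (Function.update T₀ ℓ s)) * qs (Function.update T₀ ℓ s))
        ((p' q0 * Q') * q0 + p0 * Q') t0 := by
      have := hP'.mul hg'
      rw [hPt0, hgt0] at this
      exact this
    have h3 : HasDerivAt (fun s => c (qs (Function.update T₀ ℓ s))) (mc q0 * Q') t0 := by
      have := (hc (qs (Function.update T₀ ℓ t0))).comp t0 hg'
      rw [hgt0] at this
      exact this
    exact (h2.sub h3).sub hφpath
  have hPSderiv : deriv (fun s => PS (Function.update T₀ ℓ s)) t0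
      = ((p' q0 * Q') * q0 + p0 * Q') - mc q0 * Q'
        - (ν0 * q0 * (p' q0 * Q') + τ0 * p0 * Q' + fvec ℓ * q0) := hPSd.deriv
  -- derivative of tax revenue
  have hRd : HasDerivAt (fun s => R (Function.update T₀ ℓ s))
      (ν0 * q0 * (p' q0 * Q') + τ0 * p0 * Q' + fvec ℓ * q0) t0 := by
    have heq : (fun s => R (Function.update T₀ ℓ s))
        = fun s => φ (p (qs (Function.update T₀ ℓ s))) (qs (Function.update T₀ ℓ s))
            (Function.update T₀ ℓ s) := by
      funext s; exact hR _
    rw [heq]; exact hφpath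
  have hRderiv : deriv (fun s => R (Function.update T₀ ℓ s)) t0
      = ν0 * q0 * (p' q0 * Q') + τ0 * p0 * Q' + fvec ℓ * q0 := hRd.deriv
  -- derivative of welfare
  have hWd : HasDerivAt (fun s => W (Function.update T₀ ℓ s))
      ((p0 * Q' - ((p' q0 * Q') * q0 + p0 * Q'))
        + (((p' q0 * Q') * q0 + p0 * Q') - mc q0 * Q'
            - (ν0 * q0 * (p' q0 * Q') + τ0 * p0 * Q' + fvec ℓ * q0))
        + (ν0 * q0 * (p' q0 * Q') + τ0 * p0 * Q' + fvec ℓ * q0)) t0 := by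
    have heq : (fun s => W (Function.update T₀ ℓ s))
        = fun s => CS (Function.update T₀ ℓ s) + PS (Function.update T₀ ℓ s)
            + R (Function.update T₀ ℓ s) := by
      funext s; exact hW _
    rw [heq]; exact (hCSd.add hPSd).add hRd
  -- equilibrium first-order condition at T₀
  have hmc0 : mc q0 = (1 - τ0 - (1 - ν0) * η0 * θ0) * p0 := by
    rw [hτ0, hν0, hθ0, hη0, hp0, hq0]
    exact (hFOC T₀ hT₀).symm
  -- clean expressions for the four derivatives
  have keyCS : deriv (fun s => CS (Function.update T₀ ℓ s)) t0
      = -((p' q0 * Q') * q0) := hCSderiv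
  have keyR : deriv (fun s => R (Function.update T₀ ℓ s)) t0
      = q0 * (fvec ℓ + (p' q0 * Q') * (ν0 - ε0 * τ0)) := by
    rw [hRderiv, hε0, hη0, hp0]
    field_simp
    ring
  have keyPS : deriv (fun s => PS (Function.update T₀ ℓ s)) t0
      = q0 * ((p' q0 * Q') * (1 - ν0) * (1 - θ0) - fvec ℓ) := by
    rw [hPSderiv, hmc0, hη0, hp0]
    field_simp
    ring
  have keyW : deriv (fun s => W (Function.update T₀ ℓ s)) t0
      = -(q0 * (p' q0 * Q') * ((1 - ν0) * θ0 + ε0 * τ0)) := by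
    rw [hWd.deriv, hmc0, hε0, hη0, hp0]
    field_simp
    ring
  -- nonvanishing denominators
  have hD1 : fvec ℓ + (p' q0 * Q') * (ν0 - ε0 * τ0) ≠ 0 := by
    intro h; exact hR' (by rw [keyR, h, mul_zero])
  have hD2 : (p' q0 * Q') * (1 - ν0) * (1 - θ0) - fvec ℓ ≠ 0 := by
    intro h; exact hPS' (by rw [keyPS, h, mul_zero])
  have hD2' : fvec ℓ - (p' q0 * Q') * (1 - ν0) * (1 - θ0) ≠ 0 := by
    intro h; exact hD2 (by linarith)
  have hden1 : 1 / ((p' q0 * Q') / fvec ℓ) + ν0 - ε0 * τ0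
      = (fvec ℓ + (p' q0 * Q') * (ν0 - ε0 * τ0)) / (p' q0 * Q') := by
    rw [one_div_div]
    have hQne : Q' ≠ 0 := right_ne_zero_of_mul hρne
    field_simp
    ring
  have hden2 : 1 / ((p' q0 * Q') / fvec ℓ) - (1 - ν0) * (1 - θ0)
      = (fvec ℓ - (p' q0 * Q') * (1 - ν0) * (1 - θ0)) / (p' q0 * Q') := by
    rw [one_div_div]
    have hQne : Q' ≠ 0 := right_ne_zero_of_mul hρne
    field_simp
  refine ⟨?_, ?_, ?_⟩
  · rw [keyW, keyR, hρℓ, hρl, hden1, div_div_eq_mul_div,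
      div_eq_div_iff (mul_ne_zero hq0ne hD1) hD1]
    ring
  · rw [keyCS, keyPS, hρℓ, hρl, hden2, one_div_div,
      div_eq_div_iff (mul_ne_zero hq0ne hD2) hD2']
    ring
  · rw [keyW, keyPS, hρℓ, hρl, hden2, div_div_eq_mul_div,
      div_eq_div_iff (mul_ne_zero hq0ne hD2) hD2']
    ring
end
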